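/- arXiv:2412.01602 — 6 statements merged into one kernel-verified Lean document; each statement's English description precedes it below -/
import Mathlib

section
/- For every finite undirected graph G = (V,E) (multiple edges and loops allowed) without isolated vertices, the cosmological polytope C_G is a lattice polytope of dimension |V| + |E| - 1. -/
open Polynomial Pointwise

/-- The set of vertices (generating points) of the cosmological polytope of the
multigraph with edge-endpoint map `ends : E → Sym2 V`. -/
def cosmoVertices {V E : Type*} [DecidableEq V] [DecidableEq E] (ends : E → Sym2 V) :
    Set ((V ⊕ E) → ℝ) :=
  { x | ∃ (f : E) (i j : V), ends f = s(i, j) ∧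
      (x = Pi.single (Sum.inl i) 1 + Pi.single (Sum.inl j) 1 - Pi.single (Sum.inr f) 1 ∨
       x = Pi.single (Sum.inl i) 1 - Pi.single (Sum.inl j) 1 + Pi.single (Sum.inr f) 1 ∨
       x = -Pi.single (Sum.inl i) 1 + Pi.single (Sum.inl j) 1 + Pi.single (Sum.inr f) 1) }

/-- The cosmological polytope of a multigraph. -/
def cosmoPolytope {V E : Type*} [DecidableEq V] [DecidableEq E] (ends : E → Sym2 V) :
    Set ((V ⊕ E) → ℝ) :=
  convexHull ℝ (cosmoVertices ends)

/-- Number of lattice points of the `t`-th dilate of `P`. -/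
noncomputable def latticePointCount {ι : Type*} (P : Set (ι → ℝ)) (t : ℕ) : ℕ :=
  Set.ncard { x : ι → ℤ | (fun k => (x k : ℝ)) ∈ (t : ℝ) • P }

/-- The Ehrhart series of `P` as a formal power series. -/
noncomputable def ehrhartSeries {ι : Type*} (P : Set (ι → ℝ)) : PowerSeries ℚ :=
  PowerSeries.mk fun t => if t = 0 then 1 else (latticePointCount P t : ℚ)

/-- `h` is the `h^*`-polynomial of the `d`-dimensional lattice polytope `P`:
`Ehr(P; z) = h(z) / (1-z)^(d+1)` as formal power series. -/
def IsHStarPoly {ι : Type*} (P : Set (ι → ℝ)) (d : ℕ) (h : Polynomial ℚ) : Prop :=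
  ehrhartSeries P * (1 - PowerSeries.X) ^ (d + 1) = (h : PowerSeries ℚ)

/-- Adjacency relation of the multigraph given by `ends`. -/
def multigraphAdj {V E : Type*} (ends : E → Sym2 V) (i j : V) : Prop :=
  ∃ f, ends f = s(i, j)

/-- Reachability in the multigraph given by `ends`. -/
def multigraphReach {V E : Type*} (ends : E → Sym2 V) : V → V → Prop :=
  Relation.ReflTransGen (multigraphAdj ends)

/-- The number of connected components of the multigraph given by `ends`. -/
noncomputable def numComponents {V E : Type*} (ends : E → Sym2 V) : ℕ :=
  Nat.card (Quot (multigraphReach ends))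


set_option linter.unusedSectionVars false
section Aux

variable {V E : Type*} [Fintype V] [Fintype E] [DecidableEq V] [DecidableEq E]
  (ends : E → Sym2 V)

/-- the coordinate-sum linear functional -/
noncomputable def sumLin (V E : Type*) [Fintype V] [Fintype E] :
    ((V ⊕ E) → ℝ) →ₗ[ℝ] ℝ :=
  ∑ k : V ⊕ E, LinearMap.proj k

lemma sumLin_apply (x : (V ⊕ E) → ℝ) : sumLin V E x = ∑ k, x k := by
  simp [sumLin]

lemma sumLin_single (a : V ⊕ E) (c : ℝ) : sumLin V E (Pi.single a c) = c := by
  rw [sumLin_apply]; simp [Finset.sum_pi_single']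

lemma sumLin_vertex {x} (hx : x ∈ cosmoVertices ends) : sumLin V E x = 1 := by
  obtain ⟨f, i, j, -, h | h | h⟩ := hx <;> subst h <;>
    simp [map_add, map_sub, map_neg, sumLin_single]

/-- abbreviations for the unit vectors -/
noncomputable def ee {V E : Type*} [DecidableEq V] [DecidableEq E] (a : V ⊕ E) : (V ⊕ E) → ℝ := Pi.single a 1

lemma edge_vertex_mem_vs {f : E} {i j : V} (hf : ends f = s(i, j)) :
    ee (Sum.inl i) - ee (Sum.inr f) ∈ vectorSpan ℝ (cosmoVertices ends) ∧
    ee (Sum.inl j) - ee (Sum.inr f) ∈ vectorSpan ℝ (cosmoVertices ends) ∧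
    ee (Sum.inl i) - ee (Sum.inl j) ∈ vectorSpan ℝ (cosmoVertices ends) := by
  set W := vectorSpan ℝ (cosmoVertices ends)
  set a := ee (Sum.inl i : V ⊕ E) with ha
  set b := ee (Sum.inl j : V ⊕ E) with hb
  set c := ee (Sum.inr f : V ⊕ E) with hc
  have h1 : (a + b - c) ∈ cosmoVertices ends := ⟨f, i, j, hf, Or.inl rfl⟩
  have h2 : (a - b + c) ∈ cosmoVertices ends := ⟨f, i, j, hf, Or.inr (Or.inl rfl)⟩
  have h3 : (-a + b + c) ∈ cosmoVertices ends := ⟨f, i, j, hf, Or.inr (Or.inr rfl)⟩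
  have d12 : (a + b - c) - (a - b + c) ∈ W := vsub_mem_vectorSpan ℝ h1 h2
  have d13 : (a + b - c) - (-a + b + c) ∈ W := vsub_mem_vectorSpan ℝ h1 h3
  have d23 : (a - b + c) - (-a + b + c) ∈ W := vsub_mem_vectorSpan ℝ h2 h3
  refine ⟨?_, ?_, ?_⟩
  · have := W.smul_mem (1/2 : ℝ) d13
    have heq : (1/2 : ℝ) • ((a + b - c) - (-a + b + c)) = a - c := by module
    rwa [heq] at this
  · have := W.smul_mem (1/2 : ℝ) d12
    have heq : (1/2 : ℝ) • ((a + b - c) - (a - b + c)) = b - c := by module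
    rwa [heq] at this
  · have := W.smul_mem (1/2 : ℝ) d23
    have heq : (1/2 : ℝ) • ((a - b + c) - (-a + b + c)) = a - b := by module
    rwa [heq] at this

lemma edge_edge_mem_vs (f g : E) :
    ee (Sum.inr f) - ee (Sum.inr g) ∈ vectorSpan ℝ (cosmoVertices ends) := by
  set W := vectorSpan ℝ (cosmoVertices ends)
  obtain ⟨⟨i, j⟩, hf⟩ := Quot.exists_rep (ends f)
  obtain ⟨⟨k, l⟩, hg⟩ := Quot.exists_rep (ends g)
  have hf' : ends f = s(i, j) := hf.symm
  have hg' : ends g = s(k, l) := hg.symm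
  have h2f : (ee (Sum.inl i) - ee (Sum.inl j) + ee (Sum.inr f)) ∈ cosmoVertices ends :=
    ⟨f, i, j, hf', Or.inr (Or.inl rfl)⟩
  have h2g : (ee (Sum.inl k) - ee (Sum.inl l) + ee (Sum.inr g)) ∈ cosmoVertices ends :=
    ⟨g, k, l, hg', Or.inr (Or.inl rfl)⟩
  have hd : (ee (Sum.inl i) - ee (Sum.inl j) + ee (Sum.inr f))
      - (ee (Sum.inl k) - ee (Sum.inl l) + ee (Sum.inr g)) ∈ W :=
    vsub_mem_vectorSpan ℝ h2f h2g
  have hij := (edge_vertex_mem_vs ends hf').2.2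
  have hkl := (edge_vertex_mem_vs ends hg').2.2
  have := W.add_mem (W.sub_mem hd hij) hkl
  have heq : (ee (Sum.inl i) - ee (Sum.inl j) + ee (Sum.inr f))
      - (ee (Sum.inl k) - ee (Sum.inl l) + ee (Sum.inr g))
      - (ee (Sum.inl i) - ee (Sum.inl j)) + (ee (Sum.inl k) - ee (Sum.inl l))
      = ee (Sum.inr f) - ee (Sum.inr g) := by module
  rwa [heq] at this

lemma all_diff_mem_vs (hiso : ∀ v : V, ∃ f : E, v ∈ ends f) (g : E) (α : V ⊕ E) :
    ee α - ee (Sum.inr g) ∈ vectorSpan ℝ (cosmoVertices ends) := by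
  set W := vectorSpan ℝ (cosmoVertices ends)
  cases α with
  | inr f => exact edge_edge_mem_vs ends f g
  | inl v =>
    obtain ⟨f, hv⟩ := hiso v
    obtain ⟨⟨i, j⟩, hf⟩ := Quot.exists_rep (ends f)
    have hf' : ends f = s(i, j) := hf.symm
    rw [hf', Sym2.mem_iff] at hv
    have hvf : ee (Sum.inl v) - ee (Sum.inr f) ∈ W := by
      rcases hv with rfl | rfl
      · exact (edge_vertex_mem_vs ends hf').1
      · exact (edge_vertex_mem_vs ends hf').2.1
    have := W.add_mem hvf (edge_edge_mem_vs ends f g)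
    have heq : (ee (Sum.inl v) - ee (Sum.inr f)) + (ee (Sum.inr f) - ee (Sum.inr g))
        = ee (Sum.inl v) - ee (Sum.inr g) := by module
    rwa [heq] at this

end Aux


/-- For every finite undirected graph `G = (V,E)` (multiple edges and loops
allowed) without isolated vertices, the cosmological polytope `C_G` is a lattice polytope
(the convex hull of finitely many lattice points) of dimension `|V| + |E| - 1`. -/
theorem cosmoPolytope_is_lattice_polytope_of_dim
    {V E : Type*} [Fintype V] [Fintype E] [DecidableEq V] [DecidableEq E]
    (ends : E → Sym2 V) (hiso : ∀ v : V, ∃ f : E, v ∈ ends f) :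
    (cosmoVertices ends).Finite ∧
    (∀ x ∈ cosmoVertices ends, ∀ k : V ⊕ E, ∃ n : ℤ, x k = (n : ℝ)) ∧
    Module.finrank ℝ (vectorSpan ℝ (cosmoPolytope ends)) =
      Fintype.card V + Fintype.card E - 1 := by
  classical
  refine ⟨?_, ?_, ?_⟩
  · -- finiteness
    have : cosmoVertices ends ⊆ Set.range
        (fun p : E × V × V × Fin 3 =>
          if p.2.2.2 = 0 then
            Pi.single (Sum.inl p.2.1) 1 + Pi.single (Sum.inl p.2.2.1) 1
              - Pi.single (Sum.inr p.1) (1 : ℝ)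
          else if p.2.2.2 = 1 then
            Pi.single (Sum.inl p.2.1) 1 - Pi.single (Sum.inl p.2.2.1) 1
              + Pi.single (Sum.inr p.1) 1
          else
            -Pi.single (Sum.inl p.2.1) 1 + Pi.single (Sum.inl p.2.2.1) 1
              + Pi.single (Sum.inr p.1) 1) := by
      rintro x ⟨f, i, j, -, h | h | h⟩
      · exact ⟨(f, i, j, 0), by simp [h]⟩
      · exact ⟨(f, i, j, 1), by simp [h]⟩
      · exact ⟨(f, i, j, 2), by simp [h]⟩
    exact Set.Finite.subset (Set.finite_range _) this
  · -- lattice points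
    rintro x ⟨f, i, j, -, h | h | h⟩ k <;> subst h
    · refine ⟨(if k = Sum.inl i then 1 else 0) + (if k = Sum.inl j then 1 else 0)
        - (if k = Sum.inr f then 1 else 0), ?_⟩
      simp only [Pi.add_apply, Pi.sub_apply, Pi.single_apply]
      push_cast
      split_ifs <;> ring
    · refine ⟨(if k = Sum.inl i then 1 else 0) - (if k = Sum.inl j then 1 else 0)
        + (if k = Sum.inr f then 1 else 0), ?_⟩
      simp only [Pi.add_apply, Pi.sub_apply, Pi.single_apply]
      push_cast
      split_ifs <;> ring
    · refine ⟨-(if k = Sum.inl i then 1 else 0) + (if k = Sum.inl j then 1 else 0)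
        + (if k = Sum.inr f then 1 else 0), ?_⟩
      simp only [Pi.add_apply, Pi.neg_apply, Pi.single_apply]
      push_cast
      split_ifs <;> ring
  · -- dimension
    have hspan : vectorSpan ℝ (cosmoPolytope ends) = vectorSpan ℝ (cosmoVertices ends) := by
      rw [← direction_affineSpan, cosmoPolytope, affineSpan_convexHull, direction_affineSpan]
    rw [hspan]
    by_cases hE : Nonempty E
    · obtain ⟨g⟩ := hE
      set W := vectorSpan ℝ (cosmoVertices ends) with hW
      have hle : W ≤ LinearMap.ker (sumLin V E) := by
        rw [hW, vectorSpan_def, Submodule.span_le]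
        rintro z ⟨x, hx, y, hy, rfl⟩
        simp only [SetLike.mem_coe, LinearMap.mem_ker, vsub_eq_sub, map_sub,
          sumLin_vertex ends hx, sumLin_vertex ends hy, sub_self]
      have hge : LinearMap.ker (sumLin V E) ≤ W := by
        intro x hx
        have hx0 : ∑ k, x k = 0 := by rw [← sumLin_apply]; exact hx
        have h1 : ∑ α : V ⊕ E, x α • ee α = x := by
          have : ∀ α : V ⊕ E, x α • ee α = Pi.single α (x α) := by
            intro α
            rw [ee, ← Pi.single_smul, smul_eq_mul, mul_one]
          simp_rw [this]
          exact Finset.univ_sum_single x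
        have hrep : x = ∑ α : V ⊕ E, x α • (ee α - ee (Sum.inr g : V ⊕ E)) := by
          simp_rw [smul_sub]
          rw [Finset.sum_sub_distrib, h1, ← Finset.sum_smul, hx0, zero_smul, sub_zero]
        rw [hrep]
        exact Submodule.sum_mem _ fun α _ => W.smul_mem _ (all_diff_mem_vs ends hiso g α)
      have hWk : W = LinearMap.ker (sumLin V E) := le_antisymm hle hge
      have hsurj : Function.Surjective (sumLin V E) := fun c =>
        ⟨Pi.single (Sum.inr g) c, sumLin_single _ c⟩
      have hrn := LinearMap.finrank_range_add_finrank_ker (sumLin V E)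
      rw [LinearMap.range_eq_top.2 hsurj] at hrn
      simp only [finrank_top, Module.finrank_self] at hrn
      have hpi : Module.finrank ℝ ((V ⊕ E) → ℝ) = Fintype.card V + Fintype.card E := by
        simp [Module.finrank_pi]
      rw [hpi] at hrn
      rw [hWk]
      omega
    · have hVempty : IsEmpty V := ⟨fun v => hE ⟨(hiso v).choose⟩⟩
      have hEempty : IsEmpty E := not_nonempty_iff.mp hE
      have h0 : Module.finrank ℝ ((V ⊕ E) → ℝ) = 0 := by
        simp [Module.finrank_pi, Fintype.card_eq_zero]
      have hle := Submodule.finrank_le (vectorSpan ℝ (cosmoVertices ends))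
      rw [h0] at hle
      rw [Fintype.card_eq_zero (α := V), Fintype.card_eq_zero (α := E)]
      omega
end

section
/- For every finite undirected graph G = (V,E) without isolated vertices, the set of lattice points of the cosmological polytope C_G, i.e. C_G ∩ ℤ^{V∪E}, consists exactly of the points e_i + e_j - e_f, e_i - e_j + e_f, -e_i + e_j + e_f for the edges f = ij ∈ E together with the unit vectors e_k for k ∈ V∪E; there are no other lattice points in C_G. -/
open Polynomial Pointwise

section Aux

variable {V E : Type*} [DecidableEq V] [DecidableEq E]

/-- `e_i + e_j - e_f`. -/
abbrev cosmoPtA (i j : V) (f : E) : (V ⊕ E) → ℝ :=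
  Pi.single (Sum.inl i) 1 + Pi.single (Sum.inl j) 1 - Pi.single (Sum.inr f) 1
/-- `e_i - e_j + e_f`. -/
abbrev cosmoPtB (i j : V) (f : E) : (V ⊕ E) → ℝ :=
  Pi.single (Sum.inl i) 1 - Pi.single (Sum.inl j) 1 + Pi.single (Sum.inr f) 1
/-- `-e_i + e_j + e_f`. -/
abbrev cosmoPtC (i j : V) (f : E) : (V ⊕ E) → ℝ :=
  -Pi.single (Sum.inl i) 1 + Pi.single (Sum.inl j) 1 + Pi.single (Sum.inr f) 1

variable {ends : E → Sym2 V} {z : (V ⊕ E) → ℝ}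

lemma cosmo_vtx_sum [Fintype V] [Fintype E] (hz : z ∈ cosmoVertices ends) : ∑ k, z k = 1 := by
  obtain ⟨f, i, j, hf, rfl | rfl | rfl⟩ := hz <;>
    simp [Fintype.sum_sum_type, Pi.single_apply, Finset.sum_ite_eq', Finset.sum_add_distrib]

lemma cosmo_vtx_inr_le (hz : z ∈ cosmoVertices ends) (f' : E) : z (Sum.inr f') ≤ 1 := by
  obtain ⟨f, i, j, hf, rfl | rfl | rfl⟩ := hz <;> simp [Pi.single_apply] <;>
    split_ifs <;> norm_num

lemma cosmo_vtx_inr_ge (hz : z ∈ cosmoVertices ends) (f' : E) : -1 ≤ z (Sum.inr f') := by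
  obtain ⟨f, i, j, hf, rfl | rfl | rfl⟩ := hz <;> simp [Pi.single_apply] <;>
    split_ifs <;> norm_num

lemma cosmo_vtx_inr_eq_neg_one {f : E} {i0 j0 : V} (hf : ends f = s(i0, j0))
    (hz : z ∈ cosmoVertices ends) (h : z (Sum.inr f) = -1) : z = cosmoPtA i0 j0 f := by
  obtain ⟨f', i, j, hf', rfl | rfl | rfl⟩ := hz <;> simp [Pi.single_apply] at h
  · rcases h with rfl
    rw [hf] at hf'
    rcases Sym2.eq_iff.mp hf' with ⟨rfl, rfl⟩ | ⟨rfl, rfl⟩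
    · rfl
    · ring
  all_goals (split_ifs at h <;> norm_num at h)

lemma cosmo_vtx_inr_eq_one {f : E} {i0 j0 : V} (hf : ends f = s(i0, j0))
    (hz : z ∈ cosmoVertices ends) (h : z (Sum.inr f) = 1) :
    z = cosmoPtB i0 j0 f ∨ z = cosmoPtC i0 j0 f := by
  obtain ⟨f', i, j, hf', rfl | rfl | rfl⟩ := hz <;> simp [Pi.single_apply] at h
  · split_ifs at h <;> norm_num at h
  · rcases h with rfl
    rw [hf] at hf'
    rcases Sym2.eq_iff.mp hf' with ⟨rfl, rfl⟩ | ⟨rfl, rfl⟩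
    · exact Or.inl rfl
    · right; ring
  · rcases h with rfl
    rw [hf] at hf'
    rcases Sym2.eq_iff.mp hf' with ⟨rfl, rfl⟩ | ⟨rfl, rfl⟩
    · exact Or.inr rfl
    · left; ring

lemma cosmo_vtx_F (hz : z ∈ cosmoVertices ends) (v : V) (s : Finset E)
    (hs : ∀ f', f' ∈ s ↔ v ∈ ends f') :
    0 ≤ z (Sum.inl v) + ∑ f' ∈ s, z (Sum.inr f') := by
  obtain ⟨f, i, j, hf, rfl | rfl | rfl⟩ := hz <;>
    simp only [Pi.add_apply, Pi.sub_apply, Pi.neg_apply, Pi.single_apply, Sum.inl.injEq,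
      Sum.inr.injEq, reduceCtorEq, if_false, add_zero, zero_add, sub_zero, zero_sub, neg_zero] <;>
    first
      | (rw [Finset.sum_neg_distrib, Finset.sum_ite_eq' s f (fun _ => (1:ℝ))]
         simp only [hs f, hf, Sym2.mem_iff]
         split_ifs <;> first | tauto | norm_num)
      | (rw [Finset.sum_ite_eq' s f (fun _ => (1:ℝ))]
         simp only [hs f, hf, Sym2.mem_iff]
         split_ifs <;> first | tauto | norm_num)

lemma cosmo_sum_mul_le {ι : Type*} (t : Finset ι) {w c : ι → ℝ}
    (hw0 : ∀ i ∈ t, 0 ≤ w i) (hw1 : ∑ i ∈ t, w i = 1) {B : ℝ}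
    (hc : ∀ i ∈ t, w i ≠ 0 → c i ≤ B) : ∑ i ∈ t, w i * c i ≤ B := by
  calc ∑ i ∈ t, w i * c i ≤ ∑ i ∈ t, w i * B := by
        refine Finset.sum_le_sum fun i hi => ?_
        by_cases h : w i = 0
        · simp [h]
        · exact mul_le_mul_of_nonneg_left (hc i hi h) (hw0 i hi)
    _ = B := by rw [← Finset.sum_mul, hw1, one_mul]

lemma cosmo_sum_mul_ge {ι : Type*} (t : Finset ι) {w c : ι → ℝ}
    (hw0 : ∀ i ∈ t, 0 ≤ w i) (hw1 : ∑ i ∈ t, w i = 1) {B : ℝ}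
    (hc : ∀ i ∈ t, w i ≠ 0 → B ≤ c i) : B ≤ ∑ i ∈ t, w i * c i := by
  have := cosmo_sum_mul_le t hw0 hw1 (c := fun i => -c i) (B := -B)
    (fun i hi h => neg_le_neg (hc i hi h))
  simpa using this

lemma cosmo_eq_of_sum_eq_max {ι : Type*} (t : Finset ι) {w c : ι → ℝ}
    (hw0 : ∀ i ∈ t, 0 ≤ w i) (hw1 : ∑ i ∈ t, w i = 1) {B : ℝ}
    (hc : ∀ i ∈ t, c i ≤ B) (heq : ∑ i ∈ t, w i * c i = B) :
    ∀ i ∈ t, w i ≠ 0 → c i = B := by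
  have h0 : ∑ i ∈ t, w i * (B - c i) = 0 := by
    have : ∑ i ∈ t, w i * (B - c i) = (∑ i ∈ t, w i) * B - ∑ i ∈ t, w i * c i := by
      rw [Finset.sum_mul, ← Finset.sum_sub_distrib]
      exact Finset.sum_congr rfl fun i _ => by ring
    rw [this, hw1, heq]; ring
  have hall := (Finset.sum_eq_zero_iff_of_nonneg fun i hi =>
    mul_nonneg (hw0 i hi) (sub_nonneg.2 (hc i hi))).mp h0
  intro i hi hwi
  rcases mul_eq_zero.mp (hall i hi) with h | h
  · exact absurd h hwi
  · linarith [sub_eq_zero.mp h]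

lemma cosmo_eq_of_sum_eq_min {ι : Type*} (t : Finset ι) {w c : ι → ℝ}
    (hw0 : ∀ i ∈ t, 0 ≤ w i) (hw1 : ∑ i ∈ t, w i = 1) {B : ℝ}
    (hc : ∀ i ∈ t, B ≤ c i) (heq : ∑ i ∈ t, w i * c i = B) :
    ∀ i ∈ t, w i ≠ 0 → c i = B := by
  intro i hi hwi
  have := cosmo_eq_of_sum_eq_max t hw0 hw1 (c := fun i => -c i) (B := -B)
    (fun i hi => neg_le_neg (hc i hi)) (by rw [← neg_eq_iff_eq_neg, ← Finset.sum_neg_distrib]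
                                           rw [← heq]
                                           exact Finset.sum_congr rfl fun i _ => by ring) i hi hwi
  have h2 : -c i = -B := this
  linarith

end Aux

/-- The lattice points of the cosmological polytope `C_G` are exactly the
generating points `e_i + e_j - e_f`, `e_i - e_j + e_f`, `-e_i + e_j + e_f` for edges
`f = ij ∈ E`, together with the unit vectors `e_k` for `k ∈ V ∪ E`. -/


theorem cosmoPolytope_lattice_points
    {V E : Type*} [Fintype V] [Fintype E] [DecidableEq V] [DecidableEq E]
    (ends : E → Sym2 V) (hiso : ∀ v : V, ∃ f : E, v ∈ ends f) :
    { x | x ∈ cosmoPolytope ends ∧ ∀ k : V ⊕ E, ∃ n : ℤ, x k = (n : ℝ) } =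
      cosmoVertices ends ∪ { x | ∃ k : V ⊕ E, x = Pi.single k 1 } := by
  classical
  have orient : ∀ f : E, ∃ i j : V, ends f = s(i, j) := by
    intro f
    obtain ⟨⟨i, j⟩, h⟩ := Quot.exists_rep (ends f)
    exact ⟨i, j, h.symm⟩
  ext x
  simp only [Set.mem_setOf_eq, Set.mem_union]
  constructor
  · rintro ⟨hx, hint⟩
    rw [cosmoPolytope, convexHull_eq] at hx
    obtain ⟨ι, t, w, z, hw0, hw1, hzv, hcm⟩ := hx
    have hxz : x = ∑ i ∈ t, w i • z i := by
      rw [← hcm, Finset.centerMass_eq_of_sum_1 _ _ hw1]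
    have hxe : ∀ k, x k = ∑ i ∈ t, w i * z i k := by
      intro k; rw [hxz, Finset.sum_apply]; rfl
    have hub : ∀ f, x (Sum.inr f) ≤ 1 := fun f => by
      rw [hxe]
      exact cosmo_sum_mul_le t hw0 hw1 fun i hi _ => cosmo_vtx_inr_le (hzv i hi) f
    have hlb : ∀ f, -1 ≤ x (Sum.inr f) := fun f => by
      rw [hxe]
      exact cosmo_sum_mul_ge t hw0 hw1 fun i hi _ => cosmo_vtx_inr_ge (hzv i hi) f
    have htri : ∀ f, x (Sum.inr f) = -1 ∨ x (Sum.inr f) = 0 ∨ x (Sum.inr f) = 1 := by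
      intro f
      obtain ⟨n, hn⟩ := hint (Sum.inr f)
      have h1 := hub f; have h2 := hlb f
      rw [hn] at h1 h2 ⊢
      have hn1 : (-1 : ℤ) ≤ n := by exact_mod_cast h2
      have hn2 : n ≤ 1 := by exact_mod_cast h1
      interval_cases n <;> norm_num
    by_cases hneg : ∃ f, x (Sum.inr f) = -1
    · obtain ⟨f, hfneg⟩ := hneg
      obtain ⟨i0, j0, hor⟩ := orient f
      have hact : ∀ i ∈ t, w i ≠ 0 → z i (Sum.inr f) = -1 :=
        cosmo_eq_of_sum_eq_min t hw0 hw1 (fun i hi => cosmo_vtx_inr_ge (hzv i hi) f)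
          ((hxe (Sum.inr f)).symm.trans hfneg)
      have hxA : x = cosmoPtA i0 j0 f := by
        rw [hxz]
        have hcong : ∀ i ∈ t, w i • z i = w i • cosmoPtA i0 j0 f := by
          intro i hi
          by_cases h : w i = 0
          · simp [h]
          · rw [cosmo_vtx_inr_eq_neg_one hor (hzv i hi) (hact i hi h)]
        rw [Finset.sum_congr rfl hcong, ← Finset.sum_smul, hw1, one_smul]
      exact Or.inl ⟨f, i0, j0, hor, Or.inl hxA⟩
    · push_neg at hneg
      have htri' : ∀ f, x (Sum.inr f) = 0 ∨ x (Sum.inr f) = 1 := fun f =>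
        (htri f).resolve_left (hneg f)
      by_cases hpos : ∃ f, x (Sum.inr f) = 1
      · -- some edge coordinate equals one
        obtain ⟨f0, hf0⟩ := hpos
        obtain ⟨i0, j0, hor⟩ := orient f0
        have hact : ∀ i ∈ t, w i ≠ 0 →
            z i ∈ ({cosmoPtB i0 j0 f0, cosmoPtC i0 j0 f0} : Set ((V ⊕ E) → ℝ)) := by
          intro i hi h
          rcases cosmo_vtx_inr_eq_one hor (hzv i hi)
            (cosmo_eq_of_sum_eq_max t hw0 hw1
              (fun i hi => cosmo_vtx_inr_le (hzv i hi) f0)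
              ((hxe (Sum.inr f0)).symm.trans hf0) i hi h) with h' | h'
          · exact Or.inl h'
          · exact Or.inr h'
        have hxseg : x ∈ segment ℝ (cosmoPtB i0 j0 f0) (cosmoPtC i0 j0 f0) := by
          rw [← convexHull_pair, ← hcm, ← Finset.centerMass_filter_ne_zero (w := w) z]
          refine Finset.centerMass_mem_convexHull _
            (fun i hi => hw0 i (Finset.mem_filter.mp hi).1) ?_ (fun i hi => ?_)
          · rw [Finset.sum_filter_ne_zero, hw1]; norm_num
          · obtain ⟨hi', hwi⟩ := Finset.mem_filter.mp hi
            exact hact i hi' hwi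
        obtain ⟨a, b, ha, hb, hab, hxab⟩ := hxseg
        by_cases hij : i0 = j0
        · subst hij
          have hBe : cosmoPtB i0 i0 f0 = Pi.single (Sum.inr f0) 1 := by ring
          have hCe : cosmoPtC i0 i0 f0 = Pi.single (Sum.inr f0) 1 := by ring
          rw [hBe, hCe, ← add_smul, hab, one_smul] at hxab
          exact Or.inr ⟨Sum.inr f0, hxab.symm⟩
        · obtain ⟨n, hn⟩ := hint (Sum.inl i0)
          have hxi : x (Sum.inl i0) = a - b := by
            rw [← hxab]
            simp only [Pi.add_apply, Pi.sub_apply, Pi.neg_apply, Pi.smul_apply, smul_eq_mul,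
              Pi.single_apply, Sum.inl.injEq, Sum.inr.injEq, reduceCtorEq]
            simp only [if_true, if_false, if_neg hij]
            ring
          have h1 : (n : ℝ) = a - b := by rw [← hn, hxi]
          have hn' : n = -1 ∨ n = 0 ∨ n = 1 := by
            have h2 : (-1 : ℝ) ≤ (n : ℝ) := by linarith
            have h3 : (n : ℝ) ≤ 1 := by linarith
            have h2' : (-1 : ℤ) ≤ n := by exact_mod_cast h2
            have h3' : n ≤ 1 := by exact_mod_cast h3
            omega
          rcases hn' with h | h | h
          · have ha0 : a = 0 := by rw [h] at h1; push_cast at h1; linarith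
            have hb1 : b = 1 := by linarith
            have : x = cosmoPtC i0 j0 f0 := by
              rw [← hxab, ha0, hb1, zero_smul, one_smul, zero_add]
            exact Or.inl ⟨f0, i0, j0, hor, Or.inr (Or.inr this)⟩
          · have ha2 : a = 1 / 2 := by rw [h] at h1; push_cast at h1; linarith
            have hb2 : b = 1 / 2 := by linarith
            have : x = Pi.single (Sum.inr f0) 1 := by
              rw [← hxab, ha2, hb2]
              funext k
              simp only [Pi.add_apply, Pi.sub_apply, Pi.neg_apply, Pi.smul_apply, smul_eq_mul]
              ring
            exact Or.inr ⟨Sum.inr f0, this⟩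
          · have ha1 : a = 1 := by rw [h] at h1; push_cast at h1; linarith
            have hb0 : b = 0 := by linarith
            have : x = cosmoPtB i0 j0 f0 := by
              rw [← hxab, ha1, hb0, zero_smul, one_smul, add_zero]
            exact Or.inl ⟨f0, i0, j0, hor, Or.inr (Or.inl this)⟩
      · -- all edge coordinates are zero
        push_neg at hpos
        have hzero : ∀ f, x (Sum.inr f) = 0 := fun f => (htri' f).resolve_right (hpos f)
        have hnonneg : ∀ v, 0 ≤ x (Sum.inl v) := by
          intro v
          set s : Finset E := Finset.univ.filter (fun f' => v ∈ ends f') with hsdef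
          have hF : 0 ≤ x (Sum.inl v) + ∑ f' ∈ s, x (Sum.inr f') := by
            have expand : x (Sum.inl v) + ∑ f' ∈ s, x (Sum.inr f')
                = ∑ i ∈ t, w i * (z i (Sum.inl v) + ∑ f' ∈ s, z i (Sum.inr f')) := by
              rw [hxe (Sum.inl v)]
              have hswap : ∑ f' ∈ s, x (Sum.inr f')
                  = ∑ i ∈ t, ∑ f' ∈ s, w i * z i (Sum.inr f') := by
                simp_rw [hxe]
                rw [Finset.sum_comm]
              rw [hswap, ← Finset.sum_add_distrib]
              refine Finset.sum_congr rfl fun i _ => ?_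
              rw [mul_add, Finset.mul_sum]
            rw [expand]
            exact cosmo_sum_mul_ge t hw0 hw1 fun i hi _ =>
              cosmo_vtx_F (hzv i hi) v s (fun f' => by simp [hsdef])
          have hzs : ∑ f' ∈ s, x (Sum.inr f') = 0 :=
            Finset.sum_eq_zero fun f' _ => hzero f'
          linarith
        have hsumV : ∑ v, x (Sum.inl v) = 1 := by
          have htot : ∑ k, x k = 1 := by
            have hh : ∑ k, x k = ∑ i ∈ t, w i * ∑ k, z i k := by
              simp_rw [hxe]
              rw [Finset.sum_comm]
              exact Finset.sum_congr rfl fun i _ => (Finset.mul_sum _ _ _).symm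
            rw [hh]
            rw [Finset.sum_congr rfl fun i hi => by rw [cosmo_vtx_sum (hzv i hi), mul_one]]
            exact hw1
          rw [Fintype.sum_sum_type] at htot
          have hze : ∑ f, x (Sum.inr f) = 0 := Finset.sum_eq_zero fun f _ => hzero f
          linarith
        have hex : ∃ v0, x (Sum.inl v0) ≠ 0 := by
          by_contra h
          push_neg at h
          rw [Finset.sum_eq_zero (fun v _ => h v)] at hsumV
          norm_num at hsumV
        obtain ⟨v0, hv0⟩ := hex
        have hge1 : 1 ≤ x (Sum.inl v0) := by
          obtain ⟨n, hn⟩ := hint (Sum.inl v0)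
          rw [hn] at hv0 ⊢
          have h1 : (0 : ℝ) ≤ (n : ℝ) := hn ▸ hnonneg v0
          have h1' : (0 : ℤ) ≤ n := by exact_mod_cast h1
          have h2' : n ≠ 0 := by exact_mod_cast hv0
          exact_mod_cast by omega
        have hsplit : x (Sum.inl v0) + ∑ v ∈ Finset.univ.erase v0, x (Sum.inl v) = 1 := by
          rw [← hsumV]
          exact Finset.add_sum_erase Finset.univ (fun v => x (Sum.inl v)) (Finset.mem_univ v0)
        have hrest0 : ∑ v ∈ Finset.univ.erase v0, x (Sum.inl v) = 0 := by
          have hge : 0 ≤ ∑ v ∈ Finset.univ.erase v0, x (Sum.inl v) :=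
            Finset.sum_nonneg fun v _ => hnonneg v
          linarith
        have hrest : ∀ v, v ≠ v0 → x (Sum.inl v) = 0 := by
          intro v hv
          exact (Finset.sum_eq_zero_iff_of_nonneg fun v _ => hnonneg v).mp hrest0 v
            (Finset.mem_erase.mpr ⟨hv, Finset.mem_univ v⟩)
        have hv01 : x (Sum.inl v0) = 1 := by linarith
        have hxs : x = Pi.single (Sum.inl v0) 1 := by
          funext k
          rcases k with v | f
          · by_cases h : v = v0
            · subst h
              rw [hv01]
              simp
            · rw [hrest v h]
              simp [Pi.single_apply, h]
          · rw [hzero f]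
            simp
        exact Or.inr ⟨Sum.inl v0, hxs⟩
  · rintro (hv | ⟨k, rfl⟩)
    · refine ⟨subset_convexHull ℝ _ hv, ?_⟩
      obtain ⟨f, i, j, hf, rfl | rfl | rfl⟩ := hv <;> intro k
      · exact ⟨(if k = Sum.inl i then 1 else 0) + (if k = Sum.inl j then 1 else 0)
            - (if k = Sum.inr f then 1 else 0), by
          simp only [Pi.add_apply, Pi.sub_apply, Pi.neg_apply, Pi.single_apply]
          split_ifs <;> norm_num⟩
      · exact ⟨(if k = Sum.inl i then 1 else 0) - (if k = Sum.inl j then 1 else 0)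
            + (if k = Sum.inr f then 1 else 0), by
          simp only [Pi.add_apply, Pi.sub_apply, Pi.neg_apply, Pi.single_apply]
          split_ifs <;> norm_num⟩
      · exact ⟨-(if k = Sum.inl i then 1 else 0) + (if k = Sum.inl j then 1 else 0)
            + (if k = Sum.inr f then 1 else 0), by
          simp only [Pi.add_apply, Pi.sub_apply, Pi.neg_apply, Pi.single_apply]
          split_ifs <;> norm_num⟩
    · have hintk : ∀ k' : V ⊕ E, ∃ n : ℤ, (Pi.single k 1 : (V ⊕ E) → ℝ) k' = (n : ℝ) := by
        intro k'
        exact ⟨if k' = k then 1 else 0, by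
          simp only [Pi.single_apply]
          split_ifs <;> norm_num⟩
      refine ⟨?_, hintk⟩
      rcases k with v | f
      · obtain ⟨f, hvf⟩ := hiso v
        obtain ⟨j, hfj⟩ := Sym2.mem_iff_exists.mp hvf
        have hA : cosmoPtA v j f ∈ cosmoVertices ends := ⟨f, v, j, hfj, Or.inl rfl⟩
        have hB : cosmoPtB v j f ∈ cosmoVertices ends := ⟨f, v, j, hfj, Or.inr (Or.inl rfl)⟩
        have hmem := (convex_convexHull ℝ (cosmoVertices ends))
          (subset_convexHull ℝ _ hA) (subset_convexHull ℝ _ hB)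
          (by norm_num : (0:ℝ) ≤ 1/2) (by norm_num : (0:ℝ) ≤ 1/2) (by norm_num)
        have heq : (1/2 : ℝ) • cosmoPtA v j f + (1/2 : ℝ) • cosmoPtB v j f
            = Pi.single (Sum.inl v) 1 := by
          funext k
          simp only [Pi.add_apply, Pi.sub_apply, Pi.neg_apply, Pi.smul_apply, smul_eq_mul,
            Pi.single_apply]
          ring
        rw [cosmoPolytope, ← heq]
        exact hmem
      · obtain ⟨i, j, hor⟩ := orient f
        have hB : cosmoPtB i j f ∈ cosmoVertices ends := ⟨f, i, j, hor, Or.inr (Or.inl rfl)⟩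
        have hC : cosmoPtC i j f ∈ cosmoVertices ends := ⟨f, i, j, hor, Or.inr (Or.inr rfl)⟩
        have hmem := (convex_convexHull ℝ (cosmoVertices ends))
          (subset_convexHull ℝ _ hB) (subset_convexHull ℝ _ hC)
          (by norm_num : (0:ℝ) ≤ 1/2) (by norm_num : (0:ℝ) ≤ 1/2) (by norm_num)
        have heq : (1/2 : ℝ) • cosmoPtB i j f + (1/2 : ℝ) • cosmoPtC i j f
            = Pi.single (Sum.inr f) 1 := by
          funext k
          simp only [Pi.add_apply, Pi.sub_apply, Pi.neg_apply, Pi.smul_apply, smul_eq_mul,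
            Pi.single_apply]
          ring
        rw [cosmoPolytope, ← heq]
        exact hmem
end

section
/- Let G = (V,E) be a graph and let J_G be the ideal of R_G generated by the fundamental binomials of G. Then for any zig-zag pair (E_1,E_2) of G, the zig-zag binomial b_{E_1,E_2} = z_v · ∏_{f=i→j ∈ E_1} y_{ijf} · ∏_{f=i→j ∈ E_2} z_f − z_u · ∏_{f=i→j ∈ E_2} y_{ijf} · ∏_{f=i→j ∈ E_1} z_f belongs to J_G. -/
open MvPolynomial

/-- The variables of the polynomial ring `R_G` associated to a multigraph whose edges are
given with an (arbitrary) orientation `ends : E → V × V`:  a variable `z k` for every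
`k ∈ V ∪ E`, two variables `y f true = y_{ijf}` and `y f false = y_{jif}` for every edge
`f = ij` (oriented so that `ends f = (i,j)`), and a variable `t f` for every edge `f`. -/
inductive CosmoVar (V E : Type*) where
  | z : V ⊕ E → CosmoVar V E
  | y : E → Bool → CosmoVar V E
  | t : E → CosmoVar V E

/-- The set `F_G` of fundamental binomials of a multigraph. For `f = ij ∈ E` these are
`y_{ijf} y_{jif} − z_f²`, `y_{ijf} t_f − z_i²`, `y_{jif} t_f − z_j²`,
`y_{ijf} z_j − z_i z_f`, `y_{jif} z_i − z_j z_f`, `t_f z_f − z_i z_j`. -/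
def fundamentalBinomials {V E : Type*} (K : Type*) [Field K] (ends : E → V × V) :
    Set (MvPolynomial (CosmoVar V E) K) :=
  ⋃ f : E,
    { X (CosmoVar.y f true) * X (CosmoVar.y f false) - X (CosmoVar.z (Sum.inr f)) ^ 2,
      X (CosmoVar.y f true) * X (CosmoVar.t f) - X (CosmoVar.z (Sum.inl (ends f).1)) ^ 2,
      X (CosmoVar.y f false) * X (CosmoVar.t f) - X (CosmoVar.z (Sum.inl (ends f).2)) ^ 2,
      X (CosmoVar.y f true) * X (CosmoVar.z (Sum.inl (ends f).2)) -
        X (CosmoVar.z (Sum.inl (ends f).1)) * X (CosmoVar.z (Sum.inr f)),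
      X (CosmoVar.y f false) * X (CosmoVar.z (Sum.inl (ends f).1)) -
        X (CosmoVar.z (Sum.inl (ends f).2)) * X (CosmoVar.z (Sum.inr f)),
      X (CosmoVar.t f) * X (CosmoVar.z (Sum.inr f)) -
        X (CosmoVar.z (Sum.inl (ends f).1)) * X (CosmoVar.z (Sum.inl (ends f).2)) }

/-- The `y`-variable of the edge `f` directed from `i` to `j` (assuming the endpoints of
`f` are `i` and `j`, in one of the two orders). -/
def ydir {V E : Type*} [DecidableEq V] (ends : E → V × V) (f : E) (i j : V) :
    CosmoVar V E :=
  if ends f = (i, j) then CosmoVar.y f true else CosmoVar.y f false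


/-- Key step lemma: for an edge `f` with endpoints `a`, `b` (in either order, `a ≠ b`),
the binomial `z_b · y_{abf} − z_a · z_f` is one of the fundamental binomials (up to sign
and order of factors), hence lies in the ideal they generate. -/
lemma step_mem_fundamental {V E K : Type*} [DecidableEq V] [Field K]
    (ends : E → V × V) (f : E) (a b : V) (hab : a ≠ b)
    (h : ends f = (a, b) ∨ ends f = (b, a)) :
    (X (CosmoVar.z (Sum.inl b)) * X (ydir ends f a b) -
      X (CosmoVar.z (Sum.inl a)) * X (CosmoVar.z (Sum.inr f))
      : MvPolynomial (CosmoVar V E) K) ∈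
      Ideal.span (fundamentalBinomials K ends) := by
  rcases h with h | h
  · have hy : ydir ends f a b = CosmoVar.y f true := by rw [ydir, if_pos h]
    have hmem : (X (CosmoVar.y f true) * X (CosmoVar.z (Sum.inl (ends f).2)) -
        X (CosmoVar.z (Sum.inl (ends f).1)) * X (CosmoVar.z (Sum.inr f))
        : MvPolynomial (CosmoVar V E) K) ∈ fundamentalBinomials K ends := by
      refine Set.mem_iUnion.2 ⟨f, ?_⟩
      simp only [Set.mem_insert_iff, Set.mem_singleton_iff]
      tauto
    have heq : (X (CosmoVar.z (Sum.inl b)) * X (ydir ends f a b) -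
        X (CosmoVar.z (Sum.inl a)) * X (CosmoVar.z (Sum.inr f))
        : MvPolynomial (CosmoVar V E) K)
        = X (CosmoVar.y f true) * X (CosmoVar.z (Sum.inl (ends f).2)) -
          X (CosmoVar.z (Sum.inl (ends f).1)) * X (CosmoVar.z (Sum.inr f)) := by
      rw [hy, h]; ring
    rw [heq]
    exact Ideal.subset_span hmem
  · have hy : ydir ends f a b = CosmoVar.y f false := by
      rw [ydir, if_neg]
      rw [h]
      intro hc
      exact hab (congrArg Prod.snd hc)
    have hmem : (X (CosmoVar.y f false) * X (CosmoVar.z (Sum.inl (ends f).1)) -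
        X (CosmoVar.z (Sum.inl (ends f).2)) * X (CosmoVar.z (Sum.inr f))
        : MvPolynomial (CosmoVar V E) K) ∈ fundamentalBinomials K ends := by
      refine Set.mem_iUnion.2 ⟨f, ?_⟩
      simp only [Set.mem_insert_iff, Set.mem_singleton_iff]
      right; right; right; right; left; trivial
    have heq : (X (CosmoVar.z (Sum.inl b)) * X (ydir ends f a b) -
        X (CosmoVar.z (Sum.inl a)) * X (CosmoVar.z (Sum.inr f))
        : MvPolynomial (CosmoVar V E) K)
        = X (CosmoVar.y f false) * X (CosmoVar.z (Sum.inl (ends f).1)) -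
          X (CosmoVar.z (Sum.inl (ends f).2)) * X (CosmoVar.z (Sum.inr f)) := by
      rw [hy, h]; ring
    rw [heq]
    exact Ideal.subset_span hmem

/-- For any zig-zag pair `(E₁,E₂)` of `G`, arising from a path
`w 0, w 1, …, w k` (`k ≥ 2`) with edges `fe 0, …, fe (k-1)` and a partition of the edges
(encoded by `P : Fin k → Bool`, `P s = true` meaning the `s`-th edge lies in `P₁`) with the
first edge in `P₁` and the last edge in `P₂`, the zig-zag binomial
`b_{E₁,E₂} = z_v ∏_{f=i→j ∈ E₁} y_{ijf} ∏_{f ∈ E₂} z_f − z_u ∏_{f=i→j ∈ E₂} y_{ijf} ∏_{f ∈ E₁} z_f`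
lies in the ideal `J_G` generated by the fundamental binomials. -/
theorem zigzag_binomial_mem_fundamental_ideal
    {V E K : Type*} [DecidableEq V] [Field K]
    (ends : E → V × V) (k : ℕ) (hk : 2 ≤ k)
    (w : Fin (k + 1) → V) (hw : Function.Injective w)
    (fe : Fin k → E)
    (hfe : ∀ s : Fin k, ends (fe s) = (w s.castSucc, w s.succ) ∨
      ends (fe s) = (w s.succ, w s.castSucc))
    (P : Fin k → Bool)
    (hP0 : P ⟨0, by omega⟩ = true) (hPlast : P ⟨k - 1, by omega⟩ = false) :
    (X (CosmoVar.z (Sum.inl (w (Fin.last k)))) *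
        (∏ s ∈ Finset.univ.filter (fun s : Fin k => P s = true),
          X (ydir ends (fe s) (w s.castSucc) (w s.succ))) *
        ∏ s ∈ Finset.univ.filter (fun s : Fin k => P s = false),
          X (CosmoVar.z (Sum.inr (fe s))) -
      X (CosmoVar.z (Sum.inl (w 0))) *
        (∏ s ∈ Finset.univ.filter (fun s : Fin k => P s = false),
          X (ydir ends (fe s) (w s.succ) (w s.castSucc))) *
        ∏ s ∈ Finset.univ.filter (fun s : Fin k => P s = true),
          X (CosmoVar.z (Sum.inr (fe s)))
      : MvPolynomial (CosmoVar V E) K) ∈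
      Ideal.span (fundamentalBinomials K ends) := by
  classical
  -- Abbreviations
  set J := Ideal.span (fundamentalBinomials K ends) with hJ
  let Zf : Fin k → MvPolynomial (CosmoVar V E) K := fun s => X (CosmoVar.z (Sum.inr (fe s)))
  let Yf : Fin k → MvPolynomial (CosmoVar V E) K :=
    fun s => X (ydir ends (fe s) (w s.castSucc) (w s.succ))
  let Yb : Fin k → MvPolynomial (CosmoVar V E) K :=
    fun s => X (ydir ends (fe s) (w s.succ) (w s.castSucc))
  -- the hybrid monomial factors
  let g : ℕ → Fin k → MvPolynomial (CosmoVar V E) K := fun m s =>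
    if (s : ℕ) < m then (if P s then Yf s else Zf s)
    else (if P s then Zf s else Yb s)
  let f : ℕ → MvPolynomial (CosmoVar V E) K := fun m =>
    X (CosmoVar.z (Sum.inl (w ⟨min m k, by omega⟩))) * ∏ s, g m s
  have hwne : ∀ s : Fin k, w s.castSucc ≠ w s.succ := by
    intro s hws
    exact absurd (hw hws) (Fin.castSucc_lt_succ : s.castSucc < s.succ).ne
  -- each telescoping step is in the ideal
  have key : ∀ i ∈ Finset.range k, f (i + 1) - f i ∈ J := by
    intro i hik
    rw [Finset.mem_range] at hik
    set si : Fin k := ⟨i, hik⟩ with hsi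
    have hmin1 : (⟨min (i+1) k, by omega⟩ : Fin (k+1)) = si.succ := by
      apply Fin.ext
      simp [Nat.min_eq_left hik, hsi]
    have hmin0 : (⟨min i k, by omega⟩ : Fin (k+1)) = si.castSucc := by
      apply Fin.ext
      simp [Nat.min_eq_left (le_of_lt hik), hsi]
    have hsplit : ∀ m, (∏ s, g m s) = g m si * ∏ s ∈ Finset.univ.erase si, g m s :=
      fun m => (Finset.mul_prod_erase _ _ (Finset.mem_univ si)).symm
    have hcongr : (∏ s ∈ Finset.univ.erase si, g (i+1) s)
        = ∏ s ∈ Finset.univ.erase si, g i s := by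
      refine Finset.prod_congr rfl fun s hs => ?_
      have hne : (s : ℕ) ≠ i := fun h => (Finset.mem_erase.1 hs).1 (Fin.ext h)
      have hlt : ((s : ℕ) < i + 1) = ((s : ℕ) < i) := by
        apply propext; omega
      simp only [g, hlt]
    have hfi : f (i+1) - f i
        = (X (CosmoVar.z (Sum.inl (w si.succ))) * g (i+1) si
            - X (CosmoVar.z (Sum.inl (w si.castSucc))) * g i si)
          * ∏ s ∈ Finset.univ.erase si, g i s := by
      show X (CosmoVar.z (Sum.inl (w ⟨min (i+1) k, by omega⟩))) * ∏ s, g (i+1) s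
          - X (CosmoVar.z (Sum.inl (w ⟨min i k, by omega⟩))) * ∏ s, g i s = _
      rw [hmin1, hmin0, hsplit (i+1), hsplit i, hcongr]
      ring
    rw [hfi]
    have hgsucc : g (i+1) si = if P si then Yf si else Zf si := by
      simp [g, hsi]
    have hgi : g i si = if P si then Zf si else Yb si := by
      simp [g, hsi]
    rcases hPb : P si with _ | _
    · -- P si = false : backward edge
      rw [hgsucc, hgi, if_neg (by simp [hPb]), if_neg (by simp [hPb])]
      have hstep := step_mem_fundamental (K := K) ends (fe si) (w si.succ) (w si.castSucc)
        (fun h => hwne si h.symm) (Or.symm (hfe si))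
      refine Ideal.mul_mem_right _ _ ?_
      have heq : X (CosmoVar.z (Sum.inl (w si.succ))) * Zf si
          - X (CosmoVar.z (Sum.inl (w si.castSucc))) * Yb si
          = -(X (CosmoVar.z (Sum.inl (w si.castSucc)))
                * X (ydir ends (fe si) (w si.succ) (w si.castSucc))
              - X (CosmoVar.z (Sum.inl (w si.succ))) * X (CosmoVar.z (Sum.inr (fe si)))) := by
        simp only [Zf, Yb]
        ring
      rw [heq]
      exact neg_mem hstep
    · -- P si = true : forward edge
      rw [hgsucc, hgi, if_pos (by simp [hPb]), if_pos (by simp [hPb])]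
      have hstep := step_mem_fundamental (K := K) ends (fe si) (w si.castSucc) (w si.succ)
        (hwne si) (hfe si)
      refine Ideal.mul_mem_right _ _ ?_
      have heq : X (CosmoVar.z (Sum.inl (w si.succ))) * Yf si
          - X (CosmoVar.z (Sum.inl (w si.castSucc))) * Zf si
          = X (CosmoVar.z (Sum.inl (w si.succ)))
                * X (ydir ends (fe si) (w si.castSucc) (w si.succ))
              - X (CosmoVar.z (Sum.inl (w si.castSucc))) * X (CosmoVar.z (Sum.inr (fe si))) := by
        simp only [Zf, Yf]
      rw [heq]
      exact hstep
  have htel : f k - f 0 = ∑ i ∈ Finset.range k, (f (i+1) - f i) :=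
    (Finset.sum_range_sub f k).symm
  have hmem : f k - f 0 ∈ J := by
    rw [htel]
    exact Ideal.sum_mem J key
  -- identify `f k - f 0` with the zig-zag binomial
  have hfk : f k = X (CosmoVar.z (Sum.inl (w (Fin.last k)))) *
      (∏ s ∈ Finset.univ.filter (fun s : Fin k => P s = true), Yf s) *
      ∏ s ∈ Finset.univ.filter (fun s : Fin k => P s = false), Zf s := by
    have h1 : (⟨min k k, by omega⟩ : Fin (k+1)) = Fin.last k := by
      apply Fin.ext; simp [Fin.last]
    show X (CosmoVar.z (Sum.inl (w ⟨min k k, by omega⟩))) * ∏ s, g k s = _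
    rw [h1]
    have h2 : (∏ s, g k s) = ∏ s : Fin k, (if P s = true then Yf s else Zf s) := by
      refine Finset.prod_congr rfl fun s _ => ?_
      simp only [g, if_pos s.isLt]
    rw [h2, Finset.prod_ite]
    have h3 : (Finset.univ.filter fun s : Fin k => ¬ P s = true)
        = Finset.univ.filter fun s : Fin k => P s = false := by
      refine Finset.filter_congr fun s _ => ?_
      simp
    rw [h3, mul_assoc]
  have hf0 : f 0 = X (CosmoVar.z (Sum.inl (w 0))) *
      (∏ s ∈ Finset.univ.filter (fun s : Fin k => P s = false), Yb s) *
      ∏ s ∈ Finset.univ.filter (fun s : Fin k => P s = true), Zf s := by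
    have h1 : (⟨min 0 k, by omega⟩ : Fin (k+1)) = 0 := by
      apply Fin.ext; simp
    show X (CosmoVar.z (Sum.inl (w ⟨min 0 k, by omega⟩))) * ∏ s, g 0 s = _
    rw [h1]
    have h2 : (∏ s, g 0 s) = ∏ s : Fin k, (if P s = true then Zf s else Yb s) := by
      refine Finset.prod_congr rfl fun s _ => ?_
      simp only [g, Nat.not_lt_zero, if_neg (Nat.not_lt_zero _)]
    rw [h2, Finset.prod_ite]
    have h3 : (Finset.univ.filter fun s : Fin k => ¬ P s = true)
        = Finset.univ.filter fun s : Fin k => P s = false := by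
      refine Finset.filter_congr fun s _ => ?_
      simp
    rw [h3]
    ring
  rw [hfk, hf0] at hmem
  exact hmem
end

section
/- Let L_m denote the m-loop graph, consisting of a single vertex i and m loops at i. Then the h*-polynomial of its cosmological polytope is h*(C_{L_m}; z) = (1+z)^m. -/
open Polynomial Pointwise

/-- lattice points of the `t`-dilated standard cross-polytope, as a Finset. -/
noncomputable def crossBall (m t : ℕ) : Finset (Fin m → ℤ) :=
  (Fintype.piFinset fun _ => Finset.Icc (-(t:ℤ)) t).filter (fun z => ∑ i, |z i| ≤ (t:ℤ))

lemma mem_crossBall {m t : ℕ} {z : Fin m → ℤ} :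
    z ∈ crossBall m t ↔ ∑ i, |z i| ≤ (t:ℤ) := by
  constructor
  · intro h; exact (Finset.mem_filter.mp h).2
  · intro h
    refine Finset.mem_filter.mpr ⟨?_, h⟩
    refine Fintype.mem_piFinset.mpr fun i => ?_
    have h1 : |z i| ≤ (t:ℤ) :=
      le_trans (Finset.single_le_sum (fun j _ => abs_nonneg (z j)) (Finset.mem_univ i)) h
    exact Finset.mem_Icc.mpr (abs_le.mp h1)

noncomputable def crossCount (m t : ℕ) : ℕ := (crossBall m t).card

lemma crossCount_zero_left (t : ℕ) : crossCount 0 t = 1 := by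
  rw [crossCount, Finset.card_eq_one]
  exact ⟨default, by
    ext z
    simp only [Finset.mem_singleton]
    constructor
    · intro _; exact Subsingleton.elim _ _
    · intro h; rw [h]; exact mem_crossBall.mpr (by simp)⟩

lemma crossCount_zero_right (m : ℕ) : crossCount m 0 = 1 := by
  rw [crossCount, Finset.card_eq_one]
  refine ⟨0, ?_⟩
  ext z
  simp only [Finset.mem_singleton, mem_crossBall, Nat.cast_zero]
  constructor
  · intro h
    funext i
    have h0 : ∑ i, |z i| = 0 :=
      le_antisymm h (Finset.sum_nonneg fun j _ => abs_nonneg (z j))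
    have := (Finset.sum_eq_zero_iff_of_nonneg (fun j _ => abs_nonneg (z j))).mp h0 i
      (Finset.mem_univ i)
    simpa [abs_eq_zero] using this
  · intro h; simp [h]

def shiftInt (a : ℤ) : ℤ := if a ≤ 0 then a - 1 else a + 1

lemma abs_shiftInt (a : ℤ) : |shiftInt a| = |a| + 1 := by
  rcases le_or_gt a 0 with h | h
  · rw [shiftInt, if_pos h, abs_of_nonpos h, abs_of_nonpos (by omega)]; ring
  · rw [shiftInt, if_neg (by omega), abs_of_pos h, abs_of_pos (by omega)]

lemma shiftInt_ne (a : ℤ) : shiftInt a ≠ 0 ∧ shiftInt a ≠ 1 := by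
  rw [shiftInt]; split <;> omega

lemma shiftInt_inj : Function.Injective shiftInt := by
  intro a b hab
  unfold shiftInt at hab
  split_ifs at hab <;> omega

lemma cons_sum {m : ℕ} (a : ℤ) (z : Fin m → ℤ) :
    ∑ i, |Fin.cons a z i| = |a| + ∑ i, |z i| := by
  rw [Fin.sum_univ_succ]
  simp

lemma card_filter_head_eq {m t : ℕ} (a : ℤ) (s : ℕ) (hs : |a| + (s:ℤ) = t) :
    ((crossBall (m+1) t).filter (fun w => w 0 = a)).card = crossCount m s := by
  rw [crossCount]
  apply Finset.card_bij (fun w _ => Fin.tail w)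
  · intro w hw
    obtain ⟨hw1, hw2⟩ := Finset.mem_filter.mp hw
    rw [mem_crossBall] at hw1 ⊢
    have := cons_sum (w 0) (Fin.tail w)
    rw [Fin.cons_self_tail] at this
    rw [this, hw2] at hw1
    omega
  · intro w₁ hw₁ w₂ hw₂ h
    obtain ⟨_, h1⟩ := Finset.mem_filter.mp hw₁
    obtain ⟨_, h2⟩ := Finset.mem_filter.mp hw₂
    rw [← Fin.cons_self_tail w₁, ← Fin.cons_self_tail w₂, h1, h2, h]
  · intro z hz
    refine ⟨Fin.cons a z, ?_, by simp [Fin.tail_cons]⟩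
    rw [Finset.mem_filter, mem_crossBall, cons_sum]
    rw [mem_crossBall] at hz
    exact ⟨by omega, by simp⟩

lemma card_filter_other {m t : ℕ} :
    ((crossBall (m+1) (t+1)).filter (fun w => w 0 ≠ 0 ∧ w 0 ≠ 1)).card
      = crossCount (m+1) t := by
  rw [crossCount]
  symm
  apply Finset.card_bij (fun (w : Fin (m+1) → ℤ) _ =>
    Fin.cons (shiftInt (w 0)) (Fin.tail w))
  · intro w hw
    rw [mem_crossBall] at hw
    refine Finset.mem_filter.mpr ⟨?_, ?_⟩
    · rw [mem_crossBall, cons_sum, abs_shiftInt]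
      have := cons_sum (w 0) (Fin.tail w)
      rw [Fin.cons_self_tail] at this
      push_cast
      omega
    · simpa using shiftInt_ne (w 0)
  · intro w₁ hw₁ w₂ hw₂ h
    have h0 : shiftInt (w₁ 0) = shiftInt (w₂ 0) := by
      have := congrFun h 0
      simpa using this
    have ht : Fin.tail w₁ = Fin.tail w₂ := by
      funext i
      have := congrFun h i.succ
      simpa [Fin.cons_succ] using this
    rw [← Fin.cons_self_tail w₁, ← Fin.cons_self_tail w₂, shiftInt_inj h0, ht]
  · intro w hw
    have hmem := Finset.mem_filter.mp hw
    have hw1 := mem_crossBall.mp hmem.1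
    obtain ⟨hw2, hw3⟩ := hmem.2
    refine ⟨Fin.cons (if w 0 ≤ 0 then w 0 + 1 else w 0 - 1) (Fin.tail w), ?_, ?_⟩
    · rw [mem_crossBall, cons_sum]
      have := cons_sum (w 0) (Fin.tail w)
      rw [Fin.cons_self_tail] at this
      have habs : |if w 0 ≤ 0 then w 0 + 1 else w 0 - 1| = |w 0| - 1 := by
        split_ifs with h
        · rw [abs_of_nonpos h, abs_of_nonpos (by omega)]; ring
        · rw [abs_of_pos (by omega), abs_of_nonneg (by omega)]
      push_cast at hw1 ⊢
      omega
    · have hsh : shiftInt (if w 0 ≤ 0 then w 0 + 1 else w 0 - 1) = w 0 := by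
        unfold shiftInt
        split_ifs <;> omega
      simp only [Fin.cons_zero, Fin.tail_cons]
      rw [hsh, Fin.cons_self_tail]

lemma crossCount_rec (m t : ℕ) :
    crossCount (m+1) (t+1) = crossCount (m+1) t + crossCount m (t+1) + crossCount m t := by
  have h0 := card_filter_head_eq (m := m) (t := t+1) 0 (t+1) (by simp)
  have h1 := card_filter_head_eq (m := m) (t := t+1) 1 t (by rw [abs_one]; push_cast; ring)
  have hother := card_filter_other (m := m) (t := t)
  have e1 := Finset.card_filter_add_card_filter_not
    (s := crossBall (m+1) (t+1)) (p := fun w => w 0 = 0)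
  have e2 := Finset.card_filter_add_card_filter_not
    (s := (crossBall (m+1) (t+1)).filter (fun w => ¬ w 0 = 0)) (p := fun w => w 0 = 1)
  rw [Finset.filter_filter, Finset.filter_filter] at e2
  have hB : (crossBall (m+1) (t+1)).filter (fun w => ¬ w 0 = 0 ∧ w 0 = 1)
      = (crossBall (m+1) (t+1)).filter (fun w => w 0 = 1) := by
    apply Finset.filter_congr
    intro w _
    constructor
    · exact fun h => h.2
    · intro h
      exact ⟨by rw [h]; norm_num, h⟩
  have hC : (crossBall (m+1) (t+1)).filter (fun w => ¬ w 0 = 0 ∧ ¬ w 0 = 1)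
      = (crossBall (m+1) (t+1)).filter (fun w => w 0 ≠ 0 ∧ w 0 ≠ 1) := rfl
  rw [hB, hC] at e2
  rw [h0] at e1
  rw [h1, hother] at e2
  rw [crossCount, ← e1, ← e2]
  ring

noncomputable def crossSeries (m : ℕ) : PowerSeries ℚ :=
  PowerSeries.mk fun t => (crossCount m t : ℚ)


lemma crossSeries_zero : crossSeries 0 * (1 - PowerSeries.X) = 1 := by
  ext n
  rw [mul_sub, mul_one]
  cases n with
  | zero =>
    simp [crossSeries, PowerSeries.coeff_zero_mul_X, crossCount_zero_left]
  | succ n =>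
    simp [crossSeries, PowerSeries.coeff_succ_mul_X, crossCount_zero_left,
      PowerSeries.coeff_one]

lemma crossSeries_step (m : ℕ) :
    crossSeries (m+1) * (1 - PowerSeries.X) = crossSeries m * (1 + PowerSeries.X) := by
  ext n
  rw [mul_sub, mul_one, mul_add, mul_one]
  cases n with
  | zero =>
    simp [crossSeries, PowerSeries.coeff_zero_mul_X, crossCount_zero_right]
  | succ n =>
    simp only [map_sub, map_add, PowerSeries.coeff_succ_mul_X, crossSeries,
      PowerSeries.coeff_mk]
    have := crossCount_rec m n
    push_cast [this]
    ring

lemma crossSeries_mul (m : ℕ) :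
    crossSeries m * (1 - PowerSeries.X) ^ (m+1) = (1 + PowerSeries.X) ^ m := by
  induction m with
  | zero => simpa using crossSeries_zero
  | succ m ih =>
    rw [pow_succ]
    rw [show crossSeries (m+1) * ((1 - PowerSeries.X) ^ (m+1) * (1 - PowerSeries.X))
        = (crossSeries (m+1) * (1 - PowerSeries.X)) * (1 - PowerSeries.X) ^ (m+1) by ring,
      crossSeries_step,
      show crossSeries m * (1 + PowerSeries.X) * (1 - PowerSeries.X) ^ (m+1)
        = (crossSeries m * (1 - PowerSeries.X) ^ (m+1)) * (1 + PowerSeries.X) by ring,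
      ih, ← pow_succ]
/-- vertex of type `2e_v - e_f` -/
def loopVa {m : ℕ} (f : Fin m) : (Unit ⊕ Fin m) → ℝ :=
  Sum.elim (fun _ => 2) (fun g => if g = f then -1 else 0)

/-- vertex of type `e_f` -/
def loopVb {m : ℕ} (f : Fin m) : (Unit ⊕ Fin m) → ℝ :=
  Sum.elim 0 (fun g => if g = f then 1 else 0)

lemma loop_vertices_eq (m : ℕ) :
    cosmoVertices (fun _ : Fin m => s(Unit.unit, Unit.unit))
      = {x | ∃ f : Fin m, x = loopVa f ∨ x = loopVb f} := by
  have ha : ∀ f : Fin m,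
      (Pi.single (Sum.inl Unit.unit) 1 + Pi.single (Sum.inl Unit.unit) 1
        - Pi.single (Sum.inr f) 1 : (Unit ⊕ Fin m) → ℝ) = loopVa f := by
    intro f
    funext k
    rcases k with u | g
    · simp [loopVa, Pi.single_apply]
      norm_num
    · by_cases h : g = f <;> simp [loopVa, Pi.single_apply, h]
  have hb : ∀ f : Fin m,
      (Pi.single (Sum.inl Unit.unit) 1 - Pi.single (Sum.inl Unit.unit) 1
        + Pi.single (Sum.inr f) 1 : (Unit ⊕ Fin m) → ℝ) = loopVb f := by
    intro f
    funext k
    rcases k with u | g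
    · simp [loopVb, Pi.single_apply]
    · by_cases h : g = f <;> simp [loopVb, Pi.single_apply, h]
  have hb' : ∀ f : Fin m,
      (-Pi.single (Sum.inl Unit.unit) 1 + Pi.single (Sum.inl Unit.unit) 1
        + Pi.single (Sum.inr f) 1 : (Unit ⊕ Fin m) → ℝ) = loopVb f := by
    intro f
    rw [← hb f]
    ring
  ext x
  constructor
  · rintro ⟨f, i, j, -, (h | h | h)⟩ <;> rw [h]
    · exact ⟨f, Or.inl (ha f)⟩
    · exact ⟨f, Or.inr (hb f)⟩
    · exact ⟨f, Or.inr (hb' f)⟩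
  · rintro ⟨f, (h | h)⟩
    · exact ⟨f, Unit.unit, Unit.unit, rfl, Or.inl (by rw [h, ha f])⟩
    · exact ⟨f, Unit.unit, Unit.unit, rfl, Or.inr (Or.inl (by rw [h, hb f]))⟩

/-- the halfspace/hyperplane description -/
def loopP (m : ℕ) : Set ((Unit ⊕ Fin m) → ℝ) :=
  {y | y (Sum.inl Unit.unit) + ∑ f, y (Sum.inr f) = 1 ∧
       2 * ∑ f, max 0 (-(y (Sum.inr f))) ≤ y (Sum.inl Unit.unit)}

lemma loopP_convex (m : ℕ) : Convex ℝ (loopP m) := by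
  intro x hx y hy a b ha hb hab
  obtain ⟨hx1, hx2⟩ := hx
  obtain ⟨hy1, hy2⟩ := hy
  constructor
  · have hsum : ∑ f, (a • x + b • y) (Sum.inr f)
        = a * ∑ f, x (Sum.inr f) + b * ∑ f, y (Sum.inr f) := by
      simp only [Pi.add_apply, Pi.smul_apply, smul_eq_mul]
      rw [Finset.sum_add_distrib, ← Finset.mul_sum, ← Finset.mul_sum]
    simp only [Pi.add_apply, Pi.smul_apply, smul_eq_mul] at hsum ⊢
    rw [hsum]
    linear_combination a * hx1 + b * hy1 + hab
  · have hpt : ∀ f : Fin m, max 0 (-((a • x + b • y) (Sum.inr f)))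
        ≤ a * max 0 (-(x (Sum.inr f))) + b * max 0 (-(y (Sum.inr f))) := by
      intro f
      simp only [Pi.add_apply, Pi.smul_apply, smul_eq_mul]
      apply max_le
      · have h1 : (0:ℝ) ≤ a * max 0 (-(x (Sum.inr f))) :=
          mul_nonneg ha (le_max_left 0 _)
        have h2 : (0:ℝ) ≤ b * max 0 (-(y (Sum.inr f))) :=
          mul_nonneg hb (le_max_left 0 _)
        linarith
      · have h1 : a * (-(x (Sum.inr f))) ≤ a * max 0 (-(x (Sum.inr f))) :=
          mul_le_mul_of_nonneg_left (le_max_right 0 _) ha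
        have h2 : b * (-(y (Sum.inr f))) ≤ b * max 0 (-(y (Sum.inr f))) :=
          mul_le_mul_of_nonneg_left (le_max_right 0 _) hb
        linarith
    have hsum := Finset.sum_le_sum (fun f (_ : f ∈ Finset.univ) => hpt f)
    have hdist : ∑ f, (a * max 0 (-(x (Sum.inr f))) + b * max 0 (-(y (Sum.inr f))))
        = a * ∑ f, max 0 (-(x (Sum.inr f))) + b * ∑ f, max 0 (-(y (Sum.inr f))) := by
      rw [Finset.sum_add_distrib, ← Finset.mul_sum, ← Finset.mul_sum]
    rw [hdist] at hsum
    simp only [Pi.add_apply, Pi.smul_apply, smul_eq_mul] at hsum ⊢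
    nlinarith [mul_le_mul_of_nonneg_left hx2 ha, mul_le_mul_of_nonneg_left hy2 hb]

lemma loop_polytope_eq (m : ℕ) (hm : 0 < m) :
    cosmoPolytope (fun _ : Fin m => s(Unit.unit, Unit.unit)) = loopP m := by
  apply le_antisymm
  · apply convexHull_min _ (loopP_convex m)
    rw [loop_vertices_eq]
    rintro x ⟨f, (h | h)⟩ <;> rw [h] <;> constructor
    · simp [loopVa, Finset.sum_ite_eq']
      norm_num
    · have : ∀ g : Fin m, max 0 (-(loopVa f (Sum.inr g))) = if g = f then 1 else 0 := by
        intro g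
        by_cases h : g = f <;> simp [loopVa, h]
      simp only [this, Finset.sum_ite_eq', Finset.mem_univ, if_true]
      simp [loopVa]
    · simp [loopVb, Finset.sum_ite_eq']
    · have : ∀ g : Fin m, max 0 (-(loopVb f (Sum.inr g))) = 0 := by
        intro g
        by_cases h : g = f <;> simp [loopVb, h]
      simp only [this, Finset.sum_const_zero, mul_zero]
      simp [loopVb]
  · intro y hy
    obtain ⟨h1, h2⟩ := hy
    set i0 : Fin m := ⟨0, hm⟩
    set slack : ℝ := y (Sum.inl Unit.unit) / 2 - ∑ g, max 0 (-(y (Sum.inr g))) with hslack_def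
    have hslack : 0 ≤ slack := by rw [hslack_def]; linarith
    set lam : Fin m → ℝ := fun f => max 0 (-(y (Sum.inr f))) + if f = i0 then slack else 0
      with hlam_def
    set mu : Fin m → ℝ := fun f => y (Sum.inr f) + lam f with hmu_def
    have hlam_nonneg : ∀ f, 0 ≤ lam f := by
      intro f
      have h0 := le_max_left (0:ℝ) (-(y (Sum.inr f)))
      show 0 ≤ max 0 (-(y (Sum.inr f))) + if f = i0 then slack else 0
      split_ifs <;> linarith
    have hmu_nonneg : ∀ f, 0 ≤ mu f := by
      intro f
      have h3 := le_max_right (0:ℝ) (-(y (Sum.inr f)))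
      show 0 ≤ y (Sum.inr f) + lam f
      have hl : max 0 (-(y (Sum.inr f))) ≤ lam f := by
        show max 0 (-(y (Sum.inr f))) ≤ max 0 (-(y (Sum.inr f))) + if f = i0 then slack else 0
        split_ifs <;> linarith
      linarith
    have hsumlam : ∑ f, lam f = y (Sum.inl Unit.unit) / 2 := by
      simp only [hlam_def]
      rw [Finset.sum_add_distrib, Finset.sum_ite_eq', if_pos (Finset.mem_univ i0)]
      rw [hslack_def]
      ring
    have hsummu : ∑ f, mu f = ∑ f, y (Sum.inr f) + ∑ f, lam f := by
      simp only [hmu_def]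
      rw [Finset.sum_add_distrib]
    -- total weight 1
    have hw1 : ∑ i : Fin m ⊕ Fin m, Sum.elim lam mu i = 1 := by
      rw [Fintype.sum_sum_type]
      simp only [Sum.elim_inl, Sum.elim_inr]
      rw [hsummu, hsumlam]
      linarith
    have hkey : Finset.univ.centerMass (Sum.elim lam mu) (Sum.elim loopVa loopVb) = y := by
      rw [Finset.centerMass_eq_of_sum_1 _ _ hw1]
      funext k
      rw [Finset.sum_apply]
      rw [Fintype.sum_sum_type]
      simp only [Sum.elim_inl, Sum.elim_inr, Pi.smul_apply, smul_eq_mul]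
      rcases k with u | g
      · have hva : ∀ f : Fin m, loopVa f (Sum.inl u) = 2 := fun f => rfl
        have hvb : ∀ f : Fin m, loopVb f (Sum.inl u) = 0 := fun f => rfl
        simp only [hva, hvb, mul_zero, Finset.sum_const_zero, add_zero]
        rw [← Finset.sum_mul, hsumlam]
        cases u
        ring
      · have hva : ∀ f : Fin m, lam f * loopVa f (Sum.inr g) = if g = f then -lam f else 0 := by
          intro f
          by_cases h : g = f <;> simp [loopVa, h]
        have hvb : ∀ f : Fin m, mu f * loopVb f (Sum.inr g) = if g = f then mu f else 0 := by
          intro f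
          by_cases h : g = f <;> simp [loopVb, h]
        simp only [hva, hvb, Finset.sum_ite_eq, Finset.mem_univ, if_true]
        simp only [hmu_def]
        ring
    rw [cosmoPolytope, loop_vertices_eq]
    rw [← hkey]
    apply Finset.centerMass_mem_convexHull
    · rintro (f | f) _
      · exact hlam_nonneg f
      · exact hmu_nonneg f
    · rw [hw1]; norm_num
    · rintro (f | f) _
      · exact ⟨f, Or.inl rfl⟩
      · exact ⟨f, Or.inr rfl⟩

lemma loop_mem_dilate (m : ℕ) {t : ℝ} (ht : 0 < t) (y : (Unit ⊕ Fin m) → ℝ) :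
    y ∈ t • loopP m ↔
      (y (Sum.inl Unit.unit) + ∑ f, y (Sum.inr f) = t ∧
       2 * ∑ f, max 0 (-(y (Sum.inr f))) ≤ y (Sum.inl Unit.unit)) := by
  rw [Set.mem_smul_set_iff_inv_smul_mem₀ ht.ne']
  show ((t⁻¹ • y) (Sum.inl Unit.unit) + ∑ f, (t⁻¹ • y) (Sum.inr f) = 1 ∧ _) ↔ _
  simp only [Pi.smul_apply, smul_eq_mul, loopP, Set.mem_setOf_eq]
  have hmax : ∀ f : Fin m, max 0 (-(t⁻¹ * y (Sum.inr f)))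
      = t⁻¹ * max 0 (-(y (Sum.inr f))) := by
    intro f
    rw [mul_max_of_nonneg _ _ (inv_nonneg.mpr ht.le), mul_zero, mul_neg]
  simp only [hmax]
  rw [← Finset.mul_sum, ← Finset.mul_sum, ← mul_add]
  constructor
  · rintro ⟨p, q⟩
    constructor
    · have := congrArg (fun u => t * u) p
      simp only [← mul_assoc, mul_inv_cancel₀ ht.ne', one_mul, mul_one] at this
      linarith
    · have := mul_le_mul_of_nonneg_left q ht.le
      rw [show t * (2 * (t⁻¹ * ∑ f, max 0 (-(y (Sum.inr f)))))
          = (t * t⁻¹) * (2 * ∑ f, max 0 (-(y (Sum.inr f)))) by ring,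
        show t * (t⁻¹ * y (Sum.inl Unit.unit)) = (t * t⁻¹) * y (Sum.inl Unit.unit) by ring,
        mul_inv_cancel₀ ht.ne', one_mul, one_mul] at this
      exact this
  · rintro ⟨p, q⟩
    constructor
    · rw [p, inv_mul_cancel₀ ht.ne']
    · have := mul_le_mul_of_nonneg_left q (inv_nonneg.mpr ht.le)
      calc 2 * (t⁻¹ * ∑ f, max 0 (-(y (Sum.inr f))))
          = t⁻¹ * (2 * ∑ f, max 0 (-(y (Sum.inr f)))) := by ring
        _ ≤ t⁻¹ * y (Sum.inl Unit.unit) := this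

lemma loop_lattice_char (m : ℕ) (hm : 0 < m) (t : ℕ) (ht : 0 < t)
    (x : (Unit ⊕ Fin m) → ℤ) :
    ((fun k => (x k : ℝ)) ∈ (t:ℝ) • cosmoPolytope (fun _ : Fin m => s(Unit.unit, Unit.unit)))
      ↔ (x (Sum.inl Unit.unit) = (t:ℤ) - ∑ f, x (Sum.inr f) ∧
         ∑ f, |x (Sum.inr f)| ≤ (t:ℤ)) := by
  rw [loop_polytope_eq m hm, loop_mem_dilate m (by positivity : (0:ℝ) < t)]
  have c1 : ((x (Sum.inl Unit.unit) : ℝ) + ∑ f, (x (Sum.inr f) : ℝ) = (t:ℝ))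
      ↔ (x (Sum.inl Unit.unit) + ∑ f, x (Sum.inr f) = (t:ℤ)) := by
    constructor
    · intro h; exact_mod_cast h
    · intro h; exact_mod_cast congrArg (fun u : ℤ => (u : ℝ)) h
  have c2 : (2 * ∑ f, max 0 (-((x (Sum.inr f)) : ℝ)) ≤ (x (Sum.inl Unit.unit) : ℝ))
      ↔ (2 * ∑ f, max 0 (-(x (Sum.inr f))) ≤ x (Sum.inl Unit.unit)) := by
    have : ∀ f : Fin m, max (0:ℝ) (-((x (Sum.inr f)) : ℝ))
        = ((max 0 (-(x (Sum.inr f))) : ℤ) : ℝ) := by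
      intro f; push_cast; ring
    simp only [this]
    constructor
    · intro h; exact_mod_cast h
    · intro h; exact_mod_cast h
  rw [c1, c2]
  have habs : ∑ f, |x (Sum.inr f)|
      = ∑ f, x (Sum.inr f) + 2 * ∑ f, max 0 (-(x (Sum.inr f))) := by
    rw [Finset.mul_sum, ← Finset.sum_add_distrib]
    apply Finset.sum_congr rfl
    intro f _
    rcases le_or_gt 0 (x (Sum.inr f)) with h | h
    · rw [abs_of_nonneg h, max_eq_left (by omega : -(x (Sum.inr f)) ≤ 0)]
      ring
    · rw [abs_of_neg h, max_eq_right (by omega : (0:ℤ) ≤ -(x (Sum.inr f)))]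
      ring
  constructor
  · rintro ⟨p, q⟩
    constructor
    · linarith
    · linarith [habs]
  · rintro ⟨p, q⟩
    constructor
    · linarith
    · linarith [habs]

def loopEquiv (m t : ℕ) :
    ↥{x : (Unit ⊕ Fin m) → ℤ | x (Sum.inl Unit.unit) = (t:ℤ) - ∑ f, x (Sum.inr f) ∧
        ∑ f, |x (Sum.inr f)| ≤ (t:ℤ)}
    ≃ ↥{z : Fin m → ℤ | ∑ i, |z i| ≤ (t:ℤ)} where
  toFun x := ⟨fun i => x.1 (Sum.inr i), x.2.2⟩
  invFun z := ⟨Sum.elim (fun _ => (t:ℤ) - ∑ i, z.1 i) z.1, by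
    constructor
    · simp
    · have hz := z.2
      simp only [Set.mem_setOf_eq] at hz
      simpa only [Sum.elim_inr] using hz⟩
  left_inv x := by
    apply Subtype.ext
    funext k
    rcases k with u | g
    · cases u
      exact x.2.1.symm
    · rfl
  right_inv z := by
    apply Subtype.ext
    rfl

lemma loop_latticePointCount (m : ℕ) (hm : 0 < m) (t : ℕ) (ht : 0 < t) :
    latticePointCount (cosmoPolytope (fun _ : Fin m => s(Unit.unit, Unit.unit))) t
      = crossCount m t := by
  rw [latticePointCount]
  have hset : { x : (Unit ⊕ Fin m) → ℤ |
      (fun k => (x k : ℝ)) ∈ (t : ℝ) • cosmoPolytope (fun _ : Fin m => s(Unit.unit, Unit.unit)) }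
      = {x : (Unit ⊕ Fin m) → ℤ | x (Sum.inl Unit.unit) = (t:ℤ) - ∑ f, x (Sum.inr f) ∧
          ∑ f, |x (Sum.inr f)| ≤ (t:ℤ)} :=
    Set.ext fun x => loop_lattice_char m hm t ht x
  rw [hset]
  rw [← Nat.card_coe_set_eq, Nat.card_congr (loopEquiv m t), Nat.card_coe_set_eq]
  have : {z : Fin m → ℤ | ∑ i, |z i| ≤ (t:ℤ)} = ↑(crossBall m t) := by
    ext z
    simp [mem_crossBall]
  rw [this, Set.ncard_coe_finset]
  rfl

/-- Let `L_m` be the `m`-loop graph: a single vertex with `m` loops.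
Then `h*(C_{L_m}; z) = (1+z)^m`. -/
theorem hstar_loop_graph (m : ℕ) (hm : 0 < m) :
    IsHStarPoly (cosmoPolytope (fun _ : Fin m => s(Unit.unit, Unit.unit)))
      (Fintype.card Unit + Fintype.card (Fin m) - 1)
      ((1 + Polynomial.X) ^ m) := by
  rw [IsHStarPoly]
  have hd : (Fintype.card Unit + Fintype.card (Fin m) - 1) + 1 = m + 1 := by
    simp only [Fintype.card_unit, Fintype.card_fin]
    omega
  rw [hd]
  have hehr : ehrhartSeries (cosmoPolytope (fun _ : Fin m => s(Unit.unit, Unit.unit)))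
      = crossSeries m := by
    rw [ehrhartSeries, crossSeries]
    refine congrArg _ (funext fun n => ?_)
    cases n with
    | zero => simp [crossCount_zero_right]
    | succ n => simp [loop_latticePointCount m hm (n+1) (Nat.succ_pos n)]
  rw [hehr, crossSeries_mul m]
  simp [Polynomial.coe_pow, Polynomial.coe_add, Polynomial.coe_one, Polynomial.coe_X]
end

section
/- Let G = (V,E) be a connected graph without isolated vertices. The facets of the cosmological polytope C_G are in bijection with the non-empty connected subgraphs of G: for each connected subgraph H ⊆ G, the hyperplane { w ∈ ℝ^{V∪E} : Σ_{v ∈ V(H)} w_v + Σ_{f ∉ E(H)} |f ∩ V(H)| · w_f = 0 } (where |f ∩ V(H)| is the number of endpoints of the edge f, counted with multiplicity, that lie in V(H)) supports a facet of C_G, and every facet of C_G arises in this way from a unique non-empty connected subgraph. -/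
open Polynomial Pointwise

/-- The number of endpoints of an edge (given as an element of `Sym2 V`) lying in `A`,
counted with multiplicity (so a loop at a vertex of `A` counts twice). -/
def endpointCount {V : Type*} [DecidableEq V] (s : Sym2 V) (A : Finset V) : ℕ :=
  Sym2.lift ⟨fun i j => (if i ∈ A then 1 else 0) + (if j ∈ A then 1 else 0),
    fun _ _ => add_comm _ _⟩ s

/-- `(A, B)` is a non-empty connected subgraph of the multigraph given by `ends`:
`A` is a non-empty set of vertices, every edge of `B` has both endpoints in `A`, and any
two vertices of `A` are joined by a walk using only edges of `B`. -/
def IsConnectedSubgraph {V E : Type*} (ends : E → Sym2 V) (A : Finset V) (B : Finset E) :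
    Prop :=
  A.Nonempty ∧ (∀ f ∈ B, ∀ v ∈ ends f, v ∈ A) ∧
    ∀ u ∈ A, ∀ x ∈ A,
      Relation.ReflTransGen (fun i j => ∃ f ∈ B, ends f = s(i, j)) u x

/-- The supporting linear functional of the subgraph `H = (A, B)`:
`w ↦ Σ_{v ∈ V(H)} w_v + Σ_{f ∉ E(H)} |f ∩ V(H)| w_f`. -/
def subgraphFunctional {V E : Type*} [Fintype V] [Fintype E] [DecidableEq V] [DecidableEq E]
    (ends : E → Sym2 V) (A : Finset V) (B : Finset E) (x : (V ⊕ E) → ℝ) : ℝ :=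
  (∑ v ∈ A, x (Sum.inl v)) + ∑ f ∈ Bᶜ, (endpointCount (ends f) A : ℝ) * x (Sum.inr f)

/-- The face of `C_G` cut out by the hyperplane
`Σ_{v ∈ V(H)} w_v + Σ_{f ∉ E(H)} |f ∩ V(H)| w_f = 0` of the subgraph `H = (A, B)`. -/
def subgraphFace {V E : Type*} [Fintype V] [Fintype E] [DecidableEq V] [DecidableEq E]
    (ends : E → Sym2 V) (A : Finset V) (B : Finset E) : Set ((V ⊕ E) → ℝ) :=
  { x ∈ cosmoPolytope ends | subgraphFunctional ends A B x = 0 }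

/-- `F` is a facet of the polytope `P` living in `(V ⊕ E) → ℝ`: a non-empty proper exposed
face of codimension one (i.e. of dimension `|V| + |E| - 2`). -/
def IsFacetOf {V E : Type*} [Fintype V] [Fintype E]
    (P F : Set ((V ⊕ E) → ℝ)) : Prop :=
  F.Nonempty ∧ IsExposed ℝ P F ∧ F ≠ P ∧
    Module.finrank ℝ (vectorSpan ℝ F) = Fintype.card V + Fintype.card E - 2



open Module Submodule Finset
set_option linter.unusedSectionVars false

section LF
variable {ι : Type*} [Fintype ι] [DecidableEq ι]

/-- The linear functional with coefficient vector `c`. -/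
def lfc (c : ι → ℝ) : (ι → ℝ) →ₗ[ℝ] ℝ where
  toFun x := ∑ k, c k * x k
  map_add' x y := by simp [mul_add, Finset.sum_add_distrib]
  map_smul' r x := by
    simp only [Pi.smul_apply, smul_eq_mul, RingHom.id_apply, Finset.mul_sum]
    exact Finset.sum_congr rfl fun k _ => by ring

@[simp] lemma lfc_single (c : ι → ℝ) (k : ι) (r : ℝ) :
    lfc c (Pi.single k r) = c k * r := by
  simp only [lfc, LinearMap.coe_mk, AddHom.coe_mk]
  rw [Finset.sum_eq_single k]
  · simp
  · intro b _ hb; simp [Pi.single_apply, hb]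
  · simp

lemma convex_lf_eq (φ : (ι → ℝ) →ₗ[ℝ] ℝ) (r : ℝ) : Convex ℝ {x | φ x = r} := by
  intro x hx y hy a b ha hb hab
  simp only [Set.mem_setOf_eq] at *
  simp [map_add, map_smul, hx, hy, smul_eq_mul, ← add_mul, hab]

lemma convex_lf_ge (φ : (ι → ℝ) →ₗ[ℝ] ℝ) : Convex ℝ {x | 0 ≤ φ x} := by
  intro x hx y hy a b ha hb hab
  simp only [Set.mem_setOf_eq, map_add, map_smul, smul_eq_mul] at *
  positivity

lemma lf_nonneg_on_hull {S : Set (ι → ℝ)} {φ : (ι → ℝ) →ₗ[ℝ] ℝ}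
    (h : ∀ s ∈ S, 0 ≤ φ s) {x : ι → ℝ} (hx : x ∈ convexHull ℝ S) : 0 ≤ φ x :=
  convexHull_min h (convex_lf_ge φ) hx

lemma lf_eq_on_hull {S : Set (ι → ℝ)} {φ : (ι → ℝ) →ₗ[ℝ] ℝ} {r : ℝ}
    (h : ∀ s ∈ S, φ s = r) {x : ι → ℝ} (hx : x ∈ convexHull ℝ S) : φ x = r :=
  convexHull_min h (convex_lf_eq φ r) hx

/-- The zero face of a nonnegative functional on a convex hull is the hull of the
tight generating points. -/
theorem face_eq_hull {S : Set (ι → ℝ)} {φ : (ι → ℝ) →ₗ[ℝ] ℝ}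
    (h : ∀ s ∈ S, 0 ≤ φ s) :
    {x ∈ convexHull ℝ S | φ x = 0} = convexHull ℝ {s ∈ S | φ s = 0} := by
  apply Set.Subset.antisymm
  · rintro x ⟨hxP, hx0⟩
    rw [_root_.convexHull_eq] at hxP
    obtain ⟨κ, t, w, z, hw0, hw1, hzS, hcm⟩ := hxP
    have hx : ∑ i ∈ t, w i • z i = x := by
      rw [← hcm, Finset.centerMass_eq_of_sum_1 _ _ hw1]
    have hterm : ∀ i ∈ t, 0 ≤ w i * φ (z i) :=
      fun i hi => mul_nonneg (hw0 i hi) (h _ (hzS i hi))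
    have hsum : ∑ i ∈ t, w i * φ (z i) = 0 := by
      have : φ x = ∑ i ∈ t, w i * φ (z i) := by
        rw [← hx, map_sum]; simp [map_smul]
      rw [← this, hx0]
    have hzero : ∀ i ∈ t, w i * φ (z i) = 0 :=
      (Finset.sum_eq_zero_iff_of_nonneg hterm).mp hsum
    classical
    set t' := t.filter (fun i => w i ≠ 0) with ht'
    have hw1' : ∑ i ∈ t', w i = 1 := by
      rw [ht', Finset.sum_filter_ne_zero]; exact hw1
    have hx' : t'.centerMass w z = x := by
      rw [Finset.centerMass_eq_of_sum_1 _ _ hw1', ← hx]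
      apply Finset.sum_subset (Finset.filter_subset _ _)
      intro i hi hni
      have : w i = 0 := by
        by_contra hne
        exact hni (Finset.mem_filter.mpr ⟨hi, hne⟩)
      simp [this]
    rw [← hx']
    apply Finset.centerMass_mem_convexHull
    · exact fun i hi => hw0 i (Finset.filter_subset _ _ hi)
    · rw [hw1']; norm_num
    · intro i hi
      obtain ⟨hit, hwne⟩ := Finset.mem_filter.mp hi
      refine ⟨hzS i hit, ?_⟩
      rcases mul_eq_zero.mp (hzero i hit) with h1 | h1
      · exact absurd h1 hwne
      · exact h1
  · intro x hx
    refine ⟨convexHull_mono (fun s hs => hs.1) hx, ?_⟩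
    exact lf_eq_on_hull (fun s hs => hs.2) hx

end LF

section Cosmo
variable {V E : Type*} [Fintype V] [Fintype E] [DecidableEq V] [DecidableEq E]
  (ends : E → Sym2 V)

/-- vertex unit vector -/
abbrev Pv (i : V) : (V ⊕ E) → ℝ := Pi.single (Sum.inl i) 1
/-- edge unit vector -/
abbrev Qe (f : E) : (V ⊕ E) → ℝ := Pi.single (Sum.inr f) 1

lemma lfc_vert (c : (V ⊕ E) → ℝ) (i : V) : lfc c (Pv i) = c (Sum.inl i) := by
  simp
lemma lfc_edge (c : (V ⊕ E) → ℝ) (f : E) : lfc c (Qe f) = c (Sum.inr f) := by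
  simp

lemma lfc_g1 (c : (V ⊕ E) → ℝ) (i j : V) (f : E) :
    lfc c (Pv i + Pv j - Qe f) = c (Sum.inl i) + c (Sum.inl j) - c (Sum.inr f) := by
  simp [map_add, map_sub]
lemma lfc_g2 (c : (V ⊕ E) → ℝ) (i j : V) (f : E) :
    lfc c (Pv i - Pv j + Qe f) = c (Sum.inl i) - c (Sum.inl j) + c (Sum.inr f) := by
  simp [map_add, map_sub]
lemma lfc_g3 (c : (V ⊕ E) → ℝ) (i j : V) (f : E) :
    lfc c (-Pv i + Pv j + Qe f) = -c (Sum.inl i) + c (Sum.inl j) + c (Sum.inr f) := by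
  simp [map_add, map_neg]

/-- coefficient vector of the subgraph functional -/
def sgc (A : Finset V) (B : Finset E) : (V ⊕ E) → ℝ :=
  Sum.elim (fun v => if v ∈ A then 1 else 0)
    (fun f => if f ∈ B then 0 else (endpointCount (ends f) A : ℝ))

lemma endpointCount_mk (i j : V) (A : Finset V) :
    endpointCount s(i, j) A = (if i ∈ A then 1 else 0) + (if j ∈ A then 1 else 0) := by
  simp [endpointCount]

lemma subgraphFunctional_eq_lfc (A : Finset V) (B : Finset E) (x : (V ⊕ E) → ℝ) :
    subgraphFunctional ends A B x = lfc (sgc ends A B) x := by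
  have h1 : ∑ v : V, (if v ∈ A then (1:ℝ) else 0) * x (Sum.inl v) = ∑ v ∈ A, x (Sum.inl v) := by
    simp only [ite_mul, one_mul, zero_mul]
    rw [Finset.sum_ite_mem, Finset.univ_inter]
  have h2 : ∑ f : E, (if f ∈ B then (0:ℝ) else (endpointCount (ends f) A : ℝ)) * x (Sum.inr f)
      = ∑ f ∈ Bᶜ, (endpointCount (ends f) A : ℝ) * x (Sum.inr f) := by
    have key : ∀ f : E, (if f ∈ B then (0:ℝ) else (endpointCount (ends f) A : ℝ)) * x (Sum.inr f)
        = if f ∈ Bᶜ then (endpointCount (ends f) A : ℝ) * x (Sum.inr f) else 0 := by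
      intro f; by_cases hf : f ∈ B <;> simp [hf]
    rw [Finset.sum_congr rfl fun f _ => key f, Finset.sum_ite_mem, Finset.univ_inter]
  simp only [subgraphFunctional, lfc, sgc, LinearMap.coe_mk, AddHom.coe_mk,
    Fintype.sum_sum_type, Sum.elim_inl, Sum.elim_inr, h1, h2]

/-- all generators lie on the hyperplane Σ = 1 -/
lemma sum_eq_one_of_mem_vertices {x : (V ⊕ E) → ℝ} (hx : x ∈ cosmoVertices ends) :
    lfc (fun _ => (1 : ℝ)) x = 1 := by
  obtain ⟨f, i, j, hf, h⟩ := hx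
  rcases h with h | h | h <;> subst h <;>
    simp [lfc_g1, lfc_g2, lfc_g3]

lemma sum_eq_one_of_mem_polytope {x : (V ⊕ E) → ℝ} (hx : x ∈ cosmoPolytope ends) :
    lfc (fun _ => (1 : ℝ)) x = 1 :=
  lf_eq_on_hull (fun _ hs => sum_eq_one_of_mem_vertices ends hs) hx

end Cosmo

section Cosmo2
variable {V E : Type*} [Fintype V] [Fintype E] [DecidableEq V] [DecidableEq E]
  (ends : E → Sym2 V)

lemma sym2_rep (s : Sym2 V) : ∃ i j : V, s = s(i, j) := by
  obtain ⟨⟨i, j⟩, h⟩ := Quot.exists_rep s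
  exact ⟨i, j, h.symm⟩

variable {ends} {A : Finset V} {B : Finset E} {i j : V} {f : E}

lemma mem_vert_g1 (hf : ends f = s(i, j)) :
    Pv i + Pv j - Qe f ∈ cosmoVertices ends := ⟨f, i, j, hf, Or.inl rfl⟩
lemma mem_vert_g2 (hf : ends f = s(i, j)) :
    Pv i - Pv j + Qe f ∈ cosmoVertices ends := ⟨f, i, j, hf, Or.inr (Or.inl rfl)⟩
lemma mem_vert_g3 (hf : ends f = s(i, j)) :
    -Pv i + Pv j + Qe f ∈ cosmoVertices ends := ⟨f, i, j, hf, Or.inr (Or.inr rfl)⟩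

lemma sgc_inl (v : V) : sgc ends A B (Sum.inl v) = if v ∈ A then 1 else 0 := rfl

lemma sgc_inr (hf : ends f = s(i, j)) :
    sgc ends A B (Sum.inr f) =
      if f ∈ B then 0 else ((if i ∈ A then 1 else 0) + (if j ∈ A then 1 else 0) : ℝ) := by
  simp only [sgc, Sum.elim_inr, hf, endpointCount_mk]
  split
  · rfl
  · push_cast; split <;> split <;> norm_num

lemma val1_notB (hf : ends f = s(i, j)) (hfB : f ∉ B) :
    lfc (sgc ends A B) (Pv i + Pv j - Qe f) = 0 := by
  rw [lfc_g1, sgc_inl, sgc_inl, sgc_inr hf, if_neg hfB]; ring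

lemma val1_B (hf : ends f = s(i, j)) (hfB : f ∈ B) (hi : i ∈ A) (hj : j ∈ A) :
    lfc (sgc ends A B) (Pv i + Pv j - Qe f) = 2 := by
  rw [lfc_g1, sgc_inl, sgc_inl, sgc_inr hf, if_pos hfB, if_pos hi, if_pos hj]; ring

lemma val2_B (hf : ends f = s(i, j)) (hfB : f ∈ B) (hi : i ∈ A) (hj : j ∈ A) :
    lfc (sgc ends A B) (Pv i - Pv j + Qe f) = 0 := by
  rw [lfc_g2, sgc_inl, sgc_inl, sgc_inr hf, if_pos hfB, if_pos hi, if_pos hj]; ring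

lemma val2_notB (hf : ends f = s(i, j)) (hfB : f ∉ B) :
    lfc (sgc ends A B) (Pv i - Pv j + Qe f) = if i ∈ A then 2 else 0 := by
  rw [lfc_g2, sgc_inl, sgc_inl, sgc_inr hf, if_neg hfB]
  split <;> split <;> norm_num

lemma val3_B (hf : ends f = s(i, j)) (hfB : f ∈ B) (hi : i ∈ A) (hj : j ∈ A) :
    lfc (sgc ends A B) (-Pv i + Pv j + Qe f) = 0 := by
  rw [lfc_g3, sgc_inl, sgc_inl, sgc_inr hf, if_pos hfB, if_pos hi, if_pos hj]; ring

lemma val3_notB (hf : ends f = s(i, j)) (hfB : f ∉ B) :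
    lfc (sgc ends A B) (-Pv i + Pv j + Qe f) = if j ∈ A then 2 else 0 := by
  rw [lfc_g3, sgc_inl, sgc_inl, sgc_inr hf, if_neg hfB]
  split <;> split <;> norm_num

lemma endsB (hB : ∀ g ∈ B, ∀ v ∈ ends g, v ∈ A) (hf : ends f = s(i, j)) (hfB : f ∈ B) :
    i ∈ A ∧ j ∈ A := by
  constructor <;> apply hB f hfB <;> rw [hf]
  · exact Sym2.mem_mk_left i j
  · exact Sym2.mem_mk_right i j

lemma sgc_nonneg_on_vertices (hB : ∀ g ∈ B, ∀ v ∈ ends g, v ∈ A) :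
    ∀ x ∈ cosmoVertices ends, 0 ≤ lfc (sgc ends A B) x := by
  rintro x ⟨f, i, j, hf, h⟩
  by_cases hfB : f ∈ B
  · obtain ⟨hi, hj⟩ := endsB hB hf hfB
    rcases h with h | h | h <;> subst h <;>
      simp [val1_B hf hfB hi hj, val2_B hf hfB hi hj, val3_B hf hfB hi hj]
  · rcases h with h | h | h <;> subst h
    · simp [val1_notB hf hfB]
    · rw [val2_notB hf hfB]; split <;> norm_num
    · rw [val3_notB hf hfB]; split <;> norm_num

end Cosmo2

section Part1
variable {V E : Type*} [Fintype V] [Fintype E] [DecidableEq V] [DecidableEq E]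
  {ends : E → Sym2 V} {A : Finset V} {B : Finset E}

lemma mem_subgraphFace {x : (V ⊕ E) → ℝ} :
    x ∈ subgraphFace ends A B ↔
      x ∈ cosmoPolytope ends ∧ lfc (sgc ends A B) x = 0 := by
  simp [subgraphFace, subgraphFunctional_eq_lfc]

lemma vectorSpan_le_ker {F : Set ((V ⊕ E) → ℝ)} {φ : ((V ⊕ E) → ℝ) →ₗ[ℝ] ℝ} {r : ℝ}
    (h : ∀ x ∈ F, φ x = r) : vectorSpan ℝ F ≤ LinearMap.ker φ := by
  rw [vectorSpan_def]
  rw [Submodule.span_le]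
  rintro d ⟨x, hx, y, hy, rfl⟩
  simp only [SetLike.mem_coe, LinearMap.mem_ker, vsub_eq_sub, map_sub]
  rw [h x hx, h y hy, sub_self]

/-- If two coefficient vectors produce values (1,1) and (t,1), t ≠ 1, at two
coordinates, then the product map is surjective with kernel of dimension n - 2. -/
lemma finrank_ker_pair {φ ψ : ((V ⊕ E) → ℝ) →ₗ[ℝ] ℝ} {k1 k2 : V ⊕ E}
    (h11 : φ (Pi.single k1 1) = 1) (h12 : ψ (Pi.single k1 1) = 1)
    {t : ℝ} (h21 : φ (Pi.single k2 1) = t) (h22 : ψ (Pi.single k2 1) = 1) (ht : t ≠ 1) :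
    Module.finrank ℝ (LinearMap.ker (φ.prod ψ)) =
      Fintype.card V + Fintype.card E - 2 := by
  have hrange : LinearMap.range (φ.prod ψ) = ⊤ := by
    rw [Submodule.eq_top_iff']
    rintro ⟨p, q⟩
    refine ⟨(q - (p - q)/(t - 1)) • (Pi.single k1 1 : (V ⊕ E) → ℝ) + ((p - q)/(t - 1)) • (Pi.single k2 1 : (V ⊕ E) → ℝ), ?_⟩
    have ht' : t - 1 ≠ 0 := sub_ne_zero.mpr ht
    simp only [LinearMap.prod_apply, Function.prod, map_add, map_smul, h11, h12, h21, h22,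
      smul_eq_mul]
    rw [Prod.ext_iff]
    simp only [Prod.smul_mk, smul_eq_mul, Prod.mk_add_mk, Prod.fst, Prod.snd]
    constructor <;> field_simp <;> ring
  have := LinearMap.finrank_range_add_finrank_ker (φ.prod ψ)
  rw [hrange, finrank_top] at this
  have hW : Module.finrank ℝ ((V ⊕ E) → ℝ) = Fintype.card V + Fintype.card E := by
    rw [Module.finrank_pi, Fintype.card_sum]
  have hprod : Module.finrank ℝ (ℝ × ℝ) = 2 := by
    simp [Module.finrank_prod]
  rw [hW, hprod] at this
  omega

lemma finrank_span_singleton_le (x : (V ⊕ E) → ℝ) :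
    Module.finrank ℝ (Submodule.span ℝ {x}) ≤ 1 := by
  by_cases hx : x = 0
  · subst hx
    rw [Submodule.span_zero_singleton]
    simp
  · rw [finrank_span_singleton hx]

lemma finrank_span_pair_le (x y : (V ⊕ E) → ℝ) :
    Module.finrank ℝ (Submodule.span ℝ {x, y}) ≤ 2 := by
  have h : ({x, y} : Set ((V ⊕ E) → ℝ)) = insert x {y} := rfl
  rw [h, Submodule.span_insert]
  have h2 := Submodule.finrank_sup_add_finrank_inf_eq
    (Submodule.span ℝ {x}) (Submodule.span ℝ ({y} : Set ((V ⊕ E) → ℝ)))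
  have := finrank_span_singleton_le (V := V) (E := E) x
  have := finrank_span_singleton_le (V := V) (E := E) y
  omega

end Part1

section Part1Main
variable {V E : Type*} [Fintype V] [Fintype E] [DecidableEq V] [DecidableEq E]
  {ends : E → Sym2 V}

theorem part1_facet (hiso : ∀ v : V, ∃ f : E, v ∈ ends f)
    {A : Finset V} {B : Finset E} (h : IsConnectedSubgraph ends A B) :
    (∀ x ∈ cosmoPolytope ends, 0 ≤ subgraphFunctional ends A B x) ∧
      IsFacetOf (cosmoPolytope ends) (subgraphFace ends A B) := by
  obtain ⟨hA, hB, hconnAB⟩ := h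
  have hnonnegV := sgc_nonneg_on_vertices (A := A) (B := B) (ends := ends) hB
  have hnonneg : ∀ x ∈ cosmoPolytope ends, 0 ≤ lfc (sgc ends A B) x :=
    fun x hx => lf_nonneg_on_hull hnonnegV hx
  obtain ⟨v0, hv0⟩ := hA
  obtain ⟨f0, hvf0⟩ := hiso v0
  obtain ⟨i0, j0, hf0⟩ := sym2_rep (ends f0)
  have hv0ij : v0 = i0 ∨ v0 = j0 := by rw [hf0] at hvf0; exact Sym2.mem_iff.mp hvf0
  have hmemF : ∀ x : (V ⊕ E) → ℝ, x ∈ subgraphFace ends A B ↔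
      x ∈ cosmoPolytope ends ∧ lfc (sgc ends A B) x = 0 := fun x => mem_subgraphFace
  -- a tight generator x0
  have hx0ex : ∃ x0 ∈ cosmoVertices ends, lfc (sgc ends A B) x0 = 0 := by
    by_cases hf0B : f0 ∈ B
    · obtain ⟨hi, hj⟩ := endsB hB hf0 hf0B
      exact ⟨_, mem_vert_g2 hf0, val2_B hf0 hf0B hi hj⟩
    · exact ⟨_, mem_vert_g1 hf0, val1_notB hf0 hf0B⟩
  obtain ⟨x0, hx0V, hx0t⟩ := hx0ex
  have hx0P : x0 ∈ cosmoPolytope ends := subset_convexHull ℝ _ hx0V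
  have hx0F : x0 ∈ subgraphFace ends A B := (hmemF x0).mpr ⟨hx0P, hx0t⟩
  -- a generator of value 2
  have hp2ex : ∃ p ∈ cosmoVertices ends, lfc (sgc ends A B) p = 2 := by
    by_cases hf0B : f0 ∈ B
    · obtain ⟨hi, hj⟩ := endsB hB hf0 hf0B
      exact ⟨_, mem_vert_g1 hf0, val1_B hf0 hf0B hi hj⟩
    · rcases hv0ij with hh | hh
      · exact ⟨_, mem_vert_g2 hf0, by rw [val2_notB hf0 hf0B, if_pos (hh ▸ hv0)]⟩
      · exact ⟨_, mem_vert_g3 hf0, by rw [val3_notB hf0 hf0B, if_pos (hh ▸ hv0)]⟩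
  obtain ⟨p2, hp2V, hp2t⟩ := hp2ex
  have hFneP : subgraphFace ends A B ≠ cosmoPolytope ends := by
    intro hEq
    have hmem : p2 ∈ subgraphFace ends A B := hEq ▸ (subset_convexHull ℝ _ hp2V)
    have h0 := ((hmemF p2).mp hmem).2
    rw [hp2t] at h0
    norm_num at h0
  have hexp : IsExposed ℝ (cosmoPolytope ends) (subgraphFace ends A B) := by
    intro _
    refine ⟨-(LinearMap.toContinuousLinearMap (lfc (sgc ends A B))), ?_⟩
    ext x
    rw [hmemF x]
    simp only [Set.mem_setOf_eq, ContinuousLinearMap.neg_apply,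
      LinearMap.coe_toContinuousLinearMap', neg_le_neg_iff]
    constructor
    · rintro ⟨hxP, hxt⟩
      exact ⟨hxP, fun y hy => by rw [hxt]; exact hnonneg y hy⟩
    · rintro ⟨hxP, hle⟩
      refine ⟨hxP, le_antisymm ?_ (hnonneg x hxP)⟩
      have := hle x0 hx0P
      rw [hx0t] at this
      exact this
  -- dimension: upper bound
  have hσF : ∀ x ∈ subgraphFace ends A B, lfc (fun _ => (1:ℝ)) x = 1 :=
    fun x hx => sum_eq_one_of_mem_polytope ends ((hmemF x).mp hx).1
  have hφF : ∀ x ∈ subgraphFace ends A B, lfc (sgc ends A B) x = 0 :=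
    fun x hx => ((hmemF x).mp hx).2
  have hDle : vectorSpan ℝ (subgraphFace ends A B) ≤
      LinearMap.ker ((lfc (sgc ends A B)).prod (lfc fun _ => (1:ℝ))) := by
    rw [LinearMap.ker_prod]
    exact le_inf (vectorSpan_le_ker hφF) (vectorSpan_le_ker hσF)
  have hσ1 : ∀ k : V ⊕ E, lfc (fun _ => (1:ℝ)) (Pi.single k 1) = 1 := by
    intro k; rw [lfc_single]; norm_num
  have hcoord : ∃ (k2 : V ⊕ E) (t : ℝ),
      lfc (sgc ends A B) (Pi.single k2 1) = t ∧ t ≠ 1 := by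
    by_cases hf0B : f0 ∈ B
    · exact ⟨Sum.inr f0, 0, by rw [lfc_single, sgc_inr hf0, if_pos hf0B, mul_one], by norm_num⟩
    · by_cases hi : i0 ∈ A
      · by_cases hj : j0 ∈ A
        · refine ⟨Sum.inr f0, 2, ?_, by norm_num⟩
          rw [lfc_single, sgc_inr hf0, if_neg hf0B, if_pos hi, if_pos hj]; norm_num
        · exact ⟨Sum.inl j0, 0, by rw [lfc_single, sgc_inl, if_neg hj, mul_one], by norm_num⟩
      · exact ⟨Sum.inl i0, 0, by rw [lfc_single, sgc_inl, if_neg hi, mul_one], by norm_num⟩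
  obtain ⟨k2, t, hk2, ht⟩ := hcoord
  have hk1 : lfc (sgc ends A B) (Pi.single (Sum.inl v0) 1) = 1 := by
    rw [lfc_single, sgc_inl, if_pos hv0, mul_one]
  have hker := finrank_ker_pair hk1 (hσ1 (Sum.inl v0)) hk2 (hσ1 k2) ht
  have hupper : Module.finrank ℝ (vectorSpan ℝ (subgraphFace ends A B)) ≤
      Fintype.card V + Fintype.card E - 2 :=
    le_trans (Submodule.finrank_mono hDle) (le_of_eq hker)
  -- dimension: lower bound via spanning
  have hreach : ∀ u w : V,
      Relation.ReflTransGen (fun a b => ∃ g ∈ B, ends g = s(a, b)) u w →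
      Pv u - Pv w ∈ vectorSpan ℝ (subgraphFace ends A B) := by
    intro u w hr
    induction hr with
    | refl => rw [sub_self]; exact Submodule.zero_mem _
    | @tail b c hab hbc ih =>
      obtain ⟨g, hgB, hg⟩ := hbc
      obtain ⟨hbA, hcA⟩ := endsB hB hg hgB
      have hy : (Pv b - Pv c + Qe g) ∈ subgraphFace ends A B :=
        (hmemF _).mpr ⟨subset_convexHull ℝ _ (mem_vert_g2 hg), val2_B hg hgB hbA hcA⟩
      have hz : (-Pv b + Pv c + Qe g) ∈ subgraphFace ends A B :=
        (hmemF _).mpr ⟨subset_convexHull ℝ _ (mem_vert_g3 hg), val3_B hg hgB hbA hcA⟩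
      have hd := vsub_mem_vectorSpan ℝ hy hz
      have he : Pv b - Pv c = (2⁻¹ : ℝ) • ((Pv b - Pv c + Qe g) -ᵥ (-Pv b + Pv c + Qe g)) := by
        rw [vsub_eq_sub]; ext k; simp only [Pi.smul_apply, Pi.sub_apply, Pi.add_apply,
          Pi.neg_apply, smul_eq_mul]; ring
      have hbc' : Pv b - Pv c ∈ vectorSpan ℝ (subgraphFace ends A B) := by
        rw [he]; exact Submodule.smul_mem _ _ hd
      have huw : Pv u - Pv c = ((Pv u - Pv b) + (Pv b - Pv c) : (V ⊕ E) → ℝ) := by abel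
      rw [huw]; exact Submodule.add_mem _ ih hbc'
  set D := vectorSpan ℝ (subgraphFace ends A B) with hD
  set sp := Submodule.span ℝ ({x0, Pv v0} : Set ((V ⊕ E) → ℝ)) with hsp
  have hx0M : x0 ∈ D ⊔ sp :=
    Submodule.mem_sup_right (Submodule.subset_span (Set.mem_insert _ _))
  have hPv0M : Pv v0 ∈ D ⊔ sp :=
    Submodule.mem_sup_right (Submodule.subset_span (Set.mem_insert_of_mem _ rfl))
  have hFM : ∀ y ∈ subgraphFace ends A B, y ∈ D ⊔ sp := by
    intro y hy
    have hsub : y - x0 ∈ D := by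
      have := vsub_mem_vectorSpan ℝ hy hx0F
      rwa [vsub_eq_sub] at this
    have h' : y = (y - x0) + x0 := by abel
    rw [h']; exact Submodule.add_mem _ (Submodule.mem_sup_left hsub) hx0M
  have hPA : ∀ v ∈ A, Pv v ∈ D ⊔ sp := by
    intro v hv
    have hsub : Pv v - Pv v0 ∈ D := hreach v v0 (hconnAB v hv v0 hv0)
    have h' : Pv v = ((Pv v - Pv v0) + Pv v0 : (V ⊕ E) → ℝ) := by abel
    rw [h']; exact Submodule.add_mem _ (Submodule.mem_sup_left hsub) hPv0M
  have hEdge : ∀ f, f ∉ B → ∀ i j, ends f = s(i, j) →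
      Qe f ∈ D ⊔ sp ∧ Pv i ∈ D ⊔ sp ∧ Pv j ∈ D ⊔ sp := by
    intro f hfB i j hf
    have hg1 : (Pv i + Pv j - Qe f) ∈ subgraphFace ends A B :=
      (hmemF _).mpr ⟨subset_convexHull ℝ _ (mem_vert_g1 hf), val1_notB hf hfB⟩
    have hg1M : (Pv i + Pv j - Qe f) ∈ D ⊔ sp := hFM _ hg1
    by_cases hi : i ∈ A <;> by_cases hj : j ∈ A
    · have hQ : Qe f ∈ D ⊔ sp := by
        have h' : Qe f = Pv i + Pv j - (Pv i + Pv j - Qe f) := by abel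
        rw [h']
        exact Submodule.sub_mem _ (Submodule.add_mem _ (hPA i hi) (hPA j hj)) hg1M
      exact ⟨hQ, hPA i hi, hPA j hj⟩
    · have hz : (-Pv i + Pv j + Qe f) ∈ subgraphFace ends A B :=
        (hmemF _).mpr ⟨subset_convexHull ℝ _ (mem_vert_g3 hf),
          by rw [val3_notB hf hfB, if_neg hj]⟩
      have hd : Pv i - Qe f ∈ D := by
        have h1 := vsub_mem_vectorSpan ℝ hg1 hz
        have h2 : Pv i - Qe f =
            (2⁻¹ : ℝ) • ((Pv i + Pv j - Qe f) -ᵥ (-Pv i + Pv j + Qe f)) := by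
          rw [vsub_eq_sub]; ext k; simp only [Pi.smul_apply, Pi.sub_apply, Pi.add_apply,
            Pi.neg_apply, smul_eq_mul]; ring
        rw [h2]; exact Submodule.smul_mem _ _ h1
      have hQ : Qe f ∈ D ⊔ sp := by
        have h' : Qe f = Pv i - (Pv i - Qe f) := by abel
        rw [h']; exact Submodule.sub_mem _ (hPA i hi) (Submodule.mem_sup_left hd)
      have hPj : Pv j ∈ D ⊔ sp := by
        have h' : Pv j = (Pv i + Pv j - Qe f) - Pv i + Qe f := by abel
        rw [h']; exact Submodule.add_mem _ (Submodule.sub_mem _ hg1M (hPA i hi)) hQ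
      exact ⟨hQ, hPA i hi, hPj⟩
    · have hy : (Pv i - Pv j + Qe f) ∈ subgraphFace ends A B :=
        (hmemF _).mpr ⟨subset_convexHull ℝ _ (mem_vert_g2 hf),
          by rw [val2_notB hf hfB, if_neg hi]⟩
      have hd : Pv j - Qe f ∈ D := by
        have h1 := vsub_mem_vectorSpan ℝ hg1 hy
        have h2 : Pv j - Qe f =
            (2⁻¹ : ℝ) • ((Pv i + Pv j - Qe f) -ᵥ (Pv i - Pv j + Qe f)) := by
          rw [vsub_eq_sub]; ext k; simp only [Pi.smul_apply, Pi.sub_apply, Pi.add_apply,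
            Pi.neg_apply, smul_eq_mul]; ring
        rw [h2]; exact Submodule.smul_mem _ _ h1
      have hQ : Qe f ∈ D ⊔ sp := by
        have h' : Qe f = Pv j - (Pv j - Qe f) := by abel
        rw [h']; exact Submodule.sub_mem _ (hPA j hj) (Submodule.mem_sup_left hd)
      have hPi : Pv i ∈ D ⊔ sp := by
        have h' : Pv i = (Pv i + Pv j - Qe f) - Pv j + Qe f := by abel
        rw [h']; exact Submodule.add_mem _ (Submodule.sub_mem _ hg1M (hPA j hj)) hQ
      exact ⟨hQ, hPi, hPA j hj⟩
    · have hy : (Pv i - Pv j + Qe f) ∈ subgraphFace ends A B :=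
        (hmemF _).mpr ⟨subset_convexHull ℝ _ (mem_vert_g2 hf),
          by rw [val2_notB hf hfB, if_neg hi]⟩
      have hz : (-Pv i + Pv j + Qe f) ∈ subgraphFace ends A B :=
        (hmemF _).mpr ⟨subset_convexHull ℝ _ (mem_vert_g3 hf),
          by rw [val3_notB hf hfB, if_neg hj]⟩
      have hd1 : Pv i - Pv j ∈ D := by
        have h1 := vsub_mem_vectorSpan ℝ hy hz
        have h2 : Pv i - Pv j =
            (2⁻¹ : ℝ) • ((Pv i - Pv j + Qe f) -ᵥ (-Pv i + Pv j + Qe f)) := by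
          rw [vsub_eq_sub]; ext k; simp only [Pi.smul_apply, Pi.sub_apply, Pi.add_apply,
            Pi.neg_apply, smul_eq_mul]; ring
        rw [h2]; exact Submodule.smul_mem _ _ h1
      have hd2 : Pv j - Qe f ∈ D := by
        have h1 := vsub_mem_vectorSpan ℝ hg1 hy
        have h2 : Pv j - Qe f =
            (2⁻¹ : ℝ) • ((Pv i + Pv j - Qe f) -ᵥ (Pv i - Pv j + Qe f)) := by
          rw [vsub_eq_sub]; ext k; simp only [Pi.smul_apply, Pi.sub_apply, Pi.add_apply,
            Pi.neg_apply, smul_eq_mul]; ring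
        rw [h2]; exact Submodule.smul_mem _ _ h1
      have hPj : Pv j ∈ D ⊔ sp := by
        have h' : Pv j = (Pv i + Pv j - Qe f) - (Pv i - Pv j) - (Pv j - Qe f) := by abel
        rw [h']
        exact Submodule.sub_mem _ (Submodule.sub_mem _ hg1M (Submodule.mem_sup_left hd1))
          (Submodule.mem_sup_left hd2)
      have hPi : Pv i ∈ D ⊔ sp := by
        have h' : Pv i = ((Pv i - Pv j) + Pv j : (V ⊕ E) → ℝ) := by abel
        rw [h']; exact Submodule.add_mem _ (Submodule.mem_sup_left hd1) hPj
      have hQ : Qe f ∈ D ⊔ sp := by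
        have h' : Qe f = Pv j - (Pv j - Qe f) := by abel
        rw [h']; exact Submodule.sub_mem _ hPj (Submodule.mem_sup_left hd2)
      exact ⟨hQ, hPi, hPj⟩
  have hQB : ∀ f ∈ B, Qe f ∈ D ⊔ sp := by
    intro f hfB
    obtain ⟨i, j, hf⟩ := sym2_rep (ends f)
    obtain ⟨hi, hj⟩ := endsB hB hf hfB
    have hy : (Pv i - Pv j + Qe f) ∈ subgraphFace ends A B :=
      (hmemF _).mpr ⟨subset_convexHull ℝ _ (mem_vert_g2 hf), val2_B hf hfB hi hj⟩
    have h' : Qe f = (Pv i - Pv j + Qe f) - Pv i + Pv j := by abel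
    rw [h']
    exact Submodule.add_mem _ (Submodule.sub_mem _ (hFM _ hy) (hPA i hi)) (hPA j hj)
  have hsingle : ∀ k : V ⊕ E, (Pi.single k 1 : (V ⊕ E) → ℝ) ∈ D ⊔ sp := by
    rintro (v | f)
    · by_cases hv : v ∈ A
      · exact hPA v hv
      · obtain ⟨f, hvf⟩ := hiso v
        obtain ⟨i, j, hf⟩ := sym2_rep (ends f)
        have hfB : f ∉ B := fun hfB => hv (hB f hfB v hvf)
        have hij := hEdge f hfB i j hf
        have hvij : v = i ∨ v = j := by rw [hf] at hvf; exact Sym2.mem_iff.mp hvf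
        rcases hvij with rfl | rfl
        · exact hij.2.1
        · exact hij.2.2
    · by_cases hfB : f ∈ B
      · exact hQB f hfB
      · obtain ⟨i, j, hf⟩ := sym2_rep (ends f)
        exact (hEdge f hfB i j hf).1
  have hMtop : D ⊔ sp = ⊤ := by
    rw [eq_top_iff, ← (Pi.basisFun ℝ (V ⊕ E)).span_eq, Submodule.span_le]
    rintro x ⟨k, rfl⟩
    rw [Pi.basisFun_apply]
    exact hsingle k
  have hsup := Submodule.finrank_sup_add_finrank_inf_eq D sp
  have hpair : Module.finrank ℝ sp ≤ 2 := finrank_span_pair_le x0 (Pv v0)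
  have htopr : Module.finrank ℝ (D ⊔ sp : Submodule ℝ ((V ⊕ E) → ℝ)) =
      Fintype.card V + Fintype.card E := by
    rw [hMtop, finrank_top, Module.finrank_pi, Fintype.card_sum]
  have hcard : 2 ≤ Fintype.card V + Fintype.card E := by
    have h1 : 0 < Fintype.card V := Fintype.card_pos_iff.mpr ⟨v0⟩
    have h2 : 0 < Fintype.card E := Fintype.card_pos_iff.mpr ⟨f0⟩
    omega
  have hdim : Module.finrank ℝ D = Fintype.card V + Fintype.card E - 2 := by omega
  exact ⟨fun x hx => by rw [subgraphFunctional_eq_lfc]; exact hnonneg x hx,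
    ⟨x0, hx0F⟩, hexp, hFneP, hdim⟩

end Part1Main

section Ann
variable {V E : Type*} [Fintype V] [Fintype E] [DecidableEq V] [DecidableEq E]

lemma lfc_neg (c : (V ⊕ E) → ℝ) (x : (V ⊕ E) → ℝ) : lfc (-c) x = -(lfc c x) := by
  simp [lfc, Finset.sum_neg_distrib]

lemma mem_ann_of_const {F : Set ((V ⊕ E) → ℝ)} {φ : ((V ⊕ E) → ℝ) →ₗ[ℝ] ℝ} {r : ℝ}
    (h : ∀ x ∈ F, φ x = r) : φ ∈ (vectorSpan ℝ F).dualAnnihilator := by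
  rw [Submodule.mem_dualAnnihilator]
  intro w hw
  exact LinearMap.mem_ker.mp (vectorSpan_le_ker h hw)

lemma finrank_dualAnn (D : Submodule ℝ ((V ⊕ E) → ℝ)) :
    Module.finrank ℝ D.dualAnnihilator =
      Module.finrank ℝ ((V ⊕ E) → ℝ) - Module.finrank ℝ D := by
  have h1 : Module.finrank ℝ (((V ⊕ E) → ℝ) ⧸ D) = Module.finrank ℝ D.dualAnnihilator :=
    (Subspace.quotEquivAnnihilator D).finrank_eq
  have h2 := Submodule.finrank_quotient_add_finrank D
  omega

lemma finrank_span_pair_eq_two {M : Type*} [AddCommGroup M] [Module ℝ M] {x y : M}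
    (h : LinearIndependent ℝ ![x, y]) :
    Module.finrank ℝ (Submodule.span ℝ ({x, y} : Set M)) = 2 := by
  have h1 := finrank_span_eq_card h
  have h2 : Set.range ![x, y] = {x, y} := by
    simp [Matrix.range_cons, Matrix.range_empty, Set.pair_comm y x]
  rw [h2] at h1
  simpa using h1

lemma single_eq_smul (k : V ⊕ E) (r : ℝ) :
    (Pi.single k r : (V ⊕ E) → ℝ) = r • (Pi.single k 1 : (V ⊕ E) → ℝ) := by
  ext m
  by_cases hm : m = k <;> simp [Pi.single_apply, hm]

lemma lin_rep (l : ((V ⊕ E) → ℝ) →ₗ[ℝ] ℝ) (x : (V ⊕ E) → ℝ) :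
    l x = ∑ k, x k * l (Pi.single k 1) := by
  conv_lhs => rw [← Finset.univ_sum_single x]
  rw [map_sum]
  exact Finset.sum_congr rfl fun k _ => by
    rw [single_eq_smul k (x k), map_smul, smul_eq_mul]

lemma clm_rep (l : ((V ⊕ E) → ℝ) →L[ℝ] ℝ) (x : (V ⊕ E) → ℝ) :
    l x = ∑ k, x k * l (Pi.single k 1) := lin_rep (l : ((V ⊕ E) → ℝ) →ₗ[ℝ] ℝ) x

lemma epc_two {ends : E → Sym2 V} {A : Finset V} {f : E}
    (h : ∀ v ∈ ends f, v ∈ A) : endpointCount (ends f) A = 2 := by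
  obtain ⟨i, j, hf⟩ := sym2_rep (ends f)
  have hi : i ∈ A := h i (by rw [hf]; exact Sym2.mem_mk_left i j)
  have hj : j ∈ A := h j (by rw [hf]; exact Sym2.mem_mk_right i j)
  rw [hf, endpointCount_mk, if_pos hi, if_pos hj]

end Ann

section Vanish
variable {V E : Type*} [Fintype V] [Fintype E] [DecidableEq V] [DecidableEq E]
  {ends : E → Sym2 V} {c : (V ⊕ E) → ℝ} {A : Finset V} {B : Finset E}

/-- If the tightness structure of `c` is compatible with the subgraph `(A, B)`, then the
subgraph functional vanishes on every `c`-tight generator. -/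
lemma vanish_on_tight
    (hBA : ∀ f ∈ B, ∀ v ∈ ends f, v ∈ A)
    (hx : ∀ f i j, ends f = s(i, j) →
      c (Sum.inl i) + c (Sum.inl j) - c (Sum.inr f) = 0 → f ∉ B)
    (hy : ∀ f i j, ends f = s(i, j) →
      c (Sum.inl i) - c (Sum.inl j) + c (Sum.inr f) = 0 → f ∉ B → i ∉ A)
    (hz : ∀ f i j, ends f = s(i, j) →
      -c (Sum.inl i) + c (Sum.inl j) + c (Sum.inr f) = 0 → f ∉ B → j ∉ A) :
    ∀ s ∈ cosmoVertices ends, lfc c s = 0 → lfc (sgc ends A B) s = 0 := by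
  rintro x ⟨f, i, j, hf, hform⟩ ht
  rcases hform with rfl | rfl | rfl
  · rw [lfc_g1] at ht
    exact val1_notB hf (hx f i j hf ht)
  · rw [lfc_g2] at ht
    by_cases hfB : f ∈ B
    · obtain ⟨hi, hj⟩ := endsB hBA hf hfB
      exact val2_B hf hfB hi hj
    · rw [val2_notB hf hfB, if_neg (hy f i j hf ht hfB)]
  · rw [lfc_g3] at ht
    by_cases hfB : f ∈ B
    · obtain ⟨hi, hj⟩ := endsB hBA hf hfB
      exact val3_B hf hfB hi hj
    · rw [val3_notB hf hfB, if_neg (hz f i j hf ht hfB)]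

end Vanish

section Part2
variable {V E : Type*} [Fintype V] [Fintype E] [DecidableEq V] [DecidableEq E]
  {ends : E → Sym2 V}

set_option maxHeartbeats 2000000 in
theorem part2_facet (hiso : ∀ v : V, ∃ f : E, v ∈ ends f)
    (F : Set ((V ⊕ E) → ℝ)) (hfacet : IsFacetOf (cosmoPolytope ends) F) :
    ∃! AB : Finset V × Finset E,
      IsConnectedSubgraph ends AB.1 AB.2 ∧ F = subgraphFace ends AB.1 AB.2 := by
  classical
  obtain ⟨hne, hexp, hneP, hdim⟩ := hfacet
  obtain ⟨x0, hx0F⟩ := hne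
  obtain ⟨l, hl⟩ := hexp ⟨x0, hx0F⟩
  have hx0P : x0 ∈ cosmoPolytope ends := by rw [hl] at hx0F; exact hx0F.1
  have hmax : ∀ y ∈ cosmoPolytope ends, l y ≤ l x0 := by rw [hl] at hx0F; exact hx0F.2
  set c : (V ⊕ E) → ℝ := fun k => l x0 - l (Pi.single k 1) with hc
  have hσsum : ∀ x : (V ⊕ E) → ℝ, lfc (fun _ => (1:ℝ)) x = ∑ k, x k := by
    intro x; simp [lfc]
  have hφx : ∀ x : (V ⊕ E) → ℝ, lfc c x = l x0 * lfc (fun _ => (1:ℝ)) x - l x := by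
    intro x
    rw [hσsum, clm_rep l x, Finset.mul_sum, ← Finset.sum_sub_distrib]
    simp only [lfc, LinearMap.coe_mk, AddHom.coe_mk, hc]
    exact Finset.sum_congr rfl fun k _ => by ring
  have hφP : ∀ x ∈ cosmoPolytope ends, lfc c x = l x0 - l x := by
    intro x hx
    rw [hφx, sum_eq_one_of_mem_polytope ends hx, mul_one]
  have hFeq : F = {x ∈ cosmoPolytope ends | lfc c x = 0} := by
    rw [hl]; ext x
    simp only [Set.mem_setOf_eq]
    constructor
    · rintro ⟨hxP, hxmax⟩
      refine ⟨hxP, ?_⟩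
      rw [hφP x hxP]
      have h1 := hxmax x0 hx0P
      have h2 := hmax x hxP
      linarith
    · rintro ⟨hxP, hx0'⟩
      rw [hφP x hxP] at hx0'
      exact ⟨hxP, fun y hy => by have := hmax y hy; linarith⟩
  have hFP : F ⊆ cosmoPolytope ends := by rw [hFeq]; exact fun x hx => hx.1
  have hgen : ∀ s ∈ cosmoVertices ends, 0 ≤ lfc c s := by
    intro s hs
    rw [hφP s (subset_convexHull ℝ _ hs)]
    have := hmax s (subset_convexHull ℝ _ hs)
    linarith
  have hnonneg : ∀ x ∈ cosmoPolytope ends, 0 ≤ lfc c x :=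
    fun x hx => lf_nonneg_on_hull hgen hx
  have hx0t : lfc c x0 = 0 := by
    have := hFeq ▸ hx0F; exact this.2
  -- tight set and hull description
  have hFT : F = convexHull ℝ {s ∈ cosmoVertices ends | lfc c s = 0} := by
    rw [hFeq, cosmoPolytope, face_eq_hull hgen]
  -- basic inequalities
  have hineq : ∀ f i j, ends f = s(i, j) →
      0 ≤ c (Sum.inl i) + c (Sum.inl j) - c (Sum.inr f) ∧
      0 ≤ c (Sum.inl i) - c (Sum.inl j) + c (Sum.inr f) ∧
      0 ≤ -c (Sum.inl i) + c (Sum.inl j) + c (Sum.inr f) := by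
    intro f i j hf
    refine ⟨?_, ?_, ?_⟩
    · have := hgen _ (mem_vert_g1 hf); rwa [lfc_g1] at this
    · have := hgen _ (mem_vert_g2 hf); rwa [lfc_g2] at this
    · have := hgen _ (mem_vert_g3 hf); rwa [lfc_g3] at this
  have hSne : (cosmoVertices ends).Nonempty := by
    by_contra hS
    rw [Set.not_nonempty_iff_eq_empty] at hS
    have hPe : cosmoPolytope ends = ∅ := by rw [cosmoPolytope, hS, convexHull_empty]
    rw [hPe] at hx0P; exact hx0P
  obtain ⟨s0, hs0⟩ := hSne
  obtain ⟨f0, i0, j0, hf0, -⟩ := hs0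
  have hn2 : 2 ≤ Fintype.card V + Fintype.card E := by
    have h1 : 0 < Fintype.card V := Fintype.card_pos_iff.mpr ⟨i0⟩
    have h2 : 0 < Fintype.card E := Fintype.card_pos_iff.mpr ⟨f0⟩
    omega
  have hb0 : ∀ f : E, 0 ≤ c (Sum.inr f) := by
    intro f; obtain ⟨i, j, hf⟩ := sym2_rep (ends f)
    obtain ⟨-, h2, h3⟩ := hineq f i j hf; linarith
  have ha0 : ∀ v : V, 0 ≤ c (Sum.inl v) := by
    intro v
    obtain ⟨f, hvf⟩ := hiso v
    obtain ⟨i, j, hf⟩ := sym2_rep (ends f)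
    have hv : v = i ∨ v = j := by rw [hf] at hvf; exact Sym2.mem_iff.mp hvf
    obtain ⟨h1, h2, h3⟩ := hineq f i j hf
    rcases hv with rfl | rfl
    · linarith
    · linarith
  have hcne : lfc c ≠ 0 := by
    intro h0
    apply hneP
    refine hFeq.trans ?_
    ext x
    simp only [Set.mem_setOf_eq, h0, LinearMap.zero_apply, and_true]
  have hσann : lfc (fun _ => (1:ℝ)) ∈ (vectorSpan ℝ F).dualAnnihilator :=
    mem_ann_of_const (fun x hx => sum_eq_one_of_mem_polytope ends (hFP hx))
  have hcann : lfc c ∈ (vectorSpan ℝ F).dualAnnihilator :=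
    mem_ann_of_const (fun x hx => by rw [hFeq] at hx; exact hx.2)
  have hindep : LinearIndependent ℝ ![lfc (fun _ => (1:ℝ)), lfc c] := by
    rw [LinearIndependent.pair_iff]
    intro s t hst
    have h1 := LinearMap.congr_fun hst x0
    simp only [LinearMap.add_apply, LinearMap.smul_apply, smul_eq_mul,
      LinearMap.zero_apply] at h1
    rw [hx0t, sum_eq_one_of_mem_polytope ends hx0P] at h1
    have hs : s = 0 := by linarith
    subst hs
    simp only [zero_smul, zero_add] at hst
    rcases smul_eq_zero.mp hst with h | h
    · exact ⟨rfl, h⟩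
    · exact absurd h hcne
  have hannr : Module.finrank ℝ ((vectorSpan ℝ F).dualAnnihilator) = 2 := by
    rw [finrank_dualAnn, hdim, Module.finrank_pi, Fintype.card_sum]; omega
  have hann : Submodule.span ℝ {lfc (fun _ => (1:ℝ)), lfc c} =
      (vectorSpan ℝ F).dualAnnihilator := by
    apply Submodule.eq_of_le_of_finrank_le
    · rw [Submodule.span_le]
      exact Set.insert_subset_iff.mpr ⟨hσann, Set.singleton_subset_iff.mpr hcann⟩
    · rw [hannr, finrank_span_pair_eq_two hindep]
  have hspanmem : ∀ ψ : ((V ⊕ E) → ℝ) →ₗ[ℝ] ℝ, (∀ x ∈ F, ψ x = 0) →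
      ∃ t : ℝ, ψ = t • lfc c := by
    intro ψ hψ
    have hm : ψ ∈ Submodule.span ℝ {lfc (fun _ => (1:ℝ)), lfc c} :=
      hann ▸ mem_ann_of_const hψ
    obtain ⟨s, t, hst⟩ := Submodule.mem_span_pair.mp hm
    have h1 := LinearMap.congr_fun hst x0
    simp only [LinearMap.add_apply, LinearMap.smul_apply, smul_eq_mul] at h1
    rw [hx0t, sum_eq_one_of_mem_polytope ends hx0P, hψ x0 hx0F] at h1
    have hs : s = 0 := by linarith
    subst hs
    rw [zero_smul, zero_add] at hst
    exact ⟨t, hst.symm⟩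
  have hvanishF : ∀ (A : Finset V) (B : Finset E),
      (∀ s ∈ cosmoVertices ends, lfc c s = 0 → lfc (sgc ends A B) s = 0) →
      ∀ x ∈ F, lfc (sgc ends A B) x = 0 := by
    intro A B h x hx
    rw [hFT] at hx
    exact lf_eq_on_hull (fun s hs => h s hs.1 hs.2) hx
  -- the key rigidity lemma
  have hyt : ∀ f i j, ends f = s(i, j) →
      c (Sum.inl i) - c (Sum.inl j) + c (Sum.inr f) = 0 → 0 < c (Sum.inl i) →
      c (Sum.inl j) = c (Sum.inl i) ∧ c (Sum.inr f) = 0 := by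
    intro f i j hf htight hai
    obtain ⟨h1, h2, h3⟩ := hineq f i j hf
    have haj : c (Sum.inl i) ≤ c (Sum.inl j) := by linarith
    by_cases heq : c (Sum.inl j) = c (Sum.inl i)
    · refine ⟨heq, ?_⟩; rw [heq] at htight; linarith
    exfalso
    have hlt : c (Sum.inl i) < c (Sum.inl j) := lt_of_le_of_ne haj (fun h => heq h.symm)
    set At : Finset V := Finset.univ.filter (fun v => c (Sum.inl i) < c (Sum.inl v)) with hAt
    set Bt : Finset E := Finset.univ.filter (fun g => (∀ v ∈ ends g, v ∈ At) ∧
      ¬∃ u w, ends g = s(u, w) ∧ c (Sum.inl u) + c (Sum.inl w) - c (Sum.inr g) = 0) with hBt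
    have hmemAt : ∀ v, v ∈ At ↔ c (Sum.inl i) < c (Sum.inl v) := by
      intro v; rw [hAt, Finset.mem_filter]; simp
    have hmemBt : ∀ g, g ∈ Bt ↔ ((∀ v ∈ ends g, v ∈ At) ∧
        ¬∃ u w, ends g = s(u, w) ∧ c (Sum.inl u) + c (Sum.inl w) - c (Sum.inr g) = 0) := by
      intro g; rw [hBt, Finset.mem_filter]
      simp only [Finset.mem_univ, true_and]
    have hxcond : ∀ g u w, ends g = s(u, w) →
        c (Sum.inl u) + c (Sum.inl w) - c (Sum.inr g) = 0 → g ∉ Bt := by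
      intro g u w hg ht hgB
      exact (((hmemBt g).mp hgB).2) ⟨u, w, hg, ht⟩
    have hycond : ∀ g u w, ends g = s(u, w) →
        c (Sum.inl u) - c (Sum.inl w) + c (Sum.inr g) = 0 → g ∉ Bt → u ∉ At := by
      intro g u w hg ht hgB hu
      have hu' := (hmemAt u).mp hu
      by_cases hw : w ∈ At
      · have hends : ∀ v ∈ ends g, v ∈ At := by
          intro v hv; rw [hg] at hv
          rcases Sym2.mem_iff.mp hv with rfl | rfl
          exacts [hu, hw]
        have hex : ∃ u2 w2, ends g = s(u2, w2) ∧
            c (Sum.inl u2) + c (Sum.inl w2) - c (Sum.inr g) = 0 := by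
          by_contra hnex
          exact hgB ((hmemBt g).mpr ⟨hends, hnex⟩)
        obtain ⟨u2, w2, hg2, ht2⟩ := hex
        have hsum : c (Sum.inl u2) + c (Sum.inl w2) = c (Sum.inl u) + c (Sum.inl w) := by
          rcases Sym2.eq_iff.mp (hg.symm.trans hg2) with ⟨rfl, rfl⟩ | ⟨rfl, rfl⟩
          · rfl
          · ring
        rw [hsum] at ht2
        linarith
      · have hw' : ¬ c (Sum.inl i) < c (Sum.inl w) := fun h => hw ((hmemAt w).mpr h)
        push_neg at hw'
        have := hb0 g
        linarith
    have hzcond : ∀ g u w, ends g = s(u, w) →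
        -c (Sum.inl u) + c (Sum.inl w) + c (Sum.inr g) = 0 → g ∉ Bt → w ∉ At := by
      intro g u w hg ht hgB
      exact hycond g w u (hg.trans (Sym2.eq_swap)) (by linarith) hgB
    have hψT := vanish_on_tight (fun g hgB => ((hmemBt g).mp hgB).1) hxcond hycond hzcond
    obtain ⟨t, hψ⟩ := hspanmem _ (hvanishF At Bt hψT)
    have hci := LinearMap.congr_fun hψ (Pi.single (Sum.inl i) 1)
    have hcj := LinearMap.congr_fun hψ (Pi.single (Sum.inl j) 1)
    rw [lfc_single, sgc_inl] at hci hcj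
    simp only [LinearMap.smul_apply, smul_eq_mul, lfc_single, mul_one] at hci hcj
    rw [if_neg (fun h => lt_irrefl _ ((hmemAt i).mp h))] at hci
    rw [if_pos ((hmemAt j).mpr hlt)] at hcj
    rcases mul_eq_zero.mp hci.symm with h | h
    · rw [h, zero_mul] at hcj; norm_num at hcj
    · linarith
  have hzt : ∀ f i j, ends f = s(i, j) →
      -c (Sum.inl i) + c (Sum.inl j) + c (Sum.inr f) = 0 → 0 < c (Sum.inl j) →
      c (Sum.inl i) = c (Sum.inl j) ∧ c (Sum.inr f) = 0 := by
    intro f i j hf ht haj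
    exact hyt f j i (hf.trans (Sym2.eq_swap)) (by linarith) haj
  set A' : Finset V := Finset.univ.filter (fun v => 0 < c (Sum.inl v)) with hA'
  have hmemA' : ∀ v, v ∈ A' ↔ 0 < c (Sum.inl v) := by
    intro v; rw [hA', Finset.mem_filter]; simp
  set B' : Finset E := Finset.univ.filter
    (fun f => c (Sum.inr f) = 0 ∧ ∀ v ∈ ends f, v ∈ A') with hB'
  have hmemB' : ∀ f, f ∈ B' ↔ (c (Sum.inr f) = 0 ∧ ∀ v ∈ ends f, v ∈ A') := by
    intro f; rw [hB', Finset.mem_filter]; simp only [Finset.mem_univ, true_and]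
  have hA'ne : A'.Nonempty := by
    by_contra hA0
    rw [Finset.not_nonempty_iff_eq_empty] at hA0
    have hza : ∀ v, c (Sum.inl v) = 0 := by
      intro v
      have hnv : v ∉ A' := by rw [hA0]; exact Finset.notMem_empty v
      by_contra hne
      exact hnv ((hmemA' v).mpr (lt_of_le_of_ne (ha0 v) (Ne.symm hne)))
    have hzb : ∀ f, c (Sum.inr f) = 0 := by
      intro f
      obtain ⟨i, j, hf⟩ := sym2_rep (ends f)
      obtain ⟨h1, h2, h3⟩ := hineq f i j hf
      have hzi := hza i; have hzj := hza j
      have := hb0 f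
      linarith
    apply hcne
    have hc0 : c = 0 := by
      funext k
      cases k with
      | inl v => exact hza v
      | inr f => exact hzb f
    rw [hc0]
    ext x
    simp [lfc]
  have hxB' : ∀ g u w, ends g = s(u, w) →
      c (Sum.inl u) + c (Sum.inl w) - c (Sum.inr g) = 0 → g ∉ B' := by
    intro g u w hg ht hgB
    obtain ⟨hb, hvA⟩ := (hmemB' g).mp hgB
    have hu := (hmemA' u).mp (hvA u (by rw [hg]; exact Sym2.mem_mk_left u w))
    have hw := (hmemA' w).mp (hvA w (by rw [hg]; exact Sym2.mem_mk_right u w))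
    rw [hb] at ht; linarith
  have hyB' : ∀ g u w, ends g = s(u, w) →
      c (Sum.inl u) - c (Sum.inl w) + c (Sum.inr g) = 0 → u ∈ A' → g ∈ B' := by
    intro g u w hg ht hu
    obtain ⟨hew, heb⟩ := hyt g u w hg ht ((hmemA' u).mp hu)
    refine (hmemB' g).mpr ⟨heb, ?_⟩
    intro v hv
    rw [hg] at hv
    rcases Sym2.mem_iff.mp hv with rfl | rfl
    · exact hu
    · exact (hmemA' v).mpr (by rw [hew]; exact (hmemA' u).mp hu)
  have hconnA' : ∀ u ∈ A', ∀ v ∈ A',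
      Relation.ReflTransGen (fun a b => ∃ g ∈ B', ends g = s(a, b)) u v := by
    intro u0 hu0 v1 hv1
    by_contra hnr
    set A1 : Finset V := Finset.univ.filter (fun v => v ∈ A' ∧
      Relation.ReflTransGen (fun a b => ∃ g ∈ B', ends g = s(a, b)) u0 v) with hA1
    have hmemA1 : ∀ v, v ∈ A1 ↔ (v ∈ A' ∧
        Relation.ReflTransGen (fun a b => ∃ g ∈ B', ends g = s(a, b)) u0 v) := by
      intro v; rw [hA1, Finset.mem_filter]; simp only [Finset.mem_univ, true_and]
    set B1 : Finset E := Finset.univ.filter (fun g => g ∈ B' ∧ ∀ v ∈ ends g, v ∈ A1) with hB1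
    have hmemB1 : ∀ g, g ∈ B1 ↔ (g ∈ B' ∧ ∀ v ∈ ends g, v ∈ A1) := by
      intro g; rw [hB1, Finset.mem_filter]; simp only [Finset.mem_univ, true_and]
    have hx1 : ∀ g u w, ends g = s(u, w) →
        c (Sum.inl u) + c (Sum.inl w) - c (Sum.inr g) = 0 → g ∉ B1 := by
      intro g u w hg ht hgB
      exact hxB' g u w hg ht ((hmemB1 g).mp hgB).1
    have hy1 : ∀ g u w, ends g = s(u, w) →
        c (Sum.inl u) - c (Sum.inl w) + c (Sum.inr g) = 0 → g ∉ B1 → u ∉ A1 := by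
      intro g u w hg ht hgB hu
      obtain ⟨huA', huRT⟩ := (hmemA1 u).mp hu
      have hgB' := hyB' g u w hg ht huA'
      have hwA' : w ∈ A' := ((hmemB' g).mp hgB').2 w (by rw [hg]; exact Sym2.mem_mk_right u w)
      have hwRT := huRT.tail ⟨g, hgB', hg⟩
      have hends : ∀ v ∈ ends g, v ∈ A1 := by
        intro v hv; rw [hg] at hv
        rcases Sym2.mem_iff.mp hv with rfl | rfl
        · exact hu
        · exact (hmemA1 _).mpr ⟨hwA', hwRT⟩
      exact hgB ((hmemB1 g).mpr ⟨hgB', hends⟩)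
    have hz1 : ∀ g u w, ends g = s(u, w) →
        -c (Sum.inl u) + c (Sum.inl w) + c (Sum.inr g) = 0 → g ∉ B1 → w ∉ A1 := by
      intro g u w hg ht hgB
      exact hy1 g w u (hg.trans (Sym2.eq_swap)) (by linarith) hgB
    have hψT := vanish_on_tight (fun g hgB => ((hmemB1 g).mp hgB).2) hx1 hy1 hz1
    obtain ⟨t, hψ⟩ := hspanmem _ (hvanishF A1 B1 hψT)
    have hcu := LinearMap.congr_fun hψ (Pi.single (Sum.inl u0) 1)
    have hcv := LinearMap.congr_fun hψ (Pi.single (Sum.inl v1) 1)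
    rw [lfc_single, sgc_inl] at hcu hcv
    simp only [LinearMap.smul_apply, smul_eq_mul, lfc_single, mul_one] at hcu hcv
    rw [if_pos ((hmemA1 u0).mpr ⟨hu0, Relation.ReflTransGen.refl⟩)] at hcu
    rw [if_neg (fun h => hnr ((hmemA1 v1).mp h).2)] at hcv
    rcases mul_eq_zero.mp hcv.symm with h | h
    · rw [h, zero_mul] at hcu; norm_num at hcu
    · exact absurd h (ne_of_gt ((hmemA' v1).mp hv1))
  have hconnSub : IsConnectedSubgraph ends A' B' :=
    ⟨hA'ne, fun f hf => ((hmemB' f).mp hf).2, hconnA'⟩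
  have hy' : ∀ g u w, ends g = s(u, w) →
      c (Sum.inl u) - c (Sum.inl w) + c (Sum.inr g) = 0 → g ∉ B' → u ∉ A' := by
    intro g u w hg ht hgB hu
    exact hgB (hyB' g u w hg ht hu)
  have hz' : ∀ g u w, ends g = s(u, w) →
      -c (Sum.inl u) + c (Sum.inl w) + c (Sum.inr g) = 0 → g ∉ B' → w ∉ A' := by
    intro g u w hg ht hgB
    exact hy' g w u (hg.trans (Sym2.eq_swap)) (by linarith) hgB
  have hTZ := vanish_on_tight (fun f hf => ((hmemB' f).mp hf).2) hxB' hy' hz'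
  have hZF := hvanishF A' B' hTZ
  obtain ⟨hP1nonneg, hP1facet⟩ := part1_facet hiso hconnSub
  obtain ⟨hF'ne, hF'exp, hF'neP, hF'dim⟩ := hP1facet
  obtain ⟨t0, hℓ⟩ := hspanmem _ hZF
  have ht0 : t0 ≠ 0 := by
    intro h; rw [h, zero_smul] at hℓ
    apply hF'neP
    ext x
    rw [mem_subgraphFace, hℓ]
    simp
  have hFeq' : F = subgraphFace ends A' B' := by
    apply Set.Subset.antisymm
    · intro x hx
      exact (mem_subgraphFace).mpr ⟨hFP hx, hZF x hx⟩
    · intro x hx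
      obtain ⟨hxP, hxt⟩ := (mem_subgraphFace).mp hx
      rw [hℓ] at hxt
      simp only [LinearMap.smul_apply, smul_eq_mul] at hxt
      rw [hFeq]
      refine ⟨hxP, ?_⟩
      rcases mul_eq_zero.mp hxt with h | h
      · exact absurd h ht0
      · exact h
  refine ⟨(A', B'), ⟨hconnSub, hFeq'⟩, ?_⟩
  rintro ⟨A2, B2⟩ ⟨hconn2, hFeq2⟩
  obtain ⟨hA2ne, hB2A, hconn2'⟩ := hconn2
  have hZ2 : ∀ x ∈ F, lfc (sgc ends A2 B2) x = 0 := by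
    intro x hx
    have hx2 : x ∈ subgraphFace ends A2 B2 := hFeq2 ▸ hx
    exact (mem_subgraphFace.mp hx2).2
  obtain ⟨t2, hℓ2⟩ := hspanmem _ hZ2
  have ht2 : t2 ≠ 0 := by
    intro h; rw [h, zero_smul] at hℓ2
    apply hneP
    rw [hFeq2]
    ext x
    rw [mem_subgraphFace, hℓ2]
    simp
  have hv2 : ∀ v : V, (if v ∈ A2 then (1:ℝ) else 0) = t2 * c (Sum.inl v) := by
    intro v
    have h := LinearMap.congr_fun hℓ2 (Pi.single (Sum.inl v) 1)
    rw [lfc_single, sgc_inl] at h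
    simpa [mul_one] using h
  have hv0' : ∀ v : V, (if v ∈ A' then (1:ℝ) else 0) = t0 * c (Sum.inl v) := by
    intro v
    have h := LinearMap.congr_fun hℓ (Pi.single (Sum.inl v) 1)
    rw [lfc_single, sgc_inl] at h
    simpa [mul_one] using h
  obtain ⟨v2, hv2A⟩ := hA2ne
  have e2 : (1:ℝ) = t2 * c (Sum.inl v2) := by rw [← hv2 v2, if_pos hv2A]
  have hcv2 : c (Sum.inl v2) ≠ 0 := by
    intro h; rw [h, mul_zero] at e2; norm_num at e2
  have hv2A' : v2 ∈ A' := (hmemA' v2).mpr (lt_of_le_of_ne (ha0 v2) (Ne.symm hcv2))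
  have e0 : (1:ℝ) = t0 * c (Sum.inl v2) := by rw [← hv0' v2, if_pos hv2A']
  have htt : t2 = t0 := by
    have h := e2.symm.trans e0
    exact mul_right_cancel₀ hcv2 h
  have hAeq : A2 = A' := by
    ext v
    have h2 := hv2 v
    rw [htt, ← hv0' v] at h2
    constructor
    · intro h; by_contra h'; rw [if_pos h, if_neg h'] at h2; norm_num at h2
    · intro h; by_contra h'; rw [if_neg h', if_pos h] at h2; norm_num at h2
  have hf2 : ∀ f : E, (if f ∈ B2 then (0:ℝ) else (endpointCount (ends f) A2 : ℝ))
      = t2 * c (Sum.inr f) := by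
    intro f
    have h := LinearMap.congr_fun hℓ2 (Pi.single (Sum.inr f) 1)
    rw [lfc_single] at h
    have hr : sgc ends A2 B2 (Sum.inr f)
        = if f ∈ B2 then (0:ℝ) else (endpointCount (ends f) A2 : ℝ) := rfl
    rw [hr] at h
    simpa [mul_one] using h
  have hf0' : ∀ f : E, (if f ∈ B' then (0:ℝ) else (endpointCount (ends f) A' : ℝ))
      = t0 * c (Sum.inr f) := by
    intro f
    have h := LinearMap.congr_fun hℓ (Pi.single (Sum.inr f) 1)
    rw [lfc_single] at h
    have hr : sgc ends A' B' (Sum.inr f)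
        = if f ∈ B' then (0:ℝ) else (endpointCount (ends f) A' : ℝ) := rfl
    rw [hr] at h
    simpa [mul_one] using h
  have hBeq : B2 = B' := by
    ext f
    have h2 := hf2 f
    rw [htt, ← hf0' f, hAeq] at h2
    constructor
    · intro hf
      by_contra hf'
      rw [if_pos hf, if_neg hf'] at h2
      have he2 : endpointCount (ends f) A' = 2 :=
        epc_two (by rw [← hAeq]; exact hB2A f hf)
      rw [he2] at h2
      norm_num at h2
    · intro hf
      by_contra hf2'
      rw [if_neg hf2', if_pos hf] at h2
      have he2 : endpointCount (ends f) A' = 2 := epc_two ((hmemB' f).mp hf).2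
      rw [he2] at h2
      norm_num at h2
  rw [Prod.mk.injEq]
  exact ⟨hAeq, hBeq⟩

end Part2

/-- For a connected graph `G` without isolated vertices, the facets of the
cosmological polytope `C_G` are in bijection with the non-empty connected subgraphs of `G`:
for every connected subgraph `H = (A, B)` the functional
`w ↦ Σ_{v ∈ V(H)} w_v + Σ_{f ∉ E(H)} |f ∩ V(H)| w_f` is nonnegative on `C_G` and its zero
set on `C_G` is a facet, and every facet of `C_G` arises in this way from a unique
non-empty connected subgraph. -/
theorem facets_of_cosmoPolytope
    {V E : Type*} [Fintype V] [Fintype E] [DecidableEq V] [DecidableEq E]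
    (ends : E → Sym2 V) (hiso : ∀ v : V, ∃ f : E, v ∈ ends f)
    (hconn : ∀ u v : V, multigraphReach ends u v) :
    (∀ A : Finset V, ∀ B : Finset E, IsConnectedSubgraph ends A B →
      (∀ x ∈ cosmoPolytope ends, 0 ≤ subgraphFunctional ends A B x) ∧
        IsFacetOf (cosmoPolytope ends) (subgraphFace ends A B)) ∧
    (∀ F : Set ((V ⊕ E) → ℝ), IsFacetOf (cosmoPolytope ends) F →
      ∃! AB : Finset V × Finset E,
        IsConnectedSubgraph ends AB.1 AB.2 ∧ F = subgraphFace ends AB.1 AB.2) := by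
  exact ⟨fun A B h => part1_facet hiso h, fun F hF => part2_facet hiso F hF⟩
end

section
/- Let m be a positive integer and let I_m be the graph on two vertices 1 and 2 with a multi-edge of multiplicity m between them (m parallel edges). Then h*(C_{I_m}; z) = (1+z)^m + 2mz(1+z)^{m−1}. -/
open Polynomial Pointwise

-- ===================== auxiliary development =====================



/-- lattice points of the `t`-dilate of the standard cross-polytope in `ℝ^m`. -/
noncomputable def ballSet (m t : ℕ) : Finset (Fin m → ℤ) :=
  (Finset.Icc (fun _ => -(t:ℤ)) (fun _ => (t:ℤ))).filter (fun y => ∑ f, |y f| ≤ (t:ℤ))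

lemma mem_ballSet {m t : ℕ} {y : Fin m → ℤ} :
    y ∈ ballSet m t ↔ ∑ f, |y f| ≤ (t:ℤ) := by
  constructor
  · intro h; exact (Finset.mem_filter.1 h).2
  · intro h
    have key : ∀ f, |y f| ≤ (t:ℤ) := fun f =>
      le_trans (Finset.single_le_sum (f := fun f => |y f|) (fun i _ => abs_nonneg _)
        (Finset.mem_univ f)) h
    refine Finset.mem_filter.2 ⟨Finset.mem_Icc.2 ⟨fun f => ?_, fun f => ?_⟩, h⟩
    · show -(t:ℤ) ≤ y f
      linarith [abs_le.1 (key f)]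
    · show y f ≤ (t:ℤ)
      linarith [abs_le.1 (key f)]

noncomputable def Nb (m t : ℕ) : ℕ := (ballSet m t).card

lemma Nb_zero_right (m : ℕ) : Nb m 0 = 1 := by
  have : ballSet m 0 = {fun _ => 0} := by
    ext y
    simp only [mem_ballSet, Finset.mem_singleton]
    constructor
    · intro h
      funext f
      have h1 : |y f| ≤ (0:ℤ) := by
        refine le_trans (Finset.single_le_sum (f := fun f => |y f|)
          (fun i _ => abs_nonneg _) (Finset.mem_univ f)) ?_
        simpa using h
      have := abs_nonneg (y f)
      have : |y f| = 0 := le_antisymm h1 this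
      simpa [abs_eq_zero] using this
    · rintro rfl; simp
  simp [Nb, this]

lemma Nb_zero_left (t : ℕ) : Nb 0 t = 1 := by
  have : ballSet 0 t = {fun i => i.elim0} := by
    ext y
    simp only [mem_ballSet, Finset.mem_singleton]
    constructor
    · intro _; funext i; exact i.elim0
    · rintro rfl; simp [Finset.univ_eq_empty]
  simp [Nb, this]

lemma sum_abs_split {m : ℕ} (y : Fin (m+1) → ℤ) :
    ∑ f, |y f| = (∑ f : Fin m, |Fin.init y f|) + |y (Fin.last m)| := by
  rw [Fin.sum_univ_castSucc]
  simp [Fin.init]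

lemma card_last_eq_zero {m t : ℕ} :
    ((ballSet (m+1) t).filter (fun y => y (Fin.last m) = 0)).card = Nb m t := by
  refine Finset.card_bij' (fun y _ => Fin.init y) (fun z _ => Fin.snoc z 0) ?_ ?_ ?_ ?_
  · intro y hy
    obtain ⟨hy1, hy2⟩ := Finset.mem_filter.1 hy
    rw [mem_ballSet] at hy1 ⊢
    rw [sum_abs_split y, hy2] at hy1
    simpa using hy1
  · intro z hz
    rw [mem_ballSet] at hz
    refine Finset.mem_filter.2 ⟨?_, by simp⟩
    rw [mem_ballSet, sum_abs_split]
    simpa [Fin.init_snoc] using hz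
  · intro y hy
    have hy2 := (Finset.mem_filter.1 hy).2
    show Fin.snoc (Fin.init y) (0:ℤ) = y
    rw [← hy2]
    exact Fin.snoc_init_self y
  · intro z _
    simp

lemma card_last_eq_negone {m t : ℕ} :
    ((ballSet (m+1) (t+1)).filter (fun y => y (Fin.last m) = -1)).card = Nb m t := by
  refine Finset.card_bij' (fun y _ => Fin.init y) (fun z _ => Fin.snoc z (-1)) ?_ ?_ ?_ ?_
  · intro y hy
    obtain ⟨hy1, hy2⟩ := Finset.mem_filter.1 hy
    rw [mem_ballSet] at hy1 ⊢
    rw [sum_abs_split y, hy2] at hy1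
    push_cast at hy1 ⊢
    simp at hy1
    linarith
  · intro z hz
    rw [mem_ballSet] at hz
    refine Finset.mem_filter.2 ⟨?_, by simp⟩
    rw [mem_ballSet, sum_abs_split]
    push_cast
    simp [Fin.init_snoc]
    linarith
  · intro y hy
    have hy2 := (Finset.mem_filter.1 hy).2
    show Fin.snoc (Fin.init y) (-1:ℤ) = y
    rw [← hy2]
    exact Fin.snoc_init_self y
  · intro z _
    simp

lemma card_last_other {m t : ℕ} :
    ((ballSet (m+1) (t+1)).filter
      (fun y => ¬ y (Fin.last m) = 0 ∧ ¬ y (Fin.last m) = -1)).card = Nb (m+1) t := by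
  classical
  refine Finset.card_bij'
    (fun y _ => Function.update y (Fin.last m)
      (if 0 < y (Fin.last m) then y (Fin.last m) - 1 else y (Fin.last m) + 1))
    (fun z _ => Function.update z (Fin.last m)
      (if 0 ≤ z (Fin.last m) then z (Fin.last m) + 1 else z (Fin.last m) - 1)) ?_ ?_ ?_ ?_
  · intro y hy
    obtain ⟨hy1, hy2, hy3⟩ := Finset.mem_filter.1 hy
    rw [mem_ballSet] at hy1
    rw [mem_ballSet]
    beta_reduce
    rw [sum_abs_split] at hy1
    rw [sum_abs_split, Fin.init_update_last, Function.update_self]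
    have habs : |if 0 < y (Fin.last m) then y (Fin.last m) - 1 else y (Fin.last m) + 1|
        = |y (Fin.last m)| - 1 := by
      split_ifs with h
      · have e1 : |y (Fin.last m) - 1| = y (Fin.last m) - 1 := abs_of_nonneg (by omega)
        have e2 : |y (Fin.last m)| = y (Fin.last m) := abs_of_pos h
        omega
      · have e1 : |y (Fin.last m) + 1| = -(y (Fin.last m) + 1) := abs_of_neg (by omega)
        have e2 : |y (Fin.last m)| = -(y (Fin.last m)) := abs_of_neg (by omega)
        omega
    rw [habs]
    push_cast at hy1 ⊢
    linarith
  · intro z hz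
    rw [mem_ballSet] at hz
    have hsplit := sum_abs_split z
    refine Finset.mem_filter.2 ⟨?_, ?_⟩
    · rw [mem_ballSet]
      beta_reduce
      rw [sum_abs_split, Fin.init_update_last, Function.update_self]
      have habs : |if 0 ≤ z (Fin.last m) then z (Fin.last m) + 1 else z (Fin.last m) - 1|
          = |z (Fin.last m)| + 1 := by
        split_ifs with h
        · have e1 : |z (Fin.last m) + 1| = z (Fin.last m) + 1 := abs_of_nonneg (by omega)
          have e2 : |z (Fin.last m)| = z (Fin.last m) := abs_of_nonneg h
          omega
        · have e1 : |z (Fin.last m) - 1| = -(z (Fin.last m) - 1) := abs_of_neg (by omega)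
          have e2 : |z (Fin.last m)| = -(z (Fin.last m)) := abs_of_neg (by omega)
          omega
      rw [habs]
      push_cast
      linarith
    · beta_reduce
      constructor <;> · rw [Function.update_self]; split_ifs with h <;> omega
  · intro y hy
    have h := (Finset.mem_filter.1 hy).2
    beta_reduce
    rw [Function.update_idem, Function.update_self]
    have : (if 0 ≤ (if 0 < y (Fin.last m) then y (Fin.last m) - 1 else y (Fin.last m) + 1)
        then (if 0 < y (Fin.last m) then y (Fin.last m) - 1 else y (Fin.last m) + 1) + 1
        else (if 0 < y (Fin.last m) then y (Fin.last m) - 1 else y (Fin.last m) + 1) - 1)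
        = y (Fin.last m) := by
      split_ifs <;> omega
    rw [this, Function.update_eq_self]
  · intro z _
    beta_reduce
    rw [Function.update_idem, Function.update_self]
    have : (if 0 < (if 0 ≤ z (Fin.last m) then z (Fin.last m) + 1 else z (Fin.last m) - 1)
        then (if 0 ≤ z (Fin.last m) then z (Fin.last m) + 1 else z (Fin.last m) - 1) - 1
        else (if 0 ≤ z (Fin.last m) then z (Fin.last m) + 1 else z (Fin.last m) - 1) + 1)
        = z (Fin.last m) := by
      split_ifs <;> omega
    rw [this, Function.update_eq_self]

lemma Nb_rec (m t : ℕ) :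
    Nb (m+1) (t+1) = Nb (m+1) t + Nb m (t+1) + Nb m t := by
  classical
  have h1 := Finset.card_filter_add_card_filter_not
    (s := ballSet (m+1) (t+1)) (p := fun y => y (Fin.last m) = 0)
  have h2 := Finset.card_filter_add_card_filter_not
    (s := (ballSet (m+1) (t+1)).filter (fun y => ¬ y (Fin.last m) = 0))
    (p := fun y => y (Fin.last m) = -1)
  rw [Finset.filter_filter, Finset.filter_filter] at h2
  have e1 : ((ballSet (m+1) (t+1)).filter (fun y => y (Fin.last m) = 0)).card
      = Nb m (t+1) := card_last_eq_zero
  have e2 : ((ballSet (m+1) (t+1)).filter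
      (fun y => ¬ y (Fin.last m) = 0 ∧ y (Fin.last m) = -1)).card = Nb m t := by
    rw [← card_last_eq_negone (m := m) (t := t)]
    congr 1
    apply Finset.filter_congr
    intro y _
    constructor
    · rintro ⟨_, h⟩; exact h
    · intro h; exact ⟨by rw [h]; norm_num, h⟩
  have e3 : ((ballSet (m+1) (t+1)).filter
      (fun y => ¬ y (Fin.last m) = 0 ∧ ¬ y (Fin.last m) = -1)).card = Nb (m+1) t :=
    card_last_other
  have key : Nb (m+1) (t+1) = Nb m (t+1) + (Nb m t + Nb (m+1) t) := by
    show (ballSet (m+1) (t+1)).card = _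
    rw [← h1, ← h2, e1, e2, e3]
  rw [key]; ring



noncomputable def Fs (m : ℕ) : PowerSeries ℚ := PowerSeries.mk fun t => (Nb m t : ℚ)
noncomputable def Gs (m : ℕ) : PowerSeries ℚ :=
  PowerSeries.mk fun t => ((t : ℚ) + 1) * (Nb m t : ℚ)

lemma coeff_zero_mul_X' (A : PowerSeries ℚ) : PowerSeries.coeff 0 (A * PowerSeries.X) = 0 := by
  simp

lemma Fs_succ_rel (m : ℕ) : Fs (m+1) * (1 - PowerSeries.X) = Fs m * (1 + PowerSeries.X) := by
  ext n
  rcases n with _ | n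
  · simp [Fs, mul_sub, mul_add, mul_one, Nb_zero_right]
  · simp only [Fs, mul_sub, mul_add, mul_one, map_sub, map_add, PowerSeries.coeff_succ_mul_X, PowerSeries.coeff_mk]
    have := Nb_rec m n
    push_cast [this]
    ring

lemma Gs_succ_rel (m : ℕ) :
    Gs (m+1) * (1 - PowerSeries.X) = Gs m * (1 + PowerSeries.X) + PowerSeries.X * Fs (m+1) + PowerSeries.X * Fs m := by
  ext n
  rcases n with _ | n
  · simp [Gs, Fs, mul_sub, mul_add, mul_one, mul_comm PowerSeries.X _, Nb_zero_right]
  · simp only [Gs, Fs, mul_sub, mul_add, mul_one, map_sub, map_add, PowerSeries.coeff_succ_mul_X,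
      PowerSeries.coeff_succ_X_mul, PowerSeries.coeff_mk]
    have := Nb_rec m n
    push_cast [this]
    ring

lemma Fs_mul_pow (m : ℕ) : Fs m * (1 - PowerSeries.X) ^ (m + 1) = (1 + PowerSeries.X) ^ m := by
  induction m with
  | zero =>
    rw [pow_one, pow_zero]
    ext n
    rcases n with _ | n
    · simp [Fs, mul_sub, mul_one, Nb_zero_left]
    · simp only [Fs, mul_sub, mul_one, map_sub, PowerSeries.coeff_succ_mul_X, PowerSeries.coeff_mk]
      simp [Nb_zero_left, PowerSeries.coeff_one]
  | succ k ih =>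
    have : Fs (k+1) * (1 - PowerSeries.X) ^ (k + 2) = (Fs (k+1) * (1 - PowerSeries.X)) * (1 - PowerSeries.X) ^ (k+1) := by
      ring
    rw [this, Fs_succ_rel, show Fs k * (1 + PowerSeries.X) * (1 - PowerSeries.X) ^ (k+1)
      = (Fs k * (1 - PowerSeries.X) ^ (k+1)) * (1 + PowerSeries.X) by ring, ih]
    ring

lemma Gs_zero_mul : Gs 0 * (1 - PowerSeries.X) = Fs 0 := by
  ext n
  rcases n with _ | n
  · simp [Gs, Fs, mul_sub, mul_one]
  · simp only [Gs, Fs, mul_sub, mul_one, map_sub, PowerSeries.coeff_succ_mul_X, PowerSeries.coeff_mk,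
      Nb_zero_left]
    push_cast
    ring

lemma Gs_mul_pow (m : ℕ) :
    Gs m * (1 - PowerSeries.X) ^ (m + 2) = (1 + PowerSeries.X) ^ m + 2 * (m : PowerSeries ℚ) * PowerSeries.X * (1 + PowerSeries.X) ^ (m - 1) := by
  induction m with
  | zero =>
    have : Gs 0 * (1 - PowerSeries.X) ^ 2 = (Gs 0 * (1 - PowerSeries.X)) * (1 - PowerSeries.X) := by ring
    rw [this, Gs_zero_mul]
    have := Fs_mul_pow 0
    rw [pow_one, pow_zero] at this
    rw [this]
    norm_num
  | succ k ih =>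
    have h1 : Gs (k+1) * (1 - PowerSeries.X) ^ (k + 3) = (Gs (k+1) * (1 - PowerSeries.X)) * (1 - PowerSeries.X) ^ (k+2) := by
      ring
    rw [h1, Gs_succ_rel]
    have h2 : (Gs k * (1 + PowerSeries.X) + PowerSeries.X * Fs (k+1) + PowerSeries.X * Fs k) * (1 - PowerSeries.X) ^ (k + 2)
        = (Gs k * (1 - PowerSeries.X) ^ (k+2)) * (1 + PowerSeries.X) + PowerSeries.X * (Fs (k+1) * (1 - PowerSeries.X) ^ (k+2))
          + (PowerSeries.X * (1 - PowerSeries.X)) * (Fs k * (1 - PowerSeries.X) ^ (k+1)) := by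
      ring
    rw [h2, ih, Fs_mul_pow, Fs_mul_pow]
    rcases k with _ | j
    · norm_num; ring
    · simp only [Nat.add_sub_cancel]
      push_cast
      ring


namespace CosmoAux

variable {m : ℕ}

/-- the three explicit vertices for an edge `f`. -/
def V1 (m : ℕ) (f : Fin m) : (Fin 2 ⊕ Fin m) → ℝ :=
  Pi.single (Sum.inl 0) 1 + Pi.single (Sum.inl 1) 1 - Pi.single (Sum.inr f) 1
def V2 (m : ℕ) (f : Fin m) : (Fin 2 ⊕ Fin m) → ℝ :=
  Pi.single (Sum.inl 0) 1 - Pi.single (Sum.inl 1) 1 + Pi.single (Sum.inr f) 1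
def V3 (m : ℕ) (f : Fin m) : (Fin 2 ⊕ Fin m) → ℝ :=
  -Pi.single (Sum.inl 0) 1 + Pi.single (Sum.inl 1) 1 + Pi.single (Sum.inr f) 1

lemma vertex_cases {p : (Fin 2 ⊕ Fin m) → ℝ}
    (hp : p ∈ cosmoVertices (fun _ : Fin m => s((0 : Fin 2), (1 : Fin 2)))) :
    ∃ f : Fin m, p = V1 m f ∨ p = V2 m f ∨ p = V3 m f := by
  obtain ⟨f, i, j, hij, hc⟩ := hp
  refine ⟨f, ?_⟩
  have h : ((0:Fin 2) = i ∧ (1:Fin 2) = j) ∨ ((0:Fin 2) = j ∧ (1:Fin 2) = i) := by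
    rw [Sym2.eq_iff] at hij; exact hij
  rcases h with ⟨h1, h2⟩ | ⟨h1, h2⟩
  · subst h1; subst h2
    rcases hc with h | h | h
    · left; rw [h]; rfl
    · right; left; rw [h]; rfl
    · right; right; rw [h]; rfl
  · subst h1; subst h2
    rcases hc with h | h | h
    · left; rw [h]; unfold V1; abel
    · right; right; rw [h]; unfold V3; abel
    · right; left; rw [h]; unfold V2; abel

-- coordinate evaluations
lemma V1_inl0 (f : Fin m) : V1 m f (Sum.inl 0) = 1 := by simp [V1, Pi.single_apply]
lemma V1_inl1 (f : Fin m) : V1 m f (Sum.inl 1) = 1 := by simp [V1, Pi.single_apply]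
lemma V1_inr (f g : Fin m) : V1 m f (Sum.inr g) = -(if g = f then (1:ℝ) else 0) := by
  simp [V1, Pi.single_apply]
lemma V2_inl0 (f : Fin m) : V2 m f (Sum.inl 0) = 1 := by simp [V2, Pi.single_apply]
lemma V2_inl1 (f : Fin m) : V2 m f (Sum.inl 1) = -1 := by simp [V2, Pi.single_apply]
lemma V2_inr (f g : Fin m) : V2 m f (Sum.inr g) = (if g = f then (1:ℝ) else 0) := by
  simp [V2, Pi.single_apply]
lemma V3_inl0 (f : Fin m) : V3 m f (Sum.inl 0) = -1 := by simp [V3, Pi.single_apply]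
lemma V3_inl1 (f : Fin m) : V3 m f (Sum.inl 1) = 1 := by simp [V3, Pi.single_apply]
lemma V3_inr (f g : Fin m) : V3 m f (Sum.inr g) = (if g = f then (1:ℝ) else 0) := by
  simp [V3, Pi.single_apply]

lemma V1_sum_inr (f : Fin m) : ∑ g, V1 m f (Sum.inr g) = -1 := by
  simp [V1_inr, Finset.sum_ite_eq' Finset.univ f (fun _ => (1:ℝ))]
lemma V2_sum_inr (f : Fin m) : ∑ g, V2 m f (Sum.inr g) = 1 := by
  simp [V2_inr]
lemma V3_sum_inr (f : Fin m) : ∑ g, V3 m f (Sum.inr g) = 1 := by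
  simp [V3_inr]

lemma lin_sum_coeff (a : (Fin 2 ⊕ Fin m) → ℝ) :
    IsLinearMap ℝ (fun p : (Fin 2 ⊕ Fin m) → ℝ => ∑ k, a k * p k) := by
  constructor
  · intro p q
    simp [mul_add, Finset.sum_add_distrib]
  · intro c p
    simp only [Pi.smul_apply, smul_eq_mul, Finset.mul_sum]
    congr 1; funext k; ring

end CosmoAux

namespace CosmoAux

variable {m : ℕ}

abbrev Pm (m : ℕ) : Set ((Fin 2 ⊕ Fin m) → ℝ) :=
  cosmoPolytope (fun _ : Fin m => s((0 : Fin 2), (1 : Fin 2)))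

lemma hull_sum_eq {p : (Fin 2 ⊕ Fin m) → ℝ} (hp : p ∈ Pm m) : ∑ k, p k = 1 := by
  have hlin : IsLinearMap ℝ (fun p : (Fin 2 ⊕ Fin m) → ℝ => ∑ k, p k) := by
    constructor
    · intro p q; simp [Finset.sum_add_distrib]
    · intro c p
      simp only [Pi.smul_apply, smul_eq_mul, Finset.mul_sum]
  refine convexHull_min ?_ (convex_hyperplane hlin 1) hp
  intro q hq
  obtain ⟨f, hc⟩ := vertex_cases hq
  show ∑ k, q k = 1
  rcases hc with rfl | rfl | rfl <;>
    rw [Fintype.sum_sum_type, Fin.sum_univ_two] <;>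
    simp [V1_inl0, V1_inl1, V1_sum_inr, V2_inl0, V2_inl1, V2_sum_inr,
      V3_inl0, V3_inl1, V3_sum_inr]

lemma hull_x0 {p : (Fin 2 ⊕ Fin m) → ℝ} (hp : p ∈ Pm m) :
    0 ≤ p (Sum.inl 0) + ∑ f, p (Sum.inr f) := by
  have hlin : IsLinearMap ℝ
      (fun p : (Fin 2 ⊕ Fin m) → ℝ => p (Sum.inl 0) + ∑ f, p (Sum.inr f)) := by
    constructor
    · intro p q; simp [Finset.sum_add_distrib]; ring
    · intro c p
      simp only [Pi.smul_apply, smul_eq_mul, mul_add, Finset.mul_sum]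
  refine convexHull_min ?_ (convex_halfSpace_ge hlin 0) hp
  intro q hq
  obtain ⟨f, hc⟩ := vertex_cases hq
  show 0 ≤ q (Sum.inl 0) + ∑ f, q (Sum.inr f)
  rcases hc with rfl | rfl | rfl <;>
    simp [V1_inl0, V1_sum_inr, V2_inl0, V2_sum_inr, V3_inl0, V3_sum_inr]

lemma hull_x1 {p : (Fin 2 ⊕ Fin m) → ℝ} (hp : p ∈ Pm m) :
    0 ≤ p (Sum.inl 1) + ∑ f, p (Sum.inr f) := by
  have hlin : IsLinearMap ℝ
      (fun p : (Fin 2 ⊕ Fin m) → ℝ => p (Sum.inl 1) + ∑ f, p (Sum.inr f)) := by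
    constructor
    · intro p q; simp [Finset.sum_add_distrib]; ring
    · intro c p
      simp only [Pi.smul_apply, smul_eq_mul, mul_add, Finset.mul_sum]
  refine convexHull_min ?_ (convex_halfSpace_ge hlin 0) hp
  intro q hq
  obtain ⟨f, hc⟩ := vertex_cases hq
  show 0 ≤ q (Sum.inl 1) + ∑ f, q (Sum.inr f)
  rcases hc with rfl | rfl | rfl <;>
    simp [V1_inl1, V1_sum_inr, V2_inl1, V2_sum_inr, V3_inl1, V3_sum_inr]

lemma hull_eps {p : (Fin 2 ⊕ Fin m) → ℝ} (hp : p ∈ Pm m) (ε : Fin m → ℝ)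
    (hε : ∀ f, ε f = 1 ∨ ε f = -1) : ∑ f, ε f * p (Sum.inr f) ≤ 1 := by
  have hlin : IsLinearMap ℝ
      (fun p : (Fin 2 ⊕ Fin m) → ℝ => ∑ f, ε f * p (Sum.inr f)) := by
    constructor
    · intro p q; simp [mul_add, Finset.sum_add_distrib]
    · intro c p
      simp only [Pi.smul_apply, smul_eq_mul, Finset.mul_sum]
      congr 1; funext k; ring
  refine convexHull_min ?_ (convex_halfSpace_le hlin 1) hp
  intro q hq
  obtain ⟨f, hc⟩ := vertex_cases hq
  show ∑ g, ε g * q (Sum.inr g) ≤ 1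
  rcases hc with rfl | rfl | rfl
  · have : ∑ g, ε g * V1 m f (Sum.inr g) = -ε f := by
      simp [V1_inr, mul_ite, Finset.sum_ite_eq' Finset.univ f]
    rw [this]; rcases hε f with h | h <;> rw [h] <;> norm_num
  · have : ∑ g, ε g * V2 m f (Sum.inr g) = ε f := by
      simp [V2_inr, mul_ite, Finset.sum_ite_eq' Finset.univ f]
    rw [this]; rcases hε f with h | h <;> rw [h] <;> norm_num
  · have : ∑ g, ε g * V3 m f (Sum.inr g) = ε f := by
      simp [V3_inr, mul_ite, Finset.sum_ite_eq' Finset.univ f]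
    rw [this]; rcases hε f with h | h <;> rw [h] <;> norm_num

end CosmoAux

namespace CosmoAux

lemma construct_uv (m : ℕ) (hm : 0 < m) (t : ℝ) (x1 x2 : ℝ) (y : Fin m → ℝ)
    (hsum : x1 + x2 + ∑ f, y f = t) (h1 : 0 ≤ x1 + ∑ f, y f) (h2 : 0 ≤ x2 + ∑ f, y f)
    (hA : ∑ f, |y f| ≤ t) :
    ∃ u v : Fin m → ℝ, (∑ f, u f = x1) ∧ (∑ f, v f = x2) ∧
      (∀ f, 0 ≤ u f + v f) ∧ (∀ f, 0 ≤ u f + y f) ∧ (∀ f, 0 ≤ v f + y f) := by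
  have hmR : (0:ℝ) < m := by exact_mod_cast hm
  set Y := ∑ f, y f with hY
  set A := ∑ f, |y f| with hAdef
  set B := A + Y with hBdef
  set b := x1 + Y with hbdef
  have hb : 0 ≤ b := h1
  have hBsum : ∑ f, (|y f| + y f) = B := by
    rw [Finset.sum_add_distrib]
  have htermnn : ∀ f, 0 ≤ |y f| + y f := by
    intro f; linarith [neg_abs_le (y f)]
  have hB : 0 ≤ B := by rw [← hBsum]; exact Finset.sum_nonneg fun f _ => htermnn f
  set r := min b B / B with hrdef
  have hr0 : 0 ≤ r := div_nonneg (le_min hb hB) hB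
  have hrB : r * B = min b B := by
    rcases eq_or_lt_of_le hB with h | h
    · rw [← h]; simp [min_eq_right hb, ← h]
    · rw [hrdef]; field_simp
  have hterm : ∀ f, r * (|y f| + y f) ≤ |y f| + y f := by
    intro f
    rcases eq_or_lt_of_le hB with h | h
    · have hz : |y f| + y f = 0 := by
        have := (Finset.sum_eq_zero_iff_of_nonneg (fun f _ => htermnn f)).1
          (by rw [hBsum, ← h])
        exact this f (Finset.mem_univ f)
      rw [hz]; simp
    · have hr1 : r ≤ 1 := by
        rw [hrdef, div_le_one h]; exact min_le_right _ _
      nlinarith [htermnn f]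
  set c := max (b - B) 0 / m with hcdef
  have hc0 : 0 ≤ c := div_nonneg (le_max_right _ _) (le_of_lt hmR)
  have hmc : (m:ℝ) * c = max (b - B) 0 := by
    rw [hcdef]; field_simp
  set u := fun f => -y f + r * (|y f| + y f) + c with hudef
  have hsumu : ∑ f, u f = x1 := by
    rw [hudef]
    simp only [Finset.sum_add_distrib]
    rw [← Finset.mul_sum, hBsum, Finset.sum_neg_distrib]
    rw [Finset.sum_const, Finset.card_univ, Fintype.card_fin, nsmul_eq_mul, hmc, hrB]
    rcases le_total b B with h | h
    · rw [min_eq_left h, max_eq_right (by linarith)]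
      rw [hbdef]; ring
    · rw [min_eq_right h, max_eq_left (by linarith)]
      rw [hbdef, hBdef]; ring
  have huy : ∀ f, 0 ≤ u f + y f := by
    intro f
    have : u f + y f = r * (|y f| + y f) + c := by rw [hudef]; ring
    rw [this]
    exact add_nonneg (mul_nonneg hr0 (htermnn f)) hc0
  set Mx := fun f => max (-y f) (-(u f)) with hMxdef
  have hMxle : ∀ f, Mx f ≤ |y f| - r * (|y f| + y f) := by
    intro f
    rw [hMxdef]
    apply max_le
    · have := hterm f; linarith [neg_abs_le (y f)]
    · have h1 : -(u f) = y f - r * (|y f| + y f) - c := by rw [hudef]; ring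
      rw [h1]
      linarith [le_abs_self (y f), hc0]
  have hMxsum : ∑ f, Mx f ≤ A - min b B := by
    calc ∑ f, Mx f ≤ ∑ f, (|y f| - r * (|y f| + y f)) :=
          Finset.sum_le_sum fun f _ => hMxle f
      _ = A - r * B := by
          rw [Finset.sum_sub_distrib, ← Finset.mul_sum, hBsum, hAdef]
      _ = A - min b B := by rw [hrB]
  set e := x2 - ∑ f, Mx f with hedef
  have hx2 : x2 = t - b := by rw [hbdef]; linarith
  have he : 0 ≤ e := by
    rw [hedef]
    rcases le_total b B with h | h
    · have : min b B = b := min_eq_left h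
      rw [this] at hMxsum
      rw [hx2]; linarith
    · have : min b B = B := min_eq_right h
      rw [this] at hMxsum
      have : 0 ≤ x2 + Y := h2
      rw [hBdef] at hMxsum
      linarith
  set v := fun f => Mx f + e / m with hvdef
  have hsumv : ∑ f, v f = x2 := by
    rw [hvdef]
    simp only [Finset.sum_add_distrib]
    rw [Finset.sum_const, Finset.card_univ, Fintype.card_fin, nsmul_eq_mul]
    rw [mul_div_cancel₀ _ (ne_of_gt hmR), hedef]
    ring
  refine ⟨u, v, hsumu, hsumv, ?_, huy, ?_⟩
  · intro f
    have hv : -(u f) ≤ v f := by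
      rw [hvdef]
      have : -(u f) ≤ Mx f := le_max_right _ _
      have he' : 0 ≤ e / m := div_nonneg he (le_of_lt hmR)
      simpa using add_le_add this he'
    linarith
  · intro f
    have hv : -(y f) ≤ v f := by
      rw [hvdef]
      have : -(y f) ≤ Mx f := le_max_left _ _
      have he' : 0 ≤ e / m := div_nonneg he (le_of_lt hmR)
      simpa using add_le_add this he'
    linarith

end CosmoAux

namespace CosmoAux

lemma mem_of_uv (m : ℕ) (t : ℝ) (ht : 0 < t) (x : (Fin 2 ⊕ Fin m) → ℝ)
    (u v : Fin m → ℝ) (hu : ∑ f, u f = x (Sum.inl 0)) (hv : ∑ f, v f = x (Sum.inl 1))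
    (huv : ∀ f, 0 ≤ u f + v f) (huy : ∀ f, 0 ≤ u f + x (Sum.inr f))
    (hvy : ∀ f, 0 ≤ v f + x (Sum.inr f))
    (hsum : x (Sum.inl 0) + x (Sum.inl 1) + ∑ f, x (Sum.inr f) = t) :
    x ∈ t • Pm m := by
  classical
  set y := fun f => x (Sum.inr f) with hydef
  set w : Fin m × Fin 3 → ℝ :=
    fun q => ![(u q.1 + v q.1)/2, (u q.1 + y q.1)/2, (v q.1 + y q.1)/2] q.2 with hwdef
  set z : Fin m × Fin 3 → ((Fin 2 ⊕ Fin m) → ℝ) :=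
    fun q => ![V1 m q.1, V2 m q.1, V3 m q.1] q.2 with hzdef
  have hw0 : ∀ q ∈ Finset.univ (α := Fin m × Fin 3), 0 ≤ w q := by
    rintro ⟨f, i⟩ _
    fin_cases i
    · simpa [hwdef] using by linarith [huv f]
    · simpa [hwdef] using by linarith [huy f]
    · simpa [hwdef] using by linarith [hvy f]
  have hsw : ∑ q, w q = t := by
    rw [Fintype.sum_prod_type]
    have : ∀ f : Fin m, ∑ i : Fin 3, w (f, i) = u f + v f + y f := by
      intro f
      rw [Fin.sum_univ_three]
      simp [hwdef]
      ring
    rw [Finset.sum_congr rfl fun f _ => this f]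
    simp only [Finset.sum_add_distrib]
    rw [hu, hv]
    exact hsum
  have hz : ∀ q ∈ Finset.univ (α := Fin m × Fin 3),
      z q ∈ cosmoVertices (fun _ : Fin m => s((0 : Fin 2), (1 : Fin 2))) := by
    rintro ⟨f, i⟩ _
    fin_cases i
    · exact ⟨f, 0, 1, rfl, Or.inl (by simp [hzdef, V1])⟩
    · exact ⟨f, 0, 1, rfl, Or.inr (Or.inl (by simp [hzdef, V2]))⟩
    · exact ⟨f, 0, 1, rfl, Or.inr (Or.inr (by simp [hzdef, V3]))⟩
  have hkey : ∑ q, w q • z q = x := by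
    funext k
    rw [Finset.sum_apply]
    simp only [Pi.smul_apply, smul_eq_mul]
    rw [Fintype.sum_prod_type]
    have hterm : ∀ f : Fin m, ∑ i : Fin 3, w (f, i) * z (f, i) k
        = (u f + v f)/2 * V1 m f k + (u f + y f)/2 * V2 m f k
          + (v f + y f)/2 * V3 m f k := by
      intro f
      rw [Fin.sum_univ_three]
      simp [hwdef, hzdef]
    rw [Finset.sum_congr rfl fun f _ => hterm f]
    rcases k with i | g
    · fin_cases i
      · beta_reduce
        simp only [Fin.zero_eta, Fin.mk_one]
        have : ∀ f : Fin m, (u f + v f)/2 * V1 m f (Sum.inl 0)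
            + (u f + y f)/2 * V2 m f (Sum.inl 0) + (v f + y f)/2 * V3 m f (Sum.inl 0)
            = u f := by
          intro f
          rw [V1_inl0, V2_inl0, V3_inl0]; ring
        rw [Finset.sum_congr rfl fun f _ => this f, hu]
      · beta_reduce
        simp only [Fin.zero_eta, Fin.mk_one]
        have : ∀ f : Fin m, (u f + v f)/2 * V1 m f (Sum.inl 1)
            + (u f + y f)/2 * V2 m f (Sum.inl 1) + (v f + y f)/2 * V3 m f (Sum.inl 1)
            = v f := by
          intro f
          rw [V1_inl1, V2_inl1, V3_inl1]; ring
        rw [Finset.sum_congr rfl fun f _ => this f, hv]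
    · have : ∀ f : Fin m, (u f + v f)/2 * V1 m f (Sum.inr g)
          + (u f + y f)/2 * V2 m f (Sum.inr g) + (v f + y f)/2 * V3 m f (Sum.inr g)
          = if g = f then y f else 0 := by
        intro f
        rw [V1_inr, V2_inr, V3_inr]
        split_ifs with h
        · ring
        · ring
      rw [Finset.sum_congr rfl fun f _ => this f]
      rw [Finset.sum_ite_eq Finset.univ g y]
      simp [hydef]
  have hmem := Finset.centerMass_mem_convexHull (t := Finset.univ) hw0
    (by rw [hsw]; exact ht) hz
  rw [Set.mem_smul_set]
  refine ⟨Finset.univ.centerMass w z, hmem, ?_⟩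
  rw [Finset.centerMass, hsw, hkey]
  rw [smul_smul]
  rw [mul_inv_cancel₀ (ne_of_gt ht), one_smul]

end CosmoAux

namespace CosmoAux

lemma mem_dilate_iff (m t : ℕ) (hm : 0 < m) (ht : 0 < t) (x : (Fin 2 ⊕ Fin m) → ℤ) :
    ((fun k => (x k : ℝ)) ∈ (t : ℝ) • Pm m) ↔
      (x (Sum.inl 0) + x (Sum.inl 1) + ∑ f, x (Sum.inr f) = (t:ℤ) ∧
       0 ≤ x (Sum.inl 0) + ∑ f, x (Sum.inr f) ∧
       0 ≤ x (Sum.inl 1) + ∑ f, x (Sum.inr f) ∧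
       ∑ f, |x (Sum.inr f)| ≤ (t:ℤ)) := by
  have htR : (0:ℝ) < t := by exact_mod_cast ht
  constructor
  · intro h
    obtain ⟨p, hp, hpx⟩ := Set.mem_smul_set.1 h
    have hx : ∀ k, (x k : ℝ) = t * p k := by
      intro k
      rw [← congrFun hpx k]
      simp
    have e1 : x (Sum.inl 0) + x (Sum.inl 1) + ∑ f, x (Sum.inr f) = (t:ℤ) := by
      have hs := hull_sum_eq hp
      rw [Fintype.sum_sum_type, Fin.sum_univ_two] at hs
      have : (x (Sum.inl 0) : ℝ) + x (Sum.inl 1) + ∑ f, (x (Sum.inr f) : ℝ) = t := by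
        rw [hx (Sum.inl 0), hx (Sum.inl 1)]
        rw [Finset.sum_congr rfl fun f _ => hx (Sum.inr f), ← Finset.mul_sum]
        rw [← mul_add, ← mul_add, hs, mul_one]
      exact_mod_cast (by push_cast; exact this :
        ((x (Sum.inl 0) + x (Sum.inl 1) + ∑ f, x (Sum.inr f) : ℤ) : ℝ) = (t:ℝ))
    have e2 : 0 ≤ x (Sum.inl 0) + ∑ f, x (Sum.inr f) := by
      have hs := hull_x0 hp
      have : (0:ℝ) ≤ (x (Sum.inl 0) : ℝ) + ∑ f, (x (Sum.inr f) : ℝ) := by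
        rw [hx (Sum.inl 0), Finset.sum_congr rfl fun f _ => hx (Sum.inr f),
          ← Finset.mul_sum, ← mul_add]
        positivity
      exact_mod_cast (by push_cast; exact this :
        (0:ℝ) ≤ ((x (Sum.inl 0) + ∑ f, x (Sum.inr f) : ℤ) : ℝ))
    have e3 : 0 ≤ x (Sum.inl 1) + ∑ f, x (Sum.inr f) := by
      have hs := hull_x1 hp
      have : (0:ℝ) ≤ (x (Sum.inl 1) : ℝ) + ∑ f, (x (Sum.inr f) : ℝ) := by
        rw [hx (Sum.inl 1), Finset.sum_congr rfl fun f _ => hx (Sum.inr f),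
          ← Finset.mul_sum, ← mul_add]
        positivity
      exact_mod_cast (by push_cast; exact this :
        (0:ℝ) ≤ ((x (Sum.inl 1) + ∑ f, x (Sum.inr f) : ℤ) : ℝ))
    have e4 : ∑ f, |x (Sum.inr f)| ≤ (t:ℤ) := by
      set ε : Fin m → ℝ := fun f => if 0 ≤ x (Sum.inr f) then 1 else -1 with hε
      have heps := hull_eps hp ε (by
        intro f; rw [hε]; beta_reduce; split_ifs
        · exact Or.inl rfl
        · exact Or.inr rfl)
      have hterm : ∀ f, ε f * (x (Sum.inr f) : ℝ) = |(x (Sum.inr f) : ℝ)| := by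
        intro f
        rw [hε]
        beta_reduce
        split_ifs with h
        · rw [one_mul, abs_of_nonneg (by exact_mod_cast h)]
        · rw [neg_one_mul, abs_of_neg (by exact_mod_cast (not_le.1 h))]
      have : ∑ f, |(x (Sum.inr f) : ℝ)| ≤ t := by
        calc ∑ f, |(x (Sum.inr f) : ℝ)| = ∑ f, ε f * (x (Sum.inr f) : ℝ) := by
              rw [Finset.sum_congr rfl fun f _ => (hterm f).symm]
          _ = t * ∑ f, ε f * p (Sum.inr f) := by
              rw [Finset.mul_sum]
              refine Finset.sum_congr rfl fun f _ => ?_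
              rw [hx (Sum.inr f)]; ring
          _ ≤ t * 1 := by
              exact mul_le_mul_of_nonneg_left heps (le_of_lt htR)
          _ = t := mul_one _
      exact_mod_cast (by push_cast; exact this :
        ((∑ f, |x (Sum.inr f)| : ℤ) : ℝ) ≤ (t:ℝ))
    exact ⟨e1, e2, e3, e4⟩
  · rintro ⟨e1, e2, e3, e4⟩
    have hsum : (x (Sum.inl 0) : ℝ) + (x (Sum.inl 1) : ℝ) + ∑ f, (x (Sum.inr f) : ℝ)
        = (t:ℝ) := by exact_mod_cast e1
    have h1 : (0:ℝ) ≤ (x (Sum.inl 0) : ℝ) + ∑ f, (x (Sum.inr f) : ℝ) := by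
      exact_mod_cast e2
    have h2 : (0:ℝ) ≤ (x (Sum.inl 1) : ℝ) + ∑ f, (x (Sum.inr f) : ℝ) := by
      exact_mod_cast e3
    have hA : ∑ f, |(x (Sum.inr f) : ℝ)| ≤ (t:ℝ) := by
      have : ((∑ f, |x (Sum.inr f)| : ℤ) : ℝ) ≤ (t:ℝ) := by exact_mod_cast e4
      push_cast at this
      exact this
    obtain ⟨u, v, hu, hv, huv, huy, hvy⟩ := construct_uv m hm (t:ℝ)
      ((x (Sum.inl 0) : ℝ)) ((x (Sum.inl 1) : ℝ)) (fun f => (x (Sum.inr f) : ℝ))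
      hsum h1 h2 hA
    exact mem_of_uv m (t:ℝ) htR (fun k => (x k : ℝ)) u v hu hv huv huy hvy hsum

end CosmoAux


open CosmoAux in
noncomputable def ptSet (m t : ℕ) : Finset ((Fin 2 ⊕ Fin m) → ℤ) :=
  (Finset.Icc (fun _ => -(t:ℤ)) (fun _ => (t:ℤ))).filter
    (fun x => x (Sum.inl 0) + x (Sum.inl 1) + ∑ f, x (Sum.inr f) = (t:ℤ) ∧
      0 ≤ x (Sum.inl 0) + ∑ f, x (Sum.inr f) ∧
      0 ≤ x (Sum.inl 1) + ∑ f, x (Sum.inr f) ∧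
      ∑ f, |x (Sum.inr f)| ≤ (t:ℤ))

lemma sum_le_sum_abs {m : ℕ} (y : Fin m → ℤ) :
    -(∑ f, |y f|) ≤ ∑ f, y f ∧ ∑ f, y f ≤ ∑ f, |y f| := by
  constructor
  · rw [← Finset.sum_neg_distrib]
    exact Finset.sum_le_sum fun f _ => neg_abs_le (y f)
  · exact Finset.sum_le_sum fun f _ => le_abs_self (y f)

lemma mem_ptSet {m t : ℕ} {x : (Fin 2 ⊕ Fin m) → ℤ} :
    x ∈ ptSet m t ↔
      (x (Sum.inl 0) + x (Sum.inl 1) + ∑ f, x (Sum.inr f) = (t:ℤ) ∧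
       0 ≤ x (Sum.inl 0) + ∑ f, x (Sum.inr f) ∧
       0 ≤ x (Sum.inl 1) + ∑ f, x (Sum.inr f) ∧
       ∑ f, |x (Sum.inr f)| ≤ (t:ℤ)) := by
  constructor
  · intro h; exact (Finset.mem_filter.1 h).2
  · rintro ⟨e1, e2, e3, e4⟩
    have hY := sum_le_sum_abs (fun f => x (Sum.inr f))
    refine Finset.mem_filter.2 ⟨Finset.mem_Icc.2 ⟨fun k => ?_, fun k => ?_⟩, e1, e2, e3, e4⟩
    · show -(t:ℤ) ≤ x k
      rcases k with i | g
      · fin_cases i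
        · show -(t:ℤ) ≤ x (Sum.inl 0); omega
        · show -(t:ℤ) ≤ x (Sum.inl 1); omega
      · have := Finset.single_le_sum (f := fun f => |x (Sum.inr f)|)
          (fun i _ => abs_nonneg _) (Finset.mem_univ g)
        show -(t:ℤ) ≤ x (Sum.inr g)
        have h2 := abs_le.1 (le_trans this e4)
        omega
    · show x k ≤ (t:ℤ)
      rcases k with i | g
      · fin_cases i
        · show x (Sum.inl 0) ≤ (t:ℤ); omega
        · show x (Sum.inl 1) ≤ (t:ℤ); omega
      · have := Finset.single_le_sum (f := fun f => |x (Sum.inr f)|)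
          (fun i _ => abs_nonneg _) (Finset.mem_univ g)
        show x (Sum.inr g) ≤ (t:ℤ)
        have h2 := abs_le.1 (le_trans this e4)
        omega

lemma fiber_card {m t : ℕ} {y : Fin m → ℤ} (hy : y ∈ ballSet m t) :
    ((ptSet m t).filter (fun x => (fun g => x (Sum.inr g)) = y)).card
      = ((t:ℤ) + 1 + ∑ g, y g).toNat := by
  have hIcc : ((t:ℤ) + 1 + ∑ g, y g).toNat = (Finset.Icc (-(∑ g, y g)) (t:ℤ)).card := by
    rw [Int.card_Icc]; congr 1; ring
  rw [hIcc]
  refine Finset.card_bij' (fun x _ => x (Sum.inl 0))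
    (fun a _ => Sum.elim ![a, (t:ℤ) - a - ∑ g, y g] y) ?_ ?_ ?_ ?_
  · intro x hx
    obtain ⟨hx1, hproj⟩ := Finset.mem_filter.1 hx
    obtain ⟨e1, e2, e3, e4⟩ := mem_ptSet.1 hx1
    have hpr : ∀ g, x (Sum.inr g) = y g := fun g => congrFun hproj g
    have hs : ∑ f, x (Sum.inr f) = ∑ g, y g := Finset.sum_congr rfl fun g _ => hpr g
    rw [hs] at e1 e2 e3
    exact Finset.mem_Icc.2 ⟨by linarith, by linarith⟩
  · intro a ha
    obtain ⟨ha1, ha2⟩ := Finset.mem_Icc.1 ha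
    have hyb := mem_ballSet.1 hy
    refine Finset.mem_filter.2 ⟨mem_ptSet.2 ⟨?_, ?_, ?_, ?_⟩, ?_⟩
    · show (Sum.elim ![a, (t:ℤ) - a - (∑ g, y g)] y) (Sum.inl 0)
        + (Sum.elim ![a, (t:ℤ) - a - (∑ g, y g)] y) (Sum.inl 1)
        + ∑ f, (Sum.elim ![a, (t:ℤ) - a - (∑ g, y g)] y) (Sum.inr f) = (t:ℤ)
      simp
      ring
    · show (0:ℤ) ≤ (Sum.elim ![a, (t:ℤ) - a - (∑ g, y g)] y) (Sum.inl 0)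
        + ∑ f, (Sum.elim ![a, (t:ℤ) - a - (∑ g, y g)] y) (Sum.inr f)
      simp
      linarith
    · show (0:ℤ) ≤ (Sum.elim ![a, (t:ℤ) - a - (∑ g, y g)] y) (Sum.inl 1)
        + ∑ f, (Sum.elim ![a, (t:ℤ) - a - (∑ g, y g)] y) (Sum.inr f)
      simp
      linarith
    · simpa using hyb
    · funext g; rfl
  · intro x hx
    obtain ⟨hx1, hproj⟩ := Finset.mem_filter.1 hx
    obtain ⟨e1, e2, e3, e4⟩ := mem_ptSet.1 hx1
    have hpr : ∀ g, x (Sum.inr g) = y g := fun g => congrFun hproj g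
    have hs : ∑ f, x (Sum.inr f) = ∑ g, y g := Finset.sum_congr rfl fun g _ => hpr g
    funext k
    rcases k with i | g
    · fin_cases i
      · rfl
      · show (t:ℤ) - x (Sum.inl 0) - (∑ g, y g) = x (Sum.inl 1)
        rw [← hs]
        linarith
    · exact (hpr g).symm
  · intro a _
    rfl

lemma sum_ballSet_zero (m t : ℕ) : ∑ y ∈ ballSet m t, (∑ g, y g) = 0 := by
  apply Finset.sum_involution (fun y _ => -y)
  · intro y _
    rw [← Finset.sum_add_distrib]
    simp
  · intro y _ hne
    intro heq
    apply hne
    have : ∀ g, -y g = y g := fun g => congrFun heq g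
    have hz : ∀ g, y g = 0 := fun g => by have := this g; omega
    rw [Finset.sum_congr rfl fun g _ => hz g]
    simp
  · intro y _
    simp
  · intro y hy
    rw [mem_ballSet] at hy ⊢
    simpa using hy

lemma ptSet_card (m t : ℕ) :
    ((ptSet m t).card : ℤ) = ((t:ℤ) + 1) * Nb m t := by
  classical
  have hfib := Finset.card_eq_sum_card_fiberwise
    (f := fun x : (Fin 2 ⊕ Fin m) → ℤ => fun g => x (Sum.inr g))
    (s := ptSet m t) (t := ballSet m t)
    (fun x hx => mem_ballSet.2 (mem_ptSet.1 hx).2.2.2)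
  rw [hfib]
  push_cast
  have step : ∀ y ∈ ballSet m t,
      ((Finset.filter (fun a => (fun x g => x (Sum.inr g)) a = y) (ptSet m t)).card : ℤ)
        = ((t:ℤ) + 1) + ∑ g, y g := by
    intro y hy
    have h1 : (Finset.filter (fun a => (fun x g => x (Sum.inr g)) a = y) (ptSet m t)).card
        = ((t:ℤ) + 1 + ∑ g, y g).toNat := fiber_card hy
    rw [h1]
    have hyb := mem_ballSet.1 hy
    have hY := sum_le_sum_abs y
    rw [Int.toNat_of_nonneg (by linarith [hY.1])]
  rw [Finset.sum_congr rfl step, Finset.sum_add_distrib, Finset.sum_const, sum_ballSet_zero]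
  simp [Nb]
  ring


lemma coe_nat_poly_ps (n : ℕ) : ((n : Polynomial ℚ) : PowerSeries ℚ) = (n : PowerSeries ℚ) := by
  rw [← Polynomial.C_eq_natCast, Polynomial.coe_C, map_natCast]

open CosmoAux in
lemma count_lattice (m t : ℕ) (hm : 0 < m) (ht : 0 < t) :
    latticePointCount (cosmoPolytope (fun _ : Fin m => s((0 : Fin 2), (1 : Fin 2)))) t
      = (t + 1) * Nb m t := by
  have hset : { x : (Fin 2 ⊕ Fin m) → ℤ |
      (fun k => (x k : ℝ)) ∈ (t : ℝ) • cosmoPolytope (fun _ : Fin m => s((0 : Fin 2), (1 : Fin 2))) }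
      = ↑(ptSet m t) := by
    ext x
    rw [Set.mem_setOf_eq, mem_dilate_iff m t hm ht x, Finset.mem_coe, mem_ptSet]
  rw [latticePointCount, hset, Set.ncard_coe_finset]
  have := ptSet_card m t
  exact_mod_cast this

/-- Let `m ≥ 1` and let `I_m` be the graph on two vertices with `m` parallel
edges between them.  Then `h*(C_{I_m}; z) = (1+z)^m + 2mz(1+z)^{m−1}`. -/
theorem hstar_multiedge (m : ℕ) (hm : 0 < m) :
    IsHStarPoly (cosmoPolytope (fun _ : Fin m => s((0 : Fin 2), (1 : Fin 2))))
      (Fintype.card (Fin 2) + Fintype.card (Fin m) - 1)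
      ((1 + Polynomial.X) ^ m +
        2 * (m : Polynomial ℚ) * Polynomial.X * (1 + Polynomial.X) ^ (m - 1)) := by
  unfold IsHStarPoly
  have hd : (Fintype.card (Fin 2) + Fintype.card (Fin m) - 1) + 1 = m + 2 := by
    simp [Fintype.card_fin]
    omega
  rw [hd]
  have hehr : ehrhartSeries (cosmoPolytope (fun _ : Fin m => s((0 : Fin 2), (1 : Fin 2)))) = Gs m := by
    apply PowerSeries.ext
    intro n
    rw [ehrhartSeries, Gs, PowerSeries.coeff_mk, PowerSeries.coeff_mk]
    rcases n with _ | k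
    · simp [Nb_zero_right]
    · rw [if_neg (Nat.succ_ne_zero k)]
      rw [count_lattice m (k+1) hm (Nat.succ_pos k)]
      push_cast
      ring
  rw [hehr]
  have hcoe : (((1 + Polynomial.X) ^ m +
      2 * (m : Polynomial ℚ) * Polynomial.X * (1 + Polynomial.X) ^ (m - 1) : Polynomial ℚ) :
        PowerSeries ℚ)
      = (1 + PowerSeries.X) ^ m
        + 2 * (m : PowerSeries ℚ) * PowerSeries.X * (1 + PowerSeries.X) ^ (m - 1) := by
    push_cast
    norm_cast
    rw [coe_nat_poly_ps]
  rw [hcoe]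
  exact Gs_mul_pow m
end
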